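/- arXiv:2410.10211 — 4 statements merged into one kernel-verified Lean document; each statement's English description precedes it below -/
import Mathlib

section
/- Suppose the measure-preserving dynamical system ([0,1]^d, T, μ) satisfies Conditions I–V. Let {r_n} be a sequence of vectors r_n = (r_{n,1},…,r_{n,d}) ∈ [0,∞)^d. If ∑_{n=1}^∞ r_{n,1}⋯r_{n,d} < ∞, then μ(R({r_n})) = 0, where R({r_n}) = {x ∈ [0,1]^d : Tⁿx ∈ R(x, r_n) for infinitely many n ∈ ℕ}. -/
open MeasureTheory Filter Metric Set
open scoped ENNReal NNReal Topology Classical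

noncomputable section

/-- The unit cube `[0,1]^d` with the maximum norm. -/
def unitCube (d : ℕ) : Set (Fin d → ℝ) := Set.Icc 0 1

instance (d : ℕ) : Nonempty (unitCube d) :=
  ⟨⟨0, Set.mem_Icc.mpr ⟨le_refl _, fun _ => zero_le_one⟩⟩⟩

/-- The hyperrectangle `R(x,r) = ∏ [xᵢ - rᵢ, xᵢ + rᵢ]`. -/
def rect {d : ℕ} (x r : Fin d → ℝ) : Set (Fin d → ℝ) := Set.Icc (x - r) (x + r)

/-- The θ-Hölder norm of `f` on the unit cube:
`max |f| + sup |f x - f y| / |x - y|^θ`. -/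
def holderNorm (d : ℕ) (θ : ℝ) (f : (Fin d → ℝ) → ℝ) : ℝ :=
  (⨆ x : unitCube d, |f x.1|) +
    ⨆ p : unitCube d × unitCube d,
      if p.1.1 = p.2.1 then 0 else |f p.1.1 - f p.2.1| / ‖p.1.1 - p.2.1‖ ^ θ

/-- `f` is θ-Hölder continuous on the unit cube. -/
def IsHolderOnCube (d : ℕ) (θ : ℝ) (f : (Fin d → ℝ) → ℝ) : Prop :=
  ∃ H : ℝ, ∀ x ∈ unitCube d, ∀ y ∈ unitCube d, |f x - f y| ≤ H * ‖x - y‖ ^ θ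

/-- Condition I: exponential decay of correlations for θ-Hölder observables against
`L¹(μ)` observables. -/
def CondI {d : ℕ} (T : (Fin d → ℝ) → (Fin d → ℝ)) (μ : Measure (Fin d → ℝ))
    (θ τ C : ℝ) : Prop :=
  0 < θ ∧ θ ≤ 1 ∧ 0 < τ ∧ 0 < C ∧
    ∀ f g : (Fin d → ℝ) → ℝ, Measurable f → IsHolderOnCube d θ f → Integrable g μ →
      ∀ n : ℕ,
        |(∫ x, f x * g (T^[n] x) ∂μ) - (∫ x, f x ∂μ) * ∫ x, g x ∂μ| ≤
          C * Real.exp (-τ * n) * holderNorm d θ f * ∫ x, |g x| ∂μ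

/-- Condition II: `μ` is absolutely continuous w.r.t. Lebesgue measure with density
`h ∈ L^q(λ^d)`, `q > 1`. -/
def CondII {d : ℕ} (μ : Measure (Fin d → ℝ)) (h : (Fin d → ℝ) → ℝ) (q : ℝ) : Prop :=
  1 < q ∧ (∀ x, 0 ≤ h x) ∧
    μ = volume.withDensity (fun x => ENNReal.ofReal (h x)) ∧
    MemLp h (ENNReal.ofReal q) volume

/-- The `L^q(λ^d)`-norm `|h|_q = (∫ |h|^q dλ^d)^{1/q}`. -/
def lqNorm {d : ℕ} (h : (Fin d → ℝ) → ℝ) (q : ℝ) : ℝ :=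
  (∫ x, |h x| ^ q) ^ (1 / q)

/-- Condition III: `{U i}` is a countable family of pairwise disjoint open subsets of the
unit cube whose closures cover it, and `|Tx - Ty| ≥ L|x - y|` on the closure of each `U i`. -/
def CondIII {d : ℕ} {ι : Type*} (T : (Fin d → ℝ) → (Fin d → ℝ))
    (U : ι → Set (Fin d → ℝ)) (L : ℝ) : Prop :=
  0 < L ∧ (∀ i, IsOpen (U i) ∧ U i ⊆ unitCube d) ∧
    (Pairwise fun i j => Disjoint (U i) (U j)) ∧
    (⋃ i, closure (U i)) = unitCube d ∧
    ∀ i, ∀ x ∈ closure (U i), ∀ y ∈ closure (U i), L * ‖x - y‖ ≤ ‖T x - T y‖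

/-- Condition IV: regularity of the boundaries of the `U i`:
`λ^d((∂U_i)_ε) < K₁ ε^α` for all `0 < ε < ε₀`. -/
def CondIV {d : ℕ} {ι : Type*} (U : ι → Set (Fin d → ℝ)) (α ε₀ K₁ : ℝ) : Prop :=
  0 < α ∧ α ≤ d ∧ 0 < ε₀ ∧ 0 < K₁ ∧
    ∀ i, ∀ ε : ℝ, 0 < ε → ε < ε₀ →
      volume (Metric.thickening ε (frontier (U i))) < ENNReal.ofReal (K₁ * ε ^ α)

/-- Condition V: all but `≤ K₂ r^{-β₁}` of the `U i` are contained in the `r`-neighbourhood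
of `𝒜`, which has Lebesgue measure `≤ K₂ r^{β₂}`. -/
def CondV {d : ℕ} {ι : Type*} (U : ι → Set (Fin d → ℝ)) (A : Set (Fin d → ℝ))
    (β₁ β₂ K₂ : ℝ) : Prop :=
  A ⊆ unitCube d ∧ 0 < β₁ ∧ 0 < β₂ ∧ 0 < K₂ ∧
    ∀ r : ℝ, 0 < r → r < 1 →
      ({i : ι | ¬ U i ⊆ ⋃ x ∈ A, Metric.ball x r}.Finite ∧
        ((Set.ncard {i : ι | ¬ U i ⊆ ⋃ x ∈ A, Metric.ball x r} : ℝ) ≤ K₂ * r ^ (-β₁))) ∧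
      volume (⋃ x ∈ A, Metric.ball x r) ≤ ENNReal.ofReal (K₂ * r ^ β₂)

/-- The `n`-cylinder `U_{w 0} ∩ T⁻¹U_{w 1} ∩ ⋯ ∩ T^{-(n-1)}U_{w (n-1)}`. -/
def cylinder {d : ℕ} {ι : Type*} (T : (Fin d → ℝ) → (Fin d → ℝ))
    (U : ι → Set (Fin d → ℝ)) (n : ℕ) (w : Fin n → ι) : Set (Fin d → ℝ) :=
  ⋂ j : Fin n, T^[(j : ℕ)] ⁻¹' U (w j)

end

section AuxStmt1

open scoped ENNReal

private lemma min_one_le_rpow {t θ : ℝ} (ht : 0 ≤ t) (hθ : 0 < θ) (hθ1 : θ ≤ 1) :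
    min 1 t ≤ t ^ θ := by
  rcases le_or_gt 1 t with h | h
  · calc min 1 t ≤ 1 := min_le_left _ _
    _ = t ^ (0:ℝ) := (Real.rpow_zero t).symm
    _ ≤ t ^ θ := Real.rpow_le_rpow_of_exponent_le h hθ.le
  · rcases eq_or_lt_of_le ht with h0 | h0
    · rw [← h0, Real.zero_rpow hθ.ne']
      simp
    · calc min 1 t ≤ t := min_le_right _ _
      _ = t ^ (1:ℝ) := (Real.rpow_one t).symm
      _ ≤ t ^ θ := Real.rpow_le_rpow_of_exponent_ge h0 h.le hθ1

private noncomputable def bmp {d : ℕ} (s : ℝ) (Q : Set (Fin d → ℝ)) : (Fin d → ℝ) → ℝ :=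
  fun x => max 0 (1 - Metric.infDist x Q / s)

private lemma bmp_nonneg {d : ℕ} {s : ℝ} {Q : Set (Fin d → ℝ)} (x : Fin d → ℝ) :
    0 ≤ bmp s Q x := le_max_left _ _

private lemma bmp_le_one {d : ℕ} {s : ℝ} (hs : 0 < s) {Q : Set (Fin d → ℝ)} (x : Fin d → ℝ) :
    bmp s Q x ≤ 1 := by
  apply max_le (by norm_num)
  have h1 : 0 ≤ Metric.infDist x Q := Metric.infDist_nonneg
  have : 0 ≤ Metric.infDist x Q / s := div_nonneg h1 hs.le
  linarith

private lemma bmp_continuous {d : ℕ} (s : ℝ) (Q : Set (Fin d → ℝ)) :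
    Continuous (bmp s Q) :=
  continuous_const.max (continuous_const.sub ((Metric.continuous_infDist_pt Q).div_const s))

private lemma bmp_lip {d : ℕ} {s : ℝ} (hs : 0 < s) (Q : Set (Fin d → ℝ)) (x y : Fin d → ℝ) :
    |bmp s Q x - bmp s Q y| ≤ dist x y / s := by
  have h1 : |bmp s Q x - bmp s Q y| ≤ |(1 - Metric.infDist x Q / s) - (1 - Metric.infDist y Q / s)| := by
    have := abs_max_sub_max_le_abs (1 - Metric.infDist x Q / s) (1 - Metric.infDist y Q / s) 0
    simpa [bmp, max_comm] using this
  have h2 : |(1 - Metric.infDist x Q / s) - (1 - Metric.infDist y Q / s)|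
      = |Metric.infDist x Q - Metric.infDist y Q| / s := by
    have he : (1 - Metric.infDist x Q / s) - (1 - Metric.infDist y Q / s)
        = (Metric.infDist y Q - Metric.infDist x Q) / s := by ring
    rw [he, abs_div, abs_of_pos hs, abs_sub_comm]
  have h3 : |Metric.infDist x Q - Metric.infDist y Q| ≤ dist x y := by
    have := (Metric.lipschitz_infDist_pt Q).dist_le_mul x y
    rw [Real.dist_eq] at this
    simpa using this
  rw [h2] at h1
  exact h1.trans (by gcongr)

private lemma bmp_holder {d : ℕ} {θ s : ℝ} (hθ : 0 < θ) (hθ1 : θ ≤ 1) (hs : 0 < s)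
    (Q : Set (Fin d → ℝ)) (x y : Fin d → ℝ) :
    |bmp s Q x - bmp s Q y| ≤ s ^ (-θ) * ‖x - y‖ ^ θ := by
  have hb1 : |bmp s Q x - bmp s Q y| ≤ 1 := by
    have := bmp_nonneg (s := s) (Q := Q) x
    have := bmp_nonneg (s := s) (Q := Q) y
    have := bmp_le_one hs (Q := Q) x
    have := bmp_le_one hs (Q := Q) y
    rw [abs_sub_le_iff]; constructor <;> linarith
  have hmin : |bmp s Q x - bmp s Q y| ≤ min 1 (dist x y / s) :=
    le_min hb1 (bmp_lip hs Q x y)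
  have h2 : min 1 (dist x y / s) ≤ (dist x y / s) ^ θ :=
    min_one_le_rpow (div_nonneg dist_nonneg hs.le) hθ hθ1
  have h3 : (dist x y / s) ^ θ = s ^ (-θ) * dist x y ^ θ := by
    rw [Real.div_rpow dist_nonneg hs.le, Real.rpow_neg hs.le]
    ring
  calc |bmp s Q x - bmp s Q y| ≤ (dist x y / s) ^ θ := hmin.trans h2
  _ = s ^ (-θ) * dist x y ^ θ := h3
  _ = s ^ (-θ) * ‖x - y‖ ^ θ := by rw [dist_eq_norm]

private lemma holderNorm_le {d : ℕ} {θ H : ℝ} (hH : 0 ≤ H) (f : (Fin d → ℝ) → ℝ)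
    (hb : ∀ x, |f x| ≤ 1) (hh : ∀ x y, |f x - f y| ≤ H * ‖x - y‖ ^ θ) :
    holderNorm d θ f ≤ 1 + H := by
  unfold holderNorm
  refine add_le_add (ciSup_le fun x => hb x.1) (ciSup_le fun p => ?_)
  by_cases hp : p.1.1 = p.2.1
  · rw [if_pos hp]; exact hH
  · rw [if_neg hp]
    have hn : (0:ℝ) < ‖p.1.1 - p.2.1‖ ^ θ :=
      Real.rpow_pos_of_pos (norm_pos_iff.mpr (sub_ne_zero.mpr hp)) θ
    rw [div_le_iff₀ hn]
    exact hh _ _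

end AuxStmt1
section AuxStmt2
open scoped ENNReal
open MeasureTheory

private lemma doc_rect {d : ℕ} {T : (Fin d → ℝ) → (Fin d → ℝ)} {μ : Measure (Fin d → ℝ)}
    [IsProbabilityMeasure μ] {θ τ C : ℝ} (hI : CondI T μ θ τ C)
    (hT : Measurable T) {s : ℝ} (hs : 0 < s) (hs1 : s ≤ 1)
    (a c e : Fin d → ℝ) (n : ℕ) :
    μ (Set.Icc a (a + fun _ => s) ∩ T^[n] ⁻¹' Set.Icc c e) ≤
      μ (Set.Icc (a - fun _ => s) (a + fun _ => 2 * s)) * μ (Set.Icc c e) +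
        ENNReal.ofReal (C * Real.exp (-τ * n) * (2 * s ^ (-θ))) * μ (Set.Icc c e) := by
  obtain ⟨hθ, hθ1, hτ, hC, hD⟩ := hI
  set Q : Set (Fin d → ℝ) := Set.Icc a (a + fun _ => s) with hQ
  set K : Set (Fin d → ℝ) := Set.Icc (a - fun _ => s) (a + fun _ => 2 * s) with hK
  set R : Set (Fin d → ℝ) := Set.Icc c e with hR
  set f : (Fin d → ℝ) → ℝ := bmp s Q with hf
  set g : (Fin d → ℝ) → ℝ := R.indicator (fun _ => (1:ℝ)) with hg
  have hfm : Measurable f := (bmp_continuous s Q).measurable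
  have hRmeas : MeasurableSet R := measurableSet_Icc
  have hKmeas : MeasurableSet K := measurableSet_Icc
  have hQmeas : MeasurableSet Q := measurableSet_Icc
  have hgm : Measurable g := measurable_const.indicator hRmeas
  have hgnn : ∀ x, 0 ≤ g x := fun x => Set.indicator_nonneg (fun _ _ => zero_le_one) x
  have hgle : ∀ x, g x ≤ 1 := fun x => by
    by_cases hx : x ∈ R <;> simp [hg, hx]
  have hgi : Integrable g μ :=
    (integrable_indicator_iff hRmeas).2 (integrableOn_const (measure_ne_top μ R))
  have hfb : ∀ x, |f x| ≤ 1 := fun x => by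
    rw [abs_of_nonneg (bmp_nonneg x)]; exact bmp_le_one hs x
  have hfi : Integrable f μ :=
    Integrable.mono' (integrable_const 1) hfm.aestronglyMeasurable
      (Filter.Eventually.of_forall fun x => by rw [Real.norm_eq_abs]; exact hfb x)
  have hfgm : Measurable fun x => f x * g (T^[n] x) := hfm.mul (hgm.comp (hT.iterate n))
  have hfgi : Integrable (fun x => f x * g (T^[n] x)) μ :=
    Integrable.mono' (integrable_const 1) hfgm.aestronglyMeasurable
      (Filter.Eventually.of_forall fun x => by
        rw [Real.norm_eq_abs, abs_mul]
        calc |f x| * |g (T^[n] x)| ≤ 1 * 1 :=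
              mul_le_mul (hfb x) (by rw [abs_of_nonneg (hgnn _)]; exact hgle _)
                (abs_nonneg _) zero_le_one
          _ = 1 := one_mul 1)
  have hkey := hD f g hfm ⟨s ^ (-θ), fun x _ y _ => bmp_holder hθ hθ1 hs Q x y⟩ hgi n
  have hIg : ∫ x, g x ∂μ = (μ R).toReal := by
    rw [hg, integral_indicator_const (1:ℝ) hRmeas, smul_eq_mul, mul_one, Measure.real_def]
  have hIag : ∫ x, |g x| ∂μ = (μ R).toReal := by
    calc ∫ x, |g x| ∂μ = ∫ x, g x ∂μ :=
          integral_congr_ae (Filter.Eventually.of_forall fun x => abs_of_nonneg (hgnn x))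
      _ = (μ R).toReal := hIg
  have hsθ : (0:ℝ) < s ^ (-θ) := Real.rpow_pos_of_pos hs _
  have hnorm : holderNorm d θ f ≤ 2 * s ^ (-θ) := by
    have h1 : holderNorm d θ f ≤ 1 + s ^ (-θ) :=
      holderNorm_le hsθ.le f hfb (fun x y => bmp_holder hθ hθ1 hs Q x y)
    have h3 : s ^ θ ≤ 1 := Real.rpow_le_one hs.le hs1 hθ.le
    have h4 : (0:ℝ) < s ^ θ := Real.rpow_pos_of_pos hs _
    have h5 : s ^ (-θ) = (s ^ θ)⁻¹ := Real.rpow_neg hs.le θ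
    have h2 : (1:ℝ) ≤ s ^ (-θ) := by
      rw [h5]
      have : s ^ θ * (s ^ θ)⁻¹ = 1 := mul_inv_cancel₀ h4.ne'
      nlinarith [inv_nonneg.2 h4.le]
    linarith
  have hpre : MeasurableSet (Q ∩ T^[n] ⁻¹' R) := hQmeas.inter ((hT.iterate n) hRmeas)
  have hlow : (μ (Q ∩ T^[n] ⁻¹' R)).toReal ≤ ∫ x, f x * g (T^[n] x) ∂μ := by
    have hi : ∫ x, (Q ∩ T^[n] ⁻¹' R).indicator (fun _ => (1:ℝ)) x ∂μ
        = (μ (Q ∩ T^[n] ⁻¹' R)).toReal := by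
      rw [integral_indicator_const (1:ℝ) hpre, smul_eq_mul, mul_one, Measure.real_def]
    rw [← hi]
    refine integral_mono ((integrable_indicator_iff hpre).2
      (integrableOn_const (measure_ne_top μ _))) hfgi ?_
    intro x
    show (Q ∩ T^[n] ⁻¹' R).indicator (fun _ => (1:ℝ)) x ≤ f x * g (T^[n] x)
    by_cases hx : x ∈ Q ∩ T^[n] ⁻¹' R
    · have hfx : f x = 1 := by
        rw [hf]; unfold bmp
        rw [Metric.infDist_zero_of_mem hx.1]
        norm_num
      have hgx : g (T^[n] x) = 1 := by rw [hg, Set.indicator_of_mem (Set.mem_preimage.1 hx.2)]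
      rw [Set.indicator_of_mem hx, hfx, hgx, mul_one]
    · rw [Set.indicator_of_notMem hx]
      exact mul_nonneg (bmp_nonneg x) (hgnn _)

  have hQne : Q.Nonempty := ⟨a, by
    rw [hQ, Set.mem_Icc]
    refine ⟨le_refl a, fun i => ?_⟩
    simp only [Pi.add_apply]
    linarith⟩
  have hfK : ∀ x, f x ≤ K.indicator (fun _ => (1:ℝ)) x := by
    intro x
    by_cases hx : x ∈ K
    · rw [Set.indicator_of_mem hx]; exact bmp_le_one hs x
    · rw [Set.indicator_of_notMem hx]
      have hdist : ¬ Metric.infDist x Q < s := by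
        intro hlt
        obtain ⟨y, hy, hxy⟩ := (Metric.infDist_lt_iff hQne).1 hlt
        apply hx
        rw [hQ, Set.mem_Icc] at hy
        rw [hK, Set.mem_Icc]
        constructor <;> intro i
        · have h1 : |x i - y i| < s := by
            have h0 := dist_le_pi_dist x y i
            rw [Real.dist_eq] at h0; linarith
          have h2 : a i ≤ y i := hy.1 i
          have h3 := abs_lt.1 h1
          simp only [Pi.sub_apply]
          linarith [h3.1]
        · have h1 : |x i - y i| < s := by
            have h0 := dist_le_pi_dist x y i
            rw [Real.dist_eq] at h0; linarith
          have h2 : y i ≤ a i + s := by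
            have := hy.2 i
            simpa using this
          have h3 := abs_lt.1 h1
          simp only [Pi.add_apply]
          linarith [h3.2]
      push_neg at hdist
      rw [hf]; unfold bmp
      apply max_le (le_refl 0)
      have : 1 ≤ Metric.infDist x Q / s := (one_le_div hs).2 hdist
      linarith
  have hup : ∫ x, f x ∂μ ≤ (μ K).toReal := by
    calc ∫ x, f x ∂μ ≤ ∫ x, K.indicator (fun _ => (1:ℝ)) x ∂μ :=
          integral_mono hfi ((integrable_indicator_iff hKmeas).2
            (integrableOn_const (measure_ne_top μ _))) hfK
      _ = (μ K).toReal := by rw [integral_indicator_const (1:ℝ) hKmeas, smul_eq_mul, mul_one, Measure.real_def]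
  have hCe : 0 ≤ C * Real.exp (-τ * n) := mul_nonneg hC.le (Real.exp_pos _).le
  have hc'nn : 0 ≤ C * Real.exp (-τ * n) * (2 * s ^ (-θ)) :=
    mul_nonneg hCe (mul_nonneg zero_le_two hsθ.le)
  have hchain : (μ (Q ∩ T^[n] ⁻¹' R)).toReal ≤
      (μ K).toReal * (μ R).toReal
        + (C * Real.exp (-τ * n) * (2 * s ^ (-θ))) * (μ R).toReal := by
    have h1 : ∫ x, f x * g (T^[n] x) ∂μ ≤ (∫ x, f x ∂μ) * ∫ x, g x ∂μ +
        C * Real.exp (-τ * n) * holderNorm d θ f * ∫ x, |g x| ∂μ := by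
      have := (abs_le.1 hkey).2
      linarith
    have h2 : C * Real.exp (-τ * n) * holderNorm d θ f * ∫ x, |g x| ∂μ ≤
        (C * Real.exp (-τ * n) * (2 * s ^ (-θ))) * (μ R).toReal := by
      rw [hIag]
      exact mul_le_mul_of_nonneg_right (mul_le_mul_of_nonneg_left hnorm hCe)
        ENNReal.toReal_nonneg
    have h3 : (∫ x, f x ∂μ) * ∫ x, g x ∂μ ≤ (μ K).toReal * (μ R).toReal := by
      rw [hIg]
      exact mul_le_mul_of_nonneg_right hup ENNReal.toReal_nonneg
    linarith
  have hne : μ (Q ∩ T^[n] ⁻¹' R) ≠ ⊤ := measure_ne_top μ _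
  calc μ (Q ∩ T^[n] ⁻¹' R)
      = ENNReal.ofReal ((μ (Q ∩ T^[n] ⁻¹' R)).toReal) := (ENNReal.ofReal_toReal hne).symm
    _ ≤ ENNReal.ofReal ((μ K).toReal * (μ R).toReal
        + (C * Real.exp (-τ * n) * (2 * s ^ (-θ))) * (μ R).toReal) :=
          ENNReal.ofReal_le_ofReal hchain
    _ ≤ μ K * μ R + ENNReal.ofReal (C * Real.exp (-τ * n) * (2 * s ^ (-θ))) * μ R := by
      rw [ENNReal.ofReal_add (mul_nonneg ENNReal.toReal_nonneg ENNReal.toReal_nonneg)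
        (mul_nonneg hc'nn ENNReal.toReal_nonneg)]
      apply add_le_add
      · apply le_of_eq
        rw [ENNReal.ofReal_mul ENNReal.toReal_nonneg,
          ENNReal.ofReal_toReal (measure_ne_top μ K), ENNReal.ofReal_toReal (measure_ne_top μ R)]
      · apply le_of_eq
        rw [ENNReal.ofReal_mul hc'nn, ENNReal.ofReal_toReal (measure_ne_top μ R)]

end AuxStmt2
section AuxStmt3
open scoped ENNReal Classical
open MeasureTheory

private def gpt {d : ℕ} (s : ℝ) (k : Fin d → ℕ) : Fin d → ℝ := fun i => s * k i

private def Qc {d : ℕ} (s : ℝ) (k : Fin d → ℕ) : Set (Fin d → ℝ) :=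
  Set.Icc (gpt s k) (gpt s k + fun _ => s)

private def Kc {d : ℕ} (s : ℝ) (k : Fin d → ℕ) : Set (Fin d → ℝ) :=
  Set.Icc (gpt s k - fun _ => s) (gpt s k + fun _ => 2 * s)

private noncomputable def gridJ (d : ℕ) (s : ℝ) : Finset (Fin d → ℕ) :=
  Fintype.piFinset fun _ => Finset.range (⌈s⁻¹⌉₊ + 1)

private noncomputable def gB {d : ℕ} (A : Set (Fin d → ℝ)) (s : ℝ) : Finset (Fin d → ℕ) :=
  (gridJ d s).filter (fun k => (A ∩ Qc s k).Nonempty)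

private noncomputable def x0 {d : ℕ} (A : Set (Fin d → ℝ)) (s : ℝ) (k : Fin d → ℕ) :
    Fin d → ℝ :=
  if h : (A ∩ Qc s k).Nonempty then h.choose else 0

private lemma x0_mem {d : ℕ} {A : Set (Fin d → ℝ)} {s : ℝ} {k : Fin d → ℕ}
    (h : (A ∩ Qc s k).Nonempty) : x0 A s k ∈ A ∩ Qc s k := by
  rw [x0, dif_pos h]
  exact h.choose_spec

/-- members of the cube `Qc s k` are within `s` of each other, coordinatewise. -/
private lemma Qc_dist {d : ℕ} {s : ℝ} {k : Fin d → ℕ} {x y : Fin d → ℝ}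
    (hx : x ∈ Qc s k) (hy : y ∈ Qc s k) (i : Fin d) : |x i - y i| ≤ s := by
  rw [Qc, Set.mem_Icc] at hx hy
  have h1 := hx.1 i; have h2 := hx.2 i; have h3 := hy.1 i; have h4 := hy.2 i
  simp only [Pi.add_apply] at h2 h4
  rw [abs_le]; constructor <;> [linarith; linarith]

private lemma Kc_dist {d : ℕ} {s : ℝ} {k : Fin d → ℕ} {x y : Fin d → ℝ}
    (hx : x ∈ Kc s k) (hy : y ∈ Kc s k) (i : Fin d) : |x i - y i| ≤ 3 * s := by
  rw [Kc, Set.mem_Icc] at hx hy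
  have h1 := hx.1 i; have h2 := hx.2 i; have h3 := hy.1 i; have h4 := hy.2 i
  simp only [Pi.add_apply, Pi.sub_apply] at h1 h2 h3 h4
  rw [abs_le]; constructor <;> [linarith; linarith]

private lemma Qc_subset_Kc {d : ℕ} {s : ℝ} (hs : 0 ≤ s) (k : Fin d → ℕ) :
    Qc s k ⊆ Kc s k := by
  intro x hx
  rw [Qc, Set.mem_Icc] at hx
  rw [Kc, Set.mem_Icc]
  constructor <;> intro i
  · have := hx.1 i; simp only [Pi.sub_apply]; linarith
  · have := hx.2 i; simp only [Pi.add_apply] at this ⊢; linarith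

/-- the counting lemma: for a fixed `x`, at most `3^d` cubes `Kc s k` contain `x`. -/
private lemma card_K_le {d : ℕ} {s : ℝ} (hs : 0 < s) (x : Fin d → ℝ)
    (G : Finset (Fin d → ℕ)) (hG : ∀ k ∈ G, x ∈ Kc s k) :
    G.card ≤ 4 ^ d := by
  classical
  have hsub : G ⊆ Fintype.piFinset (fun i => Finset.Icc (⌊x i / s + 1⌋₊ - 3) ⌊x i / s + 1⌋₊) := by
    intro k hk
    rw [Fintype.mem_piFinset]
    intro i
    have hx := hG k hk
    rw [Kc, Set.mem_Icc] at hx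
    have h1 : s * k i - s ≤ x i := by
      have := hx.1 i; simpa [gpt] using this
    have h2 : x i ≤ s * k i + 2 * s := by
      have := hx.2 i; simpa [gpt] using this
    have hub : (k i : ℝ) ≤ x i / s + 1 := by
      rw [← sub_le_iff_le_add, le_div_iff₀ hs]
      nlinarith
    have hub' : k i ≤ ⌊x i / s + 1⌋₊ := Nat.le_floor hub
    have h3 : x i / s + 1 ≤ (k i : ℝ) + 3 := by
      rw [← le_sub_iff_add_le, div_le_iff₀ hs]
      nlinarith
    have hlb : ⌊x i / s + 1⌋₊ ≤ k i + 3 := by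
      have h3' : x i / s + 1 ≤ ((k i + 3 : ℕ) : ℝ) := by push_cast; linarith
      have h4 := Nat.floor_mono h3'
      rwa [Nat.floor_natCast] at h4
    rw [Finset.mem_Icc]
    omega
  calc G.card ≤ _ := Finset.card_le_card hsub
    _ = ∏ i : Fin d, (Finset.Icc (⌊x i / s + 1⌋₊ - 3) ⌊x i / s + 1⌋₊).card :=
        Fintype.card_piFinset _
    _ ≤ ∏ _i : Fin d, 4 := Finset.prod_le_prod (fun _ _ => Nat.zero_le _)
        (fun i _ => by rw [Nat.card_Icc]; omega)
    _ = 4 ^ d := by simp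

end AuxStmt3
section AuxStmt4
open scoped ENNReal Classical
open MeasureTheory

private lemma pern {d : ℕ} {T : (Fin d → ℝ) → (Fin d → ℝ)} {μ : Measure (Fin d → ℝ)}
    [IsProbabilityMeasure μ] {θ τ C : ℝ} (hI : CondI T μ θ τ C) (hT : Measurable T)
    (A : Set (Fin d → ℝ)) {s : ℝ} (hs : 0 < s) (hs1 : s ≤ 1)
    (r' : Fin d → ℝ) (n : ℕ) :
    μ (A ∩ unitCube d ∩ {x | T^[n] x ∈ rect x r'}) ≤
      (∑ k ∈ gB A s, μ (Kc s k) * μ (rect (x0 A s k) (fun i => r' i + s))) +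
        ENNReal.ofReal ((3 / s) ^ d * (C * Real.exp (-τ * n) * (2 * s ^ (-θ)))) := by
  have hcov : A ∩ unitCube d ∩ {x | T^[n] x ∈ rect x r'} ⊆
      ⋃ k ∈ gB A s, (Qc s k ∩ T^[n] ⁻¹' (rect (x0 A s k) (fun i => r' i + s))) := by
    rintro x ⟨⟨hxA, hxC⟩, hxR⟩
    rw [unitCube, Set.mem_Icc] at hxC
    set k : Fin d → ℕ := fun i => ⌊x i / s⌋₊ with hk
    have hx0 : ∀ i, (0:ℝ) ≤ x i := fun i => by have := hxC.1 i; simpa using this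
    have hx1 : ∀ i, x i ≤ 1 := fun i => by have := hxC.2 i; simpa using this
    have hxQ : x ∈ Qc s k := by
      rw [Qc, Set.mem_Icc]
      constructor <;> intro i
      · show s * ((⌊x i / s⌋₊ : ℕ) : ℝ) ≤ x i
        have h0 : 0 ≤ x i / s := div_nonneg (hx0 i) hs.le
        have h1 := Nat.floor_le h0
        calc s * ((⌊x i / s⌋₊ : ℕ) : ℝ) ≤ s * (x i / s) :=
              mul_le_mul_of_nonneg_left h1 hs.le
          _ = x i := by field_simp
      · show x i ≤ s * ((⌊x i / s⌋₊ : ℕ) : ℝ) + s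
        have h2 := Nat.lt_floor_add_one (x i / s)
        calc x i = s * (x i / s) := by field_simp
          _ ≤ s * (((⌊x i / s⌋₊ : ℕ) : ℝ) + 1) := by nlinarith
          _ = s * ((⌊x i / s⌋₊ : ℕ) : ℝ) + s := by ring
    have hkJ : k ∈ gridJ d s := by
      rw [gridJ, Fintype.mem_piFinset]
      intro i
      rw [Finset.mem_range]
      have h1 : x i / s ≤ s⁻¹ := by
        rw [← one_div]
        gcongr
        exact hx1 i
      have h2 : k i ≤ ⌈s⁻¹⌉₊ :=
        le_trans (Nat.floor_mono h1) (Nat.floor_le_ceil _)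
      omega
    have hkB : k ∈ gB A s := Finset.mem_filter.2 ⟨hkJ, ⟨x, hxA, hxQ⟩⟩
    refine Set.mem_biUnion hkB ⟨hxQ, ?_⟩
    have hx0mem := x0_mem (⟨x, hxA, hxQ⟩ : (A ∩ Qc s k).Nonempty)
    simp only [Set.mem_preimage, rect, Set.mem_Icc]
    simp only [rect, Set.mem_Icc] at hxR
    have hdd : ∀ i, |x i - x0 A s k i| ≤ s := fun i => Qc_dist hxQ hx0mem.2 i
    constructor <;> intro i
    · have h1 := hxR.1 i
      have h3 := abs_le.1 (hdd i)
      simp only [Pi.sub_apply] at h1 ⊢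
      linarith [h3.1, h3.2]
    · have h1 := hxR.2 i
      have h3 := abs_le.1 (hdd i)
      simp only [Pi.add_apply] at h1 ⊢
      linarith [h3.1, h3.2]
  have hceil : ((⌈s⁻¹⌉₊ + 1 : ℕ) : ℝ) ≤ 3 / s := by
    push_cast
    have h1 := Nat.ceil_lt_add_one (le_of_lt (inv_pos.2 hs))
    have h1s : (1:ℝ) ≤ s⁻¹ := by
      rw [← one_div]
      rw [le_div_iff₀ hs]
      linarith
    have h3 : 3 / s = 3 * s⁻¹ := by rw [div_eq_mul_inv]
    linarith
  have hcnn : (0:ℝ) ≤ C * Real.exp (-τ * n) * (2 * s ^ (-θ)) := by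
    have := Real.rpow_pos_of_pos hs (-θ)
    have hC := hI.2.2.2.1
    positivity
  calc μ (A ∩ unitCube d ∩ {x | T^[n] x ∈ rect x r'})
      ≤ μ (⋃ k ∈ gB A s, (Qc s k ∩ T^[n] ⁻¹' (rect (x0 A s k) (fun i => r' i + s)))) :=
        measure_mono hcov
    _ ≤ ∑ k ∈ gB A s, μ (Qc s k ∩ T^[n] ⁻¹' (rect (x0 A s k) (fun i => r' i + s))) :=
        measure_biUnion_finset_le _ _
    _ ≤ ∑ k ∈ gB A s, (μ (Kc s k) * μ (rect (x0 A s k) (fun i => r' i + s)) +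
          ENNReal.ofReal (C * Real.exp (-τ * n) * (2 * s ^ (-θ))) *
            μ (rect (x0 A s k) (fun i => r' i + s))) := by
        refine Finset.sum_le_sum fun k _ => ?_
        exact doc_rect ⟨hI.1, hI.2.1, hI.2.2.1, hI.2.2.2.1, hI.2.2.2.2⟩ hT hs hs1
          (gpt s k) _ _ n
    _ = (∑ k ∈ gB A s, μ (Kc s k) * μ (rect (x0 A s k) (fun i => r' i + s))) +
          ∑ k ∈ gB A s, ENNReal.ofReal (C * Real.exp (-τ * n) * (2 * s ^ (-θ))) *
            μ (rect (x0 A s k) (fun i => r' i + s)) := Finset.sum_add_distrib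
    _ ≤ (∑ k ∈ gB A s, μ (Kc s k) * μ (rect (x0 A s k) (fun i => r' i + s))) +
          ENNReal.ofReal ((3 / s) ^ d * (C * Real.exp (-τ * n) * (2 * s ^ (-θ)))) := by
        refine add_le_add_right ?_ _
        calc ∑ k ∈ gB A s, ENNReal.ofReal (C * Real.exp (-τ * n) * (2 * s ^ (-θ))) *
              μ (rect (x0 A s k) (fun i => r' i + s))
            ≤ ∑ _k ∈ gB A s, ENNReal.ofReal (C * Real.exp (-τ * n) * (2 * s ^ (-θ))) := by
              refine Finset.sum_le_sum fun k _ => ?_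
              calc ENNReal.ofReal (C * Real.exp (-τ * n) * (2 * s ^ (-θ))) * μ _
                  ≤ ENNReal.ofReal (C * Real.exp (-τ * n) * (2 * s ^ (-θ))) * 1 :=
                    mul_le_mul_right prob_le_one _
                _ = _ := mul_one _
          _ = ((gB A s).card : ℝ≥0∞) * ENNReal.ofReal (C * Real.exp (-τ * n) * (2 * s ^ (-θ))) := by
              rw [Finset.sum_const, nsmul_eq_mul]
          _ ≤ ENNReal.ofReal ((3 / s) ^ d) *
                ENNReal.ofReal (C * Real.exp (-τ * n) * (2 * s ^ (-θ))) := by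
              refine mul_le_mul_left ?_ _
              have hcard : (gB A s).card ≤ (⌈s⁻¹⌉₊ + 1) ^ d := by
                calc (gB A s).card ≤ (gridJ d s).card :=
                      Finset.card_le_card (Finset.filter_subset _ _)
                  _ = ∏ _i : Fin d, (Finset.range (⌈s⁻¹⌉₊ + 1)).card :=
                      Fintype.card_piFinset _
                  _ = (⌈s⁻¹⌉₊ + 1) ^ d := by simp [Finset.card_range]
              calc ((gB A s).card : ℝ≥0∞) ≤ (((⌈s⁻¹⌉₊ + 1) ^ d : ℕ) : ℝ≥0∞) :=
                    Nat.cast_le.2 hcard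
                _ = ENNReal.ofReal ((((⌈s⁻¹⌉₊ + 1) : ℕ) : ℝ) ^ d) := by
                    rw [← ENNReal.ofReal_natCast]
                    push_cast
                    ring_nf
                _ ≤ ENNReal.ofReal ((3 / s) ^ d) :=
                    ENNReal.ofReal_le_ofReal
                      (pow_le_pow_left₀ (by positivity) hceil d)
          _ = ENNReal.ofReal ((3 / s) ^ d * (C * Real.exp (-τ * n) * (2 * s ^ (-θ)))) :=
              (ENNReal.ofReal_mul (by positivity)).symm

end AuxStmt4
section AuxStmt5
open scoped ENNReal Classical
open MeasureTheory

private lemma measurableSet_rect_pairs {d : ℕ} (ρ : Fin d → ℝ) :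
    MeasurableSet {p : (Fin d → ℝ) × (Fin d → ℝ) | p.2 ∈ rect p.1 ρ} := by
  have he : {p : (Fin d → ℝ) × (Fin d → ℝ) | p.2 ∈ rect p.1 ρ} =
      (⋂ i, {p : (Fin d → ℝ) × (Fin d → ℝ) | p.1 i - ρ i ≤ p.2 i}) ∩
      (⋂ i, {p : (Fin d → ℝ) × (Fin d → ℝ) | p.2 i ≤ p.1 i + ρ i}) := by
    ext p
    simp only [rect, Set.mem_Icc, Set.mem_setOf_eq, Set.mem_inter_iff, Set.mem_iInter]
    constructor
    · rintro ⟨h1, h2⟩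
      exact ⟨fun i => by simpa using h1 i, fun i => by simpa using h2 i⟩
    · rintro ⟨h1, h2⟩
      constructor <;> intro i
      · simpa using h1 i
      · simpa using h2 i
  rw [he]
  apply MeasurableSet.inter <;> (refine MeasurableSet.iInter fun i => ?_)
  · exact measurableSet_le (measurable_fst.eval.sub measurable_const) measurable_snd.eval
  · exact measurableSet_le measurable_snd.eval (measurable_fst.eval.add measurable_const)

private lemma measurable_rect_measure {d : ℕ} (μ : Measure (Fin d → ℝ)) [SFinite μ]
    (ρ : Fin d → ℝ) : Measurable fun x => μ (rect x ρ) :=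
  measurable_measure_prodMk_left (measurableSet_rect_pairs ρ)

private lemma lint_rect {d : ℕ} (μ : Measure (Fin d → ℝ)) [IsProbabilityMeasure μ]
    (ρ : Fin d → ℝ) (hρ : ∀ i, 0 ≤ ρ i) :
    ∫⁻ x, μ (rect x ρ) ∂(volume : Measure (Fin d → ℝ))
      = ENNReal.ofReal (∏ i, (2 * ρ i)) := by
  set S := {p : (Fin d → ℝ) × (Fin d → ℝ) | p.2 ∈ rect p.1 ρ} with hSdef
  have hS : MeasurableSet S := measurableSet_rect_pairs ρ
  have h1 : ∀ x : Fin d → ℝ, μ (rect x ρ) = ∫⁻ y, S.indicator (fun _ => (1:ℝ≥0∞)) (x, y) ∂μ := by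
    intro x
    have e1 : ∫⁻ y, S.indicator (fun _ => (1:ℝ≥0∞)) (x, y) ∂μ
        = ∫⁻ y, (rect x ρ).indicator (fun _ => (1:ℝ≥0∞)) y ∂μ := by
      refine lintegral_congr fun y => ?_
      by_cases hy : y ∈ rect x ρ
      · rw [Set.indicator_of_mem hy, Set.indicator_of_mem (show (x,y) ∈ S from hy)]
      · rw [Set.indicator_of_notMem hy, Set.indicator_of_notMem (show (x,y) ∉ S from hy)]
    rw [e1, lintegral_indicator_const (show MeasurableSet (rect x ρ) from measurableSet_Icc)
      (1:ℝ≥0∞), one_mul]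
  calc ∫⁻ x, μ (rect x ρ) ∂(volume : Measure (Fin d → ℝ))
      = ∫⁻ x, ∫⁻ y, S.indicator (fun _ => (1:ℝ≥0∞)) (x, y) ∂μ ∂volume :=
        lintegral_congr fun x => h1 x
    _ = ∫⁻ y, ∫⁻ x, S.indicator (fun _ => (1:ℝ≥0∞)) (x, y) ∂volume ∂μ := by
        exact lintegral_lintegral_swap ((measurable_one.indicator hS).aemeasurable)
    _ = ∫⁻ y, volume (Set.Icc (y - ρ) (y + ρ)) ∂μ := by
        refine lintegral_congr fun y => ?_
        have hptw : (fun x => S.indicator (fun _ => (1:ℝ≥0∞)) (x, y))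
            = (Set.Icc (y - ρ) (y + ρ)).indicator (fun _ => (1:ℝ≥0∞)) := by
          funext x
          have hiff : (x, y) ∈ S ↔ x ∈ Set.Icc (y - ρ) (y + ρ) := by
            simp only [hSdef, Set.mem_setOf_eq, rect, Set.mem_Icc]
            constructor
            · rintro ⟨ha, hb⟩
              constructor <;> intro i
              · have a1 := hb i
                simp only [Pi.sub_apply, Pi.add_apply] at a1 ⊢
                linarith
              · have a1 := ha i
                simp only [Pi.sub_apply, Pi.add_apply] at a1 ⊢
                linarith
            · rintro ⟨ha, hb⟩
              constructor <;> intro i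
              · have a1 := hb i
                simp only [Pi.sub_apply, Pi.add_apply] at a1 ⊢
                linarith
              · have a1 := ha i
                simp only [Pi.sub_apply, Pi.add_apply] at a1 ⊢
                linarith
          by_cases hx : (x, y) ∈ S
          · rw [Set.indicator_of_mem hx, Set.indicator_of_mem (hiff.1 hx)]
          · rw [Set.indicator_of_notMem hx,
              Set.indicator_of_notMem (fun hc => hx (hiff.2 hc))]
        have e2 : ∫⁻ x, S.indicator (fun _ => (1:ℝ≥0∞)) (x, y) ∂volume
            = ∫⁻ x, (Set.Icc (y - ρ) (y + ρ)).indicator (fun _ => (1:ℝ≥0∞)) x ∂volume :=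
          lintegral_congr fun x => congrFun hptw x
        rw [e2, lintegral_indicator_const (measurableSet_Icc :
          MeasurableSet (Set.Icc (y - ρ) (y + ρ))) (1:ℝ≥0∞), one_mul]
    _ = ∫⁻ _y, ENNReal.ofReal (∏ i, (2 * ρ i)) ∂μ := by
        refine lintegral_congr fun y => ?_
        rw [Real.volume_Icc_pi]
        have hfac : ∀ i : Fin d, ENNReal.ofReal ((y + ρ) i - (y - ρ) i)
            = ENNReal.ofReal (2 * ρ i) := by
          intro i
          congr 1
          simp only [Pi.add_apply, Pi.sub_apply]
          ring
        rw [Finset.prod_congr rfl (fun i _ => hfac i),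
          ← ENNReal.ofReal_prod_of_nonneg (fun i _ => mul_nonneg zero_le_two (hρ i))]
    _ = ENNReal.ofReal (∏ i, (2 * ρ i)) := by
        rw [lintegral_const, measure_univ, mul_one]

end AuxStmt5
section AuxStmt6
open scoped ENNReal Classical
open MeasureTheory

private lemma prod_add_le {d : ℕ} (a : Fin d → ℝ) (b : ℝ) (ha0 : ∀ i, 0 ≤ a i)
    (ha1 : ∀ i, a i ≤ 1) (hb : 0 < b) :
    ∏ i, (a i + b) ≤ (∏ i, a i) + 2 ^ d * (b + b ^ d) := by
  classical
  rw [Finset.prod_add, ← Finset.add_sum_erase _ _ (Finset.mem_powerset_self Finset.univ)]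
  have huniv : ((∏ i ∈ Finset.univ, a i) * ∏ _i ∈ (Finset.univ \ Finset.univ : Finset (Fin d)), b)
      = ∏ i, a i := by simp
  rw [huniv]
  refine add_le_add_right ?_ _
  have hterm : ∀ t ∈ (Finset.univ.powerset.erase Finset.univ : Finset (Finset (Fin d))),
      ((∏ i ∈ t, a i) * ∏ _i ∈ Finset.univ \ t, b) ≤ b + b ^ d := by
    intro t ht
    rw [Finset.mem_erase, Finset.mem_powerset] at ht
    have hcardpos : 1 ≤ (Finset.univ \ t).card := by
      rcases Finset.eq_empty_or_nonempty (Finset.univ \ t) with he | hne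
      · exfalso
        apply ht.1
        apply Finset.eq_univ_of_forall
        intro i
        by_contra hi
        have : i ∈ Finset.univ \ t := Finset.mem_sdiff.2 ⟨Finset.mem_univ i, hi⟩
        rw [he] at this
        exact absurd this (Finset.notMem_empty i)
      · exact Finset.card_pos.2 hne
    have hcardle : (Finset.univ \ t).card ≤ d := by
      calc (Finset.univ \ t).card ≤ (Finset.univ : Finset (Fin d)).card := Finset.card_le_card
            (Finset.sdiff_subset)
        _ = d := Finset.card_fin d
    have hpow : b ^ (Finset.univ \ t).card ≤ b + b ^ d := by
      rcases le_or_gt b 1 with hb1 | hb1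
      · have h1 : b ^ (Finset.univ \ t).card ≤ b ^ 1 :=
          pow_le_pow_of_le_one hb.le hb1 hcardpos
        have h2 : (0:ℝ) ≤ b ^ d := pow_nonneg hb.le d
        rw [pow_one] at h1
        linarith
      · have h1 : b ^ (Finset.univ \ t).card ≤ b ^ d := pow_le_pow_right₀ hb1.le hcardle
        linarith [hb.le]
    have hprod1 : (∏ i ∈ t, a i) ≤ 1 := Finset.prod_le_one (fun i _ => ha0 i) (fun i _ => ha1 i)
    have hprodnn : 0 ≤ ∏ i ∈ t, a i := Finset.prod_nonneg (fun i _ => ha0 i)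
    rw [Finset.prod_const]
    calc (∏ i ∈ t, a i) * b ^ (Finset.univ \ t).card
        ≤ 1 * (b + b ^ d) := mul_le_mul hprod1 hpow (pow_nonneg hb.le _) zero_le_one
      _ = b + b ^ d := one_mul _
  calc ∑ t ∈ Finset.univ.powerset.erase Finset.univ, ((∏ i ∈ t, a i) * ∏ _i ∈ Finset.univ \ t, b)
      ≤ (Finset.univ.powerset.erase Finset.univ).card • (b + b ^ d) :=
        Finset.sum_le_card_nsmul _ _ _ hterm
    _ ≤ (2 ^ d : ℕ) • (b + b ^ d) := by
        have h2 : (0:ℝ) ≤ b + b ^ d := by positivity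
        have hc : (Finset.univ.powerset.erase Finset.univ : Finset (Finset (Fin d))).card ≤ 2 ^ d := by
          calc _ ≤ (Finset.univ.powerset : Finset (Finset (Fin d))).card :=
                Finset.card_le_card (Finset.erase_subset _ _)
            _ = 2 ^ d := by rw [Finset.card_powerset, Finset.card_fin]
        exact nsmul_le_nsmul_left h2 hc
    _ = 2 ^ d * (b + b ^ d) := by rw [nsmul_eq_mul]; push_cast; ring

private lemma block_bound {d : ℕ} (μ : Measure (Fin d → ℝ)) [IsProbabilityMeasure μ]
    (A : Set (Fin d → ℝ)) (s : ℕ → ℝ) (hs0 : ∀ n, 0 < s n)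
    (hsa : ∀ ⦃m n : ℕ⦄, m ≤ n → s n ≤ s m)
    (r' : ℕ → Fin d → ℝ) (ρ : ℕ → Fin d → ℝ)
    (hρ : ∀ n i, r' n i + 7 * s n ≤ ρ n i)
    (c : ℝ≥0∞) (m : ℕ)
    (hA : ∀ a ∈ A, (∑' i : ℕ, μ (rect a (ρ (i + m)))) ≤ c)
    (F : Finset ℕ) (hF : ∀ n ∈ F, m ≤ n) :
    (∑ n ∈ F, ∑ k ∈ gB A (s n),
        μ (Kc (s n) k) * μ (rect (x0 A (s n) k) (fun i => r' n i + s n)))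
      ≤ (4:ℝ≥0∞) ^ d * c := by
  classical
  have hrep : ∀ (n : ℕ) (k : Fin d → ℕ),
      μ (Kc (s n) k) * μ (rect (x0 A (s n) k) (fun i => r' n i + s n))
      = ∫⁻ x, (Kc (s n) k).indicator
          (fun _ => μ (rect (x0 A (s n) k) (fun i => r' n i + s n))) x ∂μ := by
    intro n k
    rw [lintegral_indicator_const (show MeasurableSet (Kc (s n) k) from measurableSet_Icc),
      mul_comm]
  have hmeas : ∀ (n : ℕ) (k : Fin d → ℕ), Measurable ((Kc (s n) k).indicator
      (fun _ => μ (rect (x0 A (s n) k) (fun i => r' n i + s n)))) :=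
    fun n k => measurable_const.indicator measurableSet_Icc
  calc (∑ n ∈ F, ∑ k ∈ gB A (s n),
        μ (Kc (s n) k) * μ (rect (x0 A (s n) k) (fun i => r' n i + s n)))
      = ∫⁻ x, (∑ n ∈ F, ∑ k ∈ gB A (s n), (Kc (s n) k).indicator
          (fun _ => μ (rect (x0 A (s n) k) (fun i => r' n i + s n))) x) ∂μ := by
        rw [lintegral_finset_sum _ (fun n _ => Finset.measurable_sum _ (fun k _ => hmeas n k))]
        refine Finset.sum_congr rfl fun n _ => ?_
        rw [lintegral_finset_sum _ (fun k _ => hmeas n k)]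
        exact Finset.sum_congr rfl fun k _ => hrep n k
    _ ≤ ∫⁻ _x, (4:ℝ≥0∞) ^ d * c ∂μ := by
        refine lintegral_mono fun x => ?_
        set S := F.filter (fun n => ∃ k ∈ gB A (s n), x ∈ Kc (s n) k) with hSdef
        by_cases hS : S.Nonempty
        · set nmax := S.max' hS with hnmax
          have hnmS : nmax ∈ S := S.max'_mem hS
          have hnmdec := Finset.mem_filter.1 hnmS
          obtain ⟨kbar, hkB, hkK⟩ := hnmdec.2
          set av := x0 A (s nmax) kbar with hav
          have hx0m := x0_mem (Finset.mem_filter.1 hkB).2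
          have haA : av ∈ A := hx0m.1
          have haK : av ∈ Kc (s nmax) kbar := Qc_subset_Kc (hs0 _).le _ hx0m.2
          have hax : ∀ i, |av i - x i| ≤ 3 * s nmax := fun i => Kc_dist haK hkK i
          have hinner : ∀ n ∈ F, (∑ k ∈ gB A (s n), (Kc (s n) k).indicator
              (fun _ => μ (rect (x0 A (s n) k) (fun i => r' n i + s n))) x)
              ≤ if n ∈ S then (4:ℝ≥0∞) ^ d * μ (rect av (ρ n)) else 0 := by
            intro n hn
            by_cases hnS : n ∈ S
            · rw [if_pos hnS]
              have hnle : n ≤ nmax := S.le_max' n hnS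
              have hsle : s nmax ≤ s n := hsa hnle
              have hsub : ∀ k ∈ (gB A (s n)).filter (fun k => x ∈ Kc (s n) k),
                  rect (x0 A (s n) k) (fun i => r' n i + s n) ⊆ rect av (ρ n) := by
                intro k hk
                have hkB' := (Finset.mem_filter.1 hk).1
                have hkK' := (Finset.mem_filter.1 hk).2
                have hx0m' := x0_mem (Finset.mem_filter.1 hkB').2
                have hx0K : x0 A (s n) k ∈ Kc (s n) k := Qc_subset_Kc (hs0 _).le _ hx0m'.2
                have hd1 : ∀ i, |x0 A (s n) k i - x i| ≤ 3 * s n := fun i => Kc_dist hx0K hkK' i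
                intro y hy
                simp only [rect, Set.mem_Icc] at hy ⊢
                constructor <;> intro i
                · have b1 := hy.1 i
                  have b2 := (abs_le.1 (hd1 i)).1
                  have b3 := (abs_le.1 (hax i)).2
                  have b4 := hρ n i
                  simp only [Pi.sub_apply] at b1 ⊢
                  have hsle3 : 3 * s nmax ≤ 3 * s n := by linarith
                  linarith
                · have b1 := hy.2 i
                  have b2 := (abs_le.1 (hd1 i)).2
                  have b3 := (abs_le.1 (hax i)).1
                  have b4 := hρ n i
                  simp only [Pi.add_apply] at b1 ⊢
                  have hsle3 : 3 * s nmax ≤ 3 * s n := by linarith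
                  linarith
              calc (∑ k ∈ gB A (s n), (Kc (s n) k).indicator
                    (fun _ => μ (rect (x0 A (s n) k) (fun i => r' n i + s n))) x)
                  = ∑ k ∈ (gB A (s n)).filter (fun k => x ∈ Kc (s n) k),
                      μ (rect (x0 A (s n) k) (fun i => r' n i + s n)) := by
                    rw [Finset.sum_filter]
                    refine Finset.sum_congr rfl fun k _ => ?_
                    by_cases hxk : x ∈ Kc (s n) k
                    · rw [Set.indicator_of_mem hxk, if_pos hxk]
                    · rw [Set.indicator_of_notMem hxk, if_neg hxk]
                _ ≤ ∑ k ∈ (gB A (s n)).filter (fun k => x ∈ Kc (s n) k), μ (rect av (ρ n)) :=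
                    Finset.sum_le_sum fun k hk => measure_mono (hsub k hk)
                _ = ((gB A (s n)).filter (fun k => x ∈ Kc (s n) k)).card • μ (rect av (ρ n)) :=
                    Finset.sum_const _
                _ ≤ (4 ^ d : ℕ) • μ (rect av (ρ n)) := by
                    refine nsmul_le_nsmul_left ?_ ?_
                    · exact zero_le
                    · exact card_K_le (hs0 n) x _ (fun k hk => (Finset.mem_filter.1 hk).2)
                _ = (4:ℝ≥0∞) ^ d * μ (rect av (ρ n)) := by
                    rw [nsmul_eq_mul]
                    push_cast
                    ring
            · rw [if_neg hnS]
              apply le_of_eq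
              refine Finset.sum_eq_zero fun k hk => ?_
              rw [Set.indicator_of_notMem]
              intro hc
              exact hnS (Finset.mem_filter.2 ⟨hn, ⟨k, hk, hc⟩⟩)
          calc (∑ n ∈ F, ∑ k ∈ gB A (s n), (Kc (s n) k).indicator
                (fun _ => μ (rect (x0 A (s n) k) (fun i => r' n i + s n))) x)
              ≤ ∑ n ∈ F, (if n ∈ S then (4:ℝ≥0∞) ^ d * μ (rect av (ρ n)) else 0) :=
                Finset.sum_le_sum hinner
            _ = ∑ n ∈ S, (4:ℝ≥0∞) ^ d * μ (rect av (ρ n)) := by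
                rw [hSdef]
                rw [Finset.sum_filter]
                refine Finset.sum_congr rfl fun n hn => ?_
                by_cases hp : ∃ k ∈ gB A (s n), x ∈ Kc (s n) k
                · rw [if_pos hp, if_pos (Finset.mem_filter.2 ⟨hn, hp⟩)]
                · have hns : n ∉ Finset.filter (fun n => ∃ k ∈ gB A (s n), x ∈ Kc (s n) k) F :=
                    fun hc => hp (Finset.mem_filter.1 hc).2
                  rw [if_neg hp, if_neg hns]
            _ = (4:ℝ≥0∞) ^ d * ∑ n ∈ S, μ (rect av (ρ n)) := (Finset.mul_sum _ _ _).symm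
            _ ≤ (4:ℝ≥0∞) ^ d * c := by
                refine mul_le_mul_right ?_ _
                have himg : (∑ n ∈ S, μ (rect av (ρ n)))
                    = ∑ t ∈ S.image (fun n => n - m), μ (rect av (ρ (t + m))) := by
                  rw [Finset.sum_image (by
                    intro p hp q hq hpq
                    have hp' : m ≤ p := hF p (Finset.mem_filter.1 hp).1
                    have hq' : m ≤ q := hF q (Finset.mem_filter.1 hq).1
                    have hpq' : p - m = q - m := hpq
                    omega)]
                  refine Finset.sum_congr rfl fun n hn => ?_
                  have hn' : m ≤ n := hF n (Finset.mem_filter.1 hn).1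
                  rw [Nat.sub_add_cancel hn']
                rw [himg]
                calc (∑ t ∈ S.image (fun n => n - m), μ (rect av (ρ (t + m))))
                    ≤ ∑' i : ℕ, μ (rect av (ρ (i + m))) := ENNReal.sum_le_tsum _
                  _ ≤ c := hA av haA
        · have hz : (∑ n ∈ F, ∑ k ∈ gB A (s n), (Kc (s n) k).indicator
              (fun _ => μ (rect (x0 A (s n) k) (fun i => r' n i + s n))) x) = 0 := by
            refine Finset.sum_eq_zero fun n hn => ?_
            refine Finset.sum_eq_zero fun k hk => ?_
            rw [Set.indicator_of_notMem]
            intro hc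
            exact hS ⟨n, Finset.mem_filter.2 ⟨hn, ⟨k, hk, hc⟩⟩⟩
          rw [hz]
          exact zero_le
    _ = (4:ℝ≥0∞) ^ d * c := by rw [lintegral_const, measure_univ, mul_one]

end AuxStmt6

set_option maxHeartbeats 2000000

/-- **Convergence part of the main theorem.**
If `([0,1]^d, T, μ)` satisfies Conditions I–V and `∑ₙ r_{n,1}⋯r_{n,d} < ∞`, then the
recurrence set `R({rₙ}) = {x ∈ [0,1]^d : Tⁿx ∈ R(x, rₙ) for infinitely many n}` is μ-null. -/
theorem stmt1 (d : ℕ) (hd : 1 ≤ d) {ι : Type} [Countable ι]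
    (T : (Fin d → ℝ) → (Fin d → ℝ)) (μ : Measure (Fin d → ℝ)) [IsProbabilityMeasure μ]
    (hT : MeasurePreserving T μ μ) (hTmaps : MapsTo T (unitCube d) (unitCube d))
    (hμcube : μ (unitCube d) = 1)
    (θ τ C : ℝ) (hI : CondI T μ θ τ C)
    (q : ℝ) (h : (Fin d → ℝ) → ℝ) (hII : CondII μ h q)
    (U : ι → Set (Fin d → ℝ)) (L : ℝ) (hIII : CondIII T U L)
    (α ε₀ K₁ : ℝ) (hIV : CondIV U α ε₀ K₁)
    (A : Set (Fin d → ℝ)) (β₁ β₂ K₂ : ℝ) (hV : CondV U A β₁ β₂ K₂)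
    (r : ℕ → Fin d → ℝ) (hr : ∀ n i, 0 ≤ r n i)
    (hsum : Summable fun n => ∏ i, r n i) :
    μ {x | x ∈ unitCube d ∧ ∃ᶠ n in atTop, T^[n] x ∈ rect x (r n)} = 0 := by
  classical
  obtain ⟨hθ, hθ1, hτ, hC, hD⟩ := hI
  have hTm : Measurable T := hT.measurable
  have hac : μ ≪ (volume : Measure (Fin d → ℝ)) := by
    rw [hII.2.2.1]
    exact withDensity_absolutelyContinuous _ _
  -- capped radii
  set rt : ℕ → Fin d → ℝ := fun n i => min (r n i) 1 with hrtdef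
  have hrt0 : ∀ n i, 0 ≤ rt n i := fun n i => le_min (hr n i) zero_le_one
  have hrt1 : ∀ n i, rt n i ≤ 1 := fun n i => min_le_right _ _
  -- scales
  have hθd : (0:ℝ) < θ + d := by
    have h0 : (0:ℝ) ≤ d := Nat.cast_nonneg d
    linarith
  set γ : ℝ := τ / (2 * (θ + d)) with hγdef
  have hγ0 : 0 < γ := div_pos hτ (by linarith)
  set s : ℕ → ℝ := fun n => Real.exp (-(γ * n)) with hsdef
  have hs0 : ∀ n, 0 < s n := fun n => Real.exp_pos _
  have hs1 : ∀ n, s n ≤ 1 := fun n => Real.exp_le_one_iff.2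
    (neg_nonpos.2 (mul_nonneg hγ0.le (Nat.cast_nonneg n)))
  have hsa : ∀ ⦃a b : ℕ⦄, a ≤ b → s b ≤ s a := by
    intro a b hab
    apply Real.exp_le_exp.2
    have hc : (a:ℝ) ≤ b := Nat.cast_le.2 hab
    nlinarith
  -- fattened radii
  set ρ : ℕ → Fin d → ℝ := fun n i => rt n i + 10 * s n with hρdef
  have hρ0 : ∀ n i, 0 ≤ ρ n i := fun n i =>
    add_nonneg (hrt0 n i) (by positivity)
  have hρ7 : ∀ n i, rt n i + 7 * s n ≤ ρ n i := fun n i => by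
    have h0 := (hs0 n).le
    show rt n i + 7 * s n ≤ rt n i + 10 * s n
    linarith
  -- tail sums
  set Tl : ℕ → (Fin d → ℝ) → ℝ≥0∞ := fun m x => ∑' i : ℕ, μ (rect x (ρ (i + m))) with hTldef
  have hTlm : ∀ m, Measurable (Tl m) := fun m =>
    Measurable.ennreal_tsum (fun i => measurable_rect_measure μ (ρ (i + m)))
  have hTl_anti : ∀ (x : Fin d → ℝ) ⦃a b : ℕ⦄, a ≤ b → Tl b x ≤ Tl a x := by
    intro x a b hab
    have hle : ∀ i : ℕ, μ (rect x (ρ (i + b))) ≤ μ (rect x (ρ ((i + (b - a)) + a))) := by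
      intro i
      have he : (i + (b - a)) + a = i + b := by omega
      rw [he]
    exact ENNReal.summable.tsum_le_tsum_of_inj (fun i => i + (b - a))
      (fun p q hpq => by simpa using hpq) (fun c _ => zero_le) hle
      ENNReal.summable
  -- summability of the Lebesgue sizes
  have hsumρ : Summable (fun n => ∏ i, (2 * ρ n i)) := by
    have hsexp : ∀ n : ℕ, s n = Real.exp (-γ) ^ n := by
      intro n
      show Real.exp (-(γ * n)) = Real.exp (-γ) ^ n
      rw [← Real.exp_nat_mul]
      congr 1
      ring
    have hsgeo : Summable s := by
      refine (summable_congr hsexp).2 ?_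
      exact summable_geometric_of_lt_one (Real.exp_pos _).le
        (Real.exp_lt_one_iff.2 (by linarith))
    have hsgeod : Summable (fun n => s n ^ d) := by
      have he : ∀ n : ℕ, s n ^ d = (Real.exp (-γ) ^ d) ^ n := by
        intro n
        rw [hsexp n, ← pow_mul, ← pow_mul, mul_comm]
      refine (summable_congr he).2 ?_
      refine summable_geometric_of_lt_one (by positivity) ?_
      have h1 : Real.exp (-γ) < 1 := Real.exp_lt_one_iff.2 (by linarith)
      calc Real.exp (-γ) ^ d ≤ Real.exp (-γ) ^ 1 :=
            pow_le_pow_of_le_one (Real.exp_pos _).le h1.le hd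
        _ < 1 := by rw [pow_one]; exact h1
    have hrtsum : Summable (fun n => ∏ i, rt n i) := by
      refine Summable.of_nonneg_of_le (fun n => Finset.prod_nonneg fun i _ => hrt0 n i)
        (fun n => Finset.prod_le_prod (fun i _ => hrt0 n i) (fun i _ => min_le_left _ _)) hsum
    have hmaj : Summable (fun n => (∏ i, rt n i) + 2^d * ((10 * s n) + (10 * s n)^d)) := by
      refine hrtsum.add (Summable.mul_left _ (Summable.add (hsgeo.mul_left _) ?_))
      have he : (fun n => (10 * s n)^d) = fun n => 10^d * s n ^ d := by
        funext n; rw [mul_pow]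
      rw [he]
      exact hsgeod.mul_left _
    refine Summable.of_nonneg_of_le (fun n => Finset.prod_nonneg fun i _ => by
      have := hρ0 n i; positivity) (fun n => ?_) (hmaj.mul_left (2^d))
    have he : ∏ i, (2 * ρ n i) = 2^d * ∏ i, ρ n i := by
      rw [Finset.prod_mul_distrib, Finset.prod_const]
      congr 2
      simp
    rw [he]
    refine mul_le_mul_of_nonneg_left ?_ (by positivity)
    have := prod_add_le (rt n) (10 * s n) (hrt0 n) (hrt1 n) (by have := hs0 n; positivity)
    simpa [hρdef] using this
  -- the potential is integrable for Lebesgue, hence finite a.e.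
  have hTl0fin : ∫⁻ x, Tl 0 x ∂(volume : Measure (Fin d → ℝ)) ≠ ⊤ := by
    have he : ∫⁻ x, Tl 0 x ∂(volume : Measure (Fin d → ℝ))
        = ∑' n : ℕ, ∫⁻ x, μ (rect x (ρ (n + 0))) ∂(volume : Measure (Fin d → ℝ)) := by
      rw [hTldef]
      exact lintegral_tsum (fun n => (measurable_rect_measure μ (ρ (n + 0))).aemeasurable)
    rw [he]
    have he2 : ∀ n : ℕ, ∫⁻ x, μ (rect x (ρ (n + 0))) ∂(volume : Measure (Fin d → ℝ))
        = ENNReal.ofReal (∏ i, (2 * ρ n i)) := by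
      intro n
      rw [show n + 0 = n from rfl]
      exact lint_rect μ (ρ n) (hρ0 n)
    rw [tsum_congr he2, ← ENNReal.ofReal_tsum_of_nonneg
      (fun n => Finset.prod_nonneg fun i _ => by have := hρ0 n i; positivity) hsumρ]
    exact ENNReal.ofReal_ne_top
  have haefin : ∀ᵐ x ∂μ, Tl 0 x ≠ ⊤ := by
    have hvol : (volume : Measure (Fin d → ℝ)) {x | Tl 0 x = ⊤} = 0 := by
      have hae := ae_lt_top (hTlm 0) hTl0fin
      rw [ae_iff] at hae
      convert hae using 2
      ext x
      simp [lt_top_iff_ne_top]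
    have hμ0 : μ {x | Tl 0 x = ⊤} = 0 := hac hvol
    rw [ae_iff]
    convert hμ0 using 2
    ext x
    simp
  -- conclude via ε-argument
  refine le_antisymm ?_ zero_le
  refine ENNReal.le_of_forall_pos_le_add fun ε hε _ => ?_
  rw [zero_add]
  -- choice of tail indices
  have hchoice : ∀ j : ℕ, ∃ mm : ℕ,
      μ {x | (2⁻¹ : ℝ≥0∞)^j < Tl mm x} ≤ (ε : ℝ≥0∞) * 2⁻¹^(j+1) := by
    intro j
    set D : ℕ → Set (Fin d → ℝ) := fun mm => {x | (2⁻¹ : ℝ≥0∞)^j < Tl mm x} with hDdef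
    have hDm : ∀ mm, MeasurableSet (D mm) := fun mm =>
      measurableSet_lt measurable_const (hTlm mm)
    have hanti : Antitone D := by
      intro a b hab x hx
      exact lt_of_lt_of_le hx (hTl_anti x hab)
    have hnull : μ (⋂ mm, D mm) = 0 := by
      have hsub : (⋂ mm, D mm) ⊆ {x | Tl 0 x = ⊤} := by
        intro x hx
        by_contra hxt
        have htd : Tendsto (fun mm => Tl mm x) atTop (𝓝 0) := by
          have := ENNReal.tendsto_sum_nat_add (fun n => μ (rect x (ρ n))) hxt
          exact this
        have h2i : (0:ℝ≥0∞) < 2⁻¹ := ENNReal.inv_pos.2 (by norm_num)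
        have hpos : (0:ℝ≥0∞) < 2⁻¹^j := ENNReal.pow_pos h2i j
        obtain ⟨mm, hmm⟩ := (htd.eventually_lt_const hpos).exists
        exact lt_asymm hmm (Set.mem_iInter.1 hx mm)
      refine measure_mono_null hsub ?_
      rw [ae_iff] at haefin
      convert haefin using 2
      ext x
      simp
    have htm := tendsto_measure_iInter_atTop (fun mm => (hDm mm).nullMeasurableSet) hanti
      ⟨0, measure_ne_top μ _⟩
    rw [hnull] at htm
    have hbpos : (0:ℝ≥0∞) < (ε : ℝ≥0∞) * 2⁻¹^(j+1) := by
      have h1 : (0:ℝ≥0∞) < (ε : ℝ≥0∞) := ENNReal.coe_pos.2 hε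
      have h2i : (0:ℝ≥0∞) < 2⁻¹ := ENNReal.inv_pos.2 (by norm_num)
      have h2 : (0:ℝ≥0∞) < 2⁻¹^(j+1) := ENNReal.pow_pos h2i _
      exact ENNReal.mul_pos h1.ne' h2.ne'
    obtain ⟨mm, hmm⟩ := (htm.eventually_lt_const hbpos).exists
    exact ⟨mm, hmm.le⟩
  choose M hM using hchoice
  set m : ℕ → ℕ := fun j => j + (Finset.range (j+1)).sup M with hmdef
  have hmapp : ∀ j, m j = j + (Finset.range (j+1)).sup M := fun j => rfl
  have hmlt : ∀ j, m j < m (j+1) := by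
    intro j
    have hsup : (Finset.range (j+1)).sup M ≤ (Finset.range (j+1+1)).sup M :=
      Finset.sup_mono (Finset.range_subset_range.2 (by omega))
    calc m j = j + (Finset.range (j+1)).sup M := hmapp j
      _ < (j+1) + (Finset.range (j+1)).sup M := by omega
      _ ≤ (j+1) + (Finset.range (j+1+1)).sup M := by omega
      _ = m (j+1) := (hmapp (j+1)).symm
  have hmmono : StrictMono m := strictMono_nat_of_lt_succ hmlt
  have hmM : ∀ j, M j ≤ m j := by
    intro j
    calc M j ≤ (Finset.range (j+1)).sup M :=
          Finset.le_sup (Finset.mem_range.2 (Nat.lt_succ_self j))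
      _ ≤ m j := by rw [hmapp]; omega
  have hmid : ∀ j, j ≤ m j := fun j => Nat.le_add_right _ _
  have htail : ∀ j, μ {x | (2⁻¹ : ℝ≥0∞)^j < Tl (m j) x} ≤ (ε : ℝ≥0∞) * 2⁻¹^(j+1) := by
    intro j
    refine le_trans (measure_mono ?_) (hM j)
    intro x hx
    exact lt_of_lt_of_le hx (hTl_anti x (hmM j))
  -- the good set
  set AG : Set (Fin d → ℝ) := unitCube d ∩ ⋂ j, {x | Tl (m j) x ≤ (2⁻¹ : ℝ≥0∞)^j} with hAGdef
  have hAGtail : ∀ a ∈ AG, ∀ j, Tl (m j) a ≤ (2⁻¹ : ℝ≥0∞)^j := by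
    intro a ha j
    exact Set.mem_iInter.1 ha.2 j
  have hAGc : μ (unitCube d \ AG) ≤ (ε : ℝ≥0∞) := by
    have hsub : unitCube d \ AG ⊆ ⋃ j, {x | (2⁻¹ : ℝ≥0∞)^j < Tl (m j) x} := by
      rintro x ⟨hxc, hxA⟩
      rw [Set.mem_iUnion]
      by_contra hcon
      push_neg at hcon
      refine hxA ⟨hxc, Set.mem_iInter.2 fun j => ?_⟩
      have := hcon j
      simp only [Set.mem_setOf_eq, not_lt] at this ⊢
      exact this
    calc μ (unitCube d \ AG) ≤ μ (⋃ j, {x | (2⁻¹ : ℝ≥0∞)^j < Tl (m j) x}) := measure_mono hsub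
      _ ≤ ∑' j, μ {x | (2⁻¹ : ℝ≥0∞)^j < Tl (m j) x} := measure_iUnion_le _
      _ ≤ ∑' j : ℕ, (ε : ℝ≥0∞) * 2⁻¹^(j+1) := ENNReal.tsum_le_tsum htail
      _ = (ε : ℝ≥0∞) := by
          rw [ENNReal.tsum_mul_left]
          have he : ∀ j : ℕ, (2⁻¹ : ℝ≥0∞)^(j+1) = 2⁻¹ * 2⁻¹^j := fun j => by
            rw [pow_succ]; ring
          rw [tsum_congr he, ENNReal.tsum_mul_left, ENNReal.tsum_geometric,
            ENNReal.one_sub_inv_two, inv_inv]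
          rw [show (2⁻¹ : ℝ≥0∞) * 2 = 1 from ENNReal.inv_mul_cancel (by norm_num) (by norm_num)]
          rw [mul_one]
  -- the recurrence pieces
  set E : ℕ → Set (Fin d → ℝ) :=
    fun n => AG ∩ unitCube d ∩ {x | T^[n] x ∈ rect x (rt n)} with hEdef
  set G : ℕ → Set (Fin d → ℝ) := fun n => if m 0 ≤ n then E n else ∅ with hGdef
  set Main : ℕ → ℝ≥0∞ := fun n => ∑ k ∈ gB AG (s n),
    μ (Kc (s n) k) * μ (rect (x0 AG (s n) k) (fun i => rt n i + s n)) with hMaindef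
  set err : ℕ → ℝ≥0∞ := fun n =>
    ENNReal.ofReal ((3 / s n)^d * (C * Real.exp (-τ * n) * (2 * s n ^ (-θ)))) with herrdef
  have hEn : ∀ n, μ (E n) ≤ Main n + err n := by
    intro n
    exact pern ⟨hθ, hθ1, hτ, hC, hD⟩ hTm AG (hs0 n) (hs1 n) (rt n) n
  -- summing the main terms via blocks
  have hMainSum : (∑' n, (if m 0 ≤ n then Main n else 0)) ≤ (4:ℝ≥0∞)^d * 2 := by
    rw [ENNReal.tsum_eq_iSup_sum]
    refine iSup_le fun F => ?_
    set J0 : ℕ := (F.sup id) + 1 with hJ0def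
    have hJ0 : ∀ n ∈ F, n < m J0 := by
      intro n hn
      have h1 : n ≤ F.sup id := Finset.le_sup (f := id) hn
      have h2 : J0 ≤ m J0 := hmid J0
      omega
    have hblockJ : ∀ (J : ℕ) (n : ℕ), m 0 ≤ n → n < m J →
        ∃ j, j < J ∧ m j ≤ n ∧ n < m (j+1) := by
      intro J
      induction J with
      | zero => intro n h0 hlt; omega
      | succ J ih =>
        intro n h0 hlt
        by_cases hcase : n < m J
        · obtain ⟨j, h1, h2, h3⟩ := ih n h0 hcase
          exact ⟨j, by omega, h2, h3⟩
        · push_neg at hcase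
          exact ⟨J, by omega, hcase, hlt⟩
    have hblock : ∀ n ∈ F, m 0 ≤ n → ∃ j, j < J0 ∧ m j ≤ n ∧ n < m (j+1) :=
      fun n hn hn0 => hblockJ J0 n hn0 (hJ0 n hn)
    have hsubF : F.filter (fun n => m 0 ≤ n) ⊆
        (Finset.range J0).biUnion (fun j => F.filter (fun n => m j ≤ n ∧ n < m (j+1))) := by
      intro n hn
      rw [Finset.mem_filter] at hn
      obtain ⟨j, hj1, hj2, hj3⟩ := hblock n hn.1 hn.2
      rw [Finset.mem_biUnion]
      exact ⟨j, Finset.mem_range.2 hj1, Finset.mem_filter.2 ⟨hn.1, hj2, hj3⟩⟩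
    have hdisj : (↑(Finset.range J0) : Set ℕ).PairwiseDisjoint
        (fun j => F.filter (fun n => m j ≤ n ∧ n < m (j+1))) := by
      intro a _ b _ hab
      refine Finset.disjoint_left.2 fun n hna hnb => ?_
      rw [Finset.mem_filter] at hna hnb
      rcases lt_or_gt_of_ne hab with hlt | hlt
      · have : m (a+1) ≤ m b := hmmono.monotone (by omega)
        omega
      · have : m (b+1) ≤ m a := hmmono.monotone (by omega)
        omega
    calc (∑ n ∈ F, if m 0 ≤ n then Main n else 0)
        = ∑ n ∈ F.filter (fun n => m 0 ≤ n), Main n := (Finset.sum_filter _ _).symm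
      _ ≤ ∑ n ∈ (Finset.range J0).biUnion
            (fun j => F.filter (fun n => m j ≤ n ∧ n < m (j+1))), Main n :=
          Finset.sum_le_sum_of_subset hsubF
      _ = ∑ j ∈ Finset.range J0, ∑ n ∈ F.filter (fun n => m j ≤ n ∧ n < m (j+1)), Main n :=
          Finset.sum_biUnion hdisj
      _ ≤ ∑ j ∈ Finset.range J0, (4:ℝ≥0∞)^d * 2⁻¹^j := by
          refine Finset.sum_le_sum fun j _ => ?_
          refine block_bound μ AG s hs0 hsa rt ρ hρ7 ((2⁻¹ : ℝ≥0∞)^j) (m j)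
            (fun a ha => hAGtail a ha j) _ (fun n hn => (Finset.mem_filter.1 hn).2.1)
      _ ≤ (4:ℝ≥0∞)^d * 2 := by
          rw [← Finset.mul_sum]
          refine mul_le_mul_right ?_ _
          calc (∑ j ∈ Finset.range J0, (2⁻¹:ℝ≥0∞)^j) ≤ ∑' j : ℕ, (2⁻¹:ℝ≥0∞)^j :=
                ENNReal.sum_le_tsum _
            _ = 2 := by rw [ENNReal.tsum_geometric, ENNReal.one_sub_inv_two, inv_inv]
  -- summing the errors
  have herrSum : (∑' n, err n) ≠ ⊤ := by
    have heq : ∀ n : ℕ, (3 / s n)^d * (C * Real.exp (-τ * n) * (2 * s n ^ (-θ)))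
        = (2 * 3^d * C) * Real.exp (-(τ/2)) ^ n := by
      intro n
      have h1 : s n ^ (-θ) = Real.exp (γ * n * θ) := by
        show Real.exp (-(γ * n)) ^ (-θ) = _
        rw [Real.rpow_def_of_pos (Real.exp_pos _), Real.log_exp]
        congr 1
        ring
      have h2 : (3 / s n)^d = 3^d * Real.exp (γ * n * d) := by
        have hsn : s n ^ d = Real.exp (-(γ * n * d)) := by
          show Real.exp (-(γ * n)) ^ d = _
          rw [← Real.exp_nat_mul]
          congr 1
          ring
        rw [div_pow, hsn, Real.exp_neg, div_eq_mul_inv, inv_inv]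
      have h3 : Real.exp (-(τ/2)) ^ n = Real.exp (-(τ/2) * n) := by
        rw [← Real.exp_nat_mul]
        congr 1
        ring
      have h5 : γ * (θ + d) = τ / 2 := by
        rw [hγdef]
        field_simp
      have h4 : Real.exp (γ * n * d) * (Real.exp (-τ * n) * Real.exp (γ * n * θ))
          = Real.exp (-(τ/2) * n) := by
        rw [← Real.exp_add, ← Real.exp_add]
        congr 1
        linear_combination (n:ℝ) * h5
      rw [h1, h2, h3]
      calc 3^d * Real.exp (γ * n * d) * (C * Real.exp (-τ * n) * (2 * Real.exp (γ * n * θ)))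
          = 2 * 3^d * C *
            (Real.exp (γ * n * d) * (Real.exp (-τ * n) * Real.exp (γ * n * θ))) := by ring
        _ = 2 * 3^d * C * Real.exp (-(τ/2) * n) := by rw [h4]
    have herr2 : ∀ n, err n = ENNReal.ofReal ((2 * 3^d * C) * Real.exp (-(τ/2)) ^ n) := by
      intro n
      simp only [herrdef]
      rw [heq n]
    have hsq : Summable (fun n : ℕ => (2 * 3^d * C) * Real.exp (-(τ/2)) ^ n) :=
      (summable_geometric_of_lt_one (Real.exp_pos _).le
        (Real.exp_lt_one_iff.2 (by linarith))).mul_left _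
    rw [tsum_congr herr2, ← ENNReal.ofReal_tsum_of_nonneg (fun n =>
      mul_nonneg (mul_nonneg (by positivity) hC.le) (pow_nonneg (Real.exp_pos _).le n)) hsq]
    exact ENNReal.ofReal_ne_top
  -- Borel-Cantelli
  have hGsum : (∑' n, μ (G n)) ≠ ⊤ := by
    have hGle : ∀ n, μ (G n) ≤ (if m 0 ≤ n then Main n else 0) + err n := by
      intro n
      by_cases hn : m 0 ≤ n
      · simp only [hGdef, if_pos hn]
        exact hEn n
      · simp only [hGdef, if_neg hn]
        simp
    have h1 : (∑' n, μ (G n)) ≤ (∑' n, (if m 0 ≤ n then Main n else 0)) + ∑' n, err n := by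
      calc ∑' n, μ (G n) ≤ ∑' n, ((if m 0 ≤ n then Main n else 0) + err n) :=
            ENNReal.tsum_le_tsum hGle
        _ = _ := ENNReal.tsum_add
    refine ne_top_of_le_ne_top ?_ h1
    refine ENNReal.add_ne_top.2 ⟨?_, herrSum⟩
    refine ne_top_of_le_ne_top ?_ hMainSum
    exact ENNReal.mul_ne_top (ENNReal.pow_ne_top (by norm_num)) (by norm_num)
  have hBC : μ (limsup G atTop) = 0 := measure_limsup_atTop_eq_zero hGsum
  -- inclusion of the recurrence set
  have hsubTgt : {x | x ∈ unitCube d ∧ ∃ᶠ n in atTop, T^[n] x ∈ rect x (r n)} ⊆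
      limsup G atTop ∪ (unitCube d \ AG) := by
    intro x hx
    obtain ⟨hxc, hxf⟩ := hx
    by_cases hxA : x ∈ AG
    · left
      rw [mem_limsup_iff_frequently_mem]
      rw [frequently_atTop] at hxf ⊢
      intro N
      obtain ⟨n, hn1, hn2⟩ := hxf (max N (m 0))
      refine ⟨n, le_trans (le_max_left _ _) hn1, ?_⟩
      have hnm : m 0 ≤ n := le_trans (le_max_right _ _) hn1
      simp only [hGdef, if_pos hnm]
      refine ⟨⟨hxA, hxc⟩, ?_⟩
      have hTn : T^[n] x ∈ unitCube d := (hTmaps.iterate n) hxc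
      rw [unitCube, Set.mem_Icc] at hTn
      have hxcc := hxc
      rw [unitCube, Set.mem_Icc] at hxcc
      simp only [rect, Set.mem_Icc, Set.mem_setOf_eq] at hn2 ⊢
      constructor <;> intro i
      · have b1 := hn2.1 i
        have b2 : (0:ℝ) ≤ T^[n] x i := by have := hTn.1 i; simpa using this
        have b3 : x i ≤ 1 := by have := hxcc.2 i; simpa using this
        simp only [Pi.sub_apply] at b1 ⊢
        rcases le_total (r n i) 1 with hri | hri
        · have hmin : rt n i = r n i := min_eq_left hri
          rw [hmin]
          linarith
        · have hmin : rt n i = 1 := min_eq_right hri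
          rw [hmin]
          linarith
      · have b1 := hn2.2 i
        have b2 : T^[n] x i ≤ 1 := by have := hTn.2 i; simpa using this
        have b3 : (0:ℝ) ≤ x i := by have := hxcc.1 i; simpa using this
        simp only [Pi.add_apply] at b1 ⊢
        rcases le_total (r n i) 1 with hri | hri
        · have hmin : rt n i = r n i := min_eq_left hri
          rw [hmin]
          linarith
        · have hmin : rt n i = 1 := min_eq_right hri
          rw [hmin]
          linarith
    · right
      exact ⟨hxc, hxA⟩
  calc μ {x | x ∈ unitCube d ∧ ∃ᶠ n in atTop, T^[n] x ∈ rect x (r n)}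
      ≤ μ (limsup G atTop ∪ (unitCube d \ AG)) := measure_mono hsubTgt
    _ ≤ μ (limsup G atTop) + μ (unitCube d \ AG) := measure_union_le _ _
    _ ≤ 0 + (ε : ℝ≥0∞) := add_le_add (le_of_eq hBC) hAGc
    _ = (ε : ℝ≥0∞) := zero_add _
end

section
/- Suppose ([0,1]^d, T, μ) satisfies Conditions I and II, with constants θ, τ, C from Condition I, density h ∈ L^q(λ^d) from Condition II, and s = 1 − 1/q. Set c₁ = 4d|h|_q + 2C and τ₁ = sτ/(1+s). Then for every hyperrectangle R ⊂ [0,1]^d (a product of d compact intervals with sides parallel to the axes), every measurable set F ⊂ [0,1]^d and every n ≥ 0: |μ(R ∩ T^{−n}F) − μ(R)μ(F)| ≤ c₁ μ(F) e^{−τ₁ n}. -/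
open MeasureTheory Filter Metric Set
open scoped ENNReal NNReal Topology Classical

/-- telescoping product bound -/
lemma aux_prod_sub {ι : Type*} (s : Finset ι) (u v : ι → ℝ) (h0 : ∀ i, 0 ≤ v i)
    (h1 : ∀ i, v i ≤ u i) (h2 : ∀ i, u i ≤ 1) :
    ∏ i ∈ s, u i - ∏ i ∈ s, v i ≤ ∑ i ∈ s, (u i - v i) := by
  classical
  refine Finset.induction_on s (by simp) ?_
  intro a s' hx ih
  rw [Finset.prod_insert hx, Finset.prod_insert hx, Finset.sum_insert hx]
  have hvs : (0:ℝ) ≤ ∏ i ∈ s', v i := Finset.prod_nonneg fun i _ => h0 i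
  have hus : ∏ i ∈ s', v i ≤ ∏ i ∈ s', u i :=
    Finset.prod_le_prod (fun i _ => h0 i) (fun i _ => h1 i)
  have hvle1 : ∏ i ∈ s', v i ≤ 1 :=
    Finset.prod_le_one (fun i _ => h0 i) (fun i _ => (h1 i).trans (h2 i))
  have h0a := (h0 a).trans (h1 a)
  nlinarith [h1 a, h2 a, ih]

lemma aux_min_one_le_rpow {t θ : ℝ} (ht : 0 ≤ t) (hθ0 : 0 < θ) (hθ1 : θ ≤ 1) :
    min 1 t ≤ t ^ θ := by
  rcases le_or_gt 1 t with h | h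
  · exact le_trans (min_le_left _ _) (Real.one_le_rpow h hθ0.le)
  · rcases eq_or_lt_of_le ht with h0 | h0
    · simp [← h0, Real.zero_rpow hθ0.ne']
    · calc min 1 t ≤ t := min_le_right _ _
        _ = t ^ (1:ℝ) := (Real.rpow_one t).symm
        _ ≤ t ^ θ := Real.rpow_le_rpow_of_exponent_ge h0 h.le hθ1

/-- Hölder bound for withDensity measure of a set. -/
lemma aux_holder {d : ℕ} (h : (Fin d → ℝ) → ℝ) {q : ℝ} (hq : 1 < q) (hh0 : ∀ x, 0 ≤ h x)
    (hmem : MemLp h (ENNReal.ofReal q) volume) {S : Set (Fin d → ℝ)} (hS : MeasurableSet S)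
    (hfin : volume S ≠ ⊤) :
    ((volume.withDensity (fun x => ENNReal.ofReal (h x))) S).toReal
      ≤ lqNorm h q * (volume S).toReal ^ (1 - 1/q) := by
  have hq0 : (0:ℝ) < q := lt_trans one_pos hq
  set p : ℝ := q / (q - 1) with hp
  have hpq : p.HolderConjugate q := (Real.HolderConjugate.conjExponent hq).symm
  have hSm : ((volume.withDensity (fun x => ENNReal.ofReal (h x))) S).toReal
      = ∫ x, S.indicator (fun _ => (1:ℝ)) x * h x := by
    rw [withDensity_apply _ hS]
    rw [← integral_eq_lintegral_of_nonneg_ae (Eventually.of_forall fun x => hh0 x)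
      hmem.1.restrict]
    rw [← integral_indicator hS]
    congr 1; ext x
    by_cases hx : x ∈ S <;> simp [hx]
  rw [hSm]
  have hf : MemLp (S.indicator (fun _ => (1:ℝ))) (ENNReal.ofReal p) volume :=
    memLp_indicator_const _ hS 1 (Or.inr hfin)
  have := integral_mul_le_Lp_mul_Lq_of_nonneg (μ := volume) hpq
    (Eventually.of_forall fun x => Set.indicator_nonneg (fun _ _ => zero_le_one) x)
    (Eventually.of_forall hh0) hf hmem
  refine le_trans this ?_
  have h1 : ∫ x, S.indicator (fun _ => (1:ℝ)) x ^ p = (volume S).toReal := by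
    have : ∀ x, S.indicator (fun _ => (1:ℝ)) x ^ p = S.indicator (fun _ => (1:ℝ)) x := by
      intro x
      by_cases hx : x ∈ S <;>
        simp [hx, Real.one_rpow, Real.zero_rpow hpq.pos.ne']
    rw [show (fun x => S.indicator (fun _ => (1:ℝ)) x ^ p) = S.indicator (fun _ => (1:ℝ))
      from funext this]
    rw [integral_indicator_const _ hS]; simp [measureReal_def]
  have h2 : ∫ x, h x ^ q = ∫ x, |h x| ^ q := by
    congr 1; ext x; rw [abs_of_nonneg (hh0 x)]
  rw [h1, h2]
  have h3 : 1 / p = 1 - 1 / q := by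
    rw [hp]; field_simp
  rw [h3, mul_comm]
  rfl

section moreHelpers
variable {d : ℕ}

lemma aux_lip_holder {θ ε : ℝ} (hθ0 : 0 < θ) (hθ1 : θ ≤ 1) (hε : 0 < ε)
    (f : (Fin d → ℝ) → ℝ) (hb0 : ∀ x, 0 ≤ f x) (hb1 : ∀ x, f x ≤ 1)
    (hlip : ∀ x y, |f x - f y| ≤ dist x y / ε) (x y : Fin d → ℝ) :
    |f x - f y| ≤ ε ^ (-θ) * ‖x - y‖ ^ θ := by
  have h1 : |f x - f y| ≤ min 1 (‖x - y‖ / ε) := by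
    refine le_min (abs_sub_le_iff.mpr ⟨?_, ?_⟩) ?_
    · linarith [hb0 y, hb1 x]
    · linarith [hb0 x, hb1 y]
    · simpa [dist_eq_norm] using hlip x y
  refine h1.trans ?_
  have h2 : min 1 (‖x - y‖ / ε) ≤ (‖x - y‖ / ε) ^ θ :=
    aux_min_one_le_rpow (by positivity) hθ0 hθ1
  refine h2.trans_eq ?_
  rw [Real.div_rpow (norm_nonneg _) hε.le, div_eq_mul_inv, mul_comm,
    ← Real.rpow_neg hε.le]

lemma aux_holderNorm_le {θ ε : ℝ} (hθ0 : 0 < θ) (hθ1 : θ ≤ 1) (hε : 0 < ε)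
    (f : (Fin d → ℝ) → ℝ) (hb0 : ∀ x, 0 ≤ f x) (hb1 : ∀ x, f x ≤ 1)
    (hhol : ∀ x y, |f x - f y| ≤ ε ^ (-θ) * ‖x - y‖ ^ θ) :
    holderNorm d θ f ≤ 1 + ε ^ (-θ) := by
  have hε' : (0:ℝ) ≤ ε ^ (-θ) := Real.rpow_nonneg hε.le _
  refine add_le_add (Real.iSup_le (fun x => ?_) zero_le_one)
    (Real.iSup_le (fun p => ?_) hε')
  · rw [abs_of_nonneg (hb0 _)]; exact hb1 _
  · by_cases hp : p.1.1 = p.2.1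
    · rw [if_pos hp]; exact hε'
    · rw [if_neg hp]
      have hne : p.1.1 - p.2.1 ≠ 0 := sub_ne_zero.mpr hp
      have hnorm : (0:ℝ) < ‖p.1.1 - p.2.1‖ ^ θ :=
        Real.rpow_pos_of_pos (norm_pos_iff.mpr hne) _
      rw [div_le_iff₀ hnorm]
      exact hhol _ _

end moreHelpers

lemma aux_final (dd : ℝ) (hdd : 1 ≤ dd) (lq C τ θ s : ℝ) (n : ℕ)
    (hlq : 0 ≤ lq) (hC : 0 < C) (hτ : 0 < τ) (hθ0 : 0 < θ) (hθ1 : θ ≤ 1)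
    (hs0 : 0 < s) (hs1 : s ≤ 1) :
    lq * (2 * dd * Real.exp (-(τ / (1 + s)) * n)) ^ s
      + C * Real.exp (-τ * n) * (1 + Real.exp (-(τ / (1 + s)) * n) ^ (-θ))
    ≤ (4 * dd * lq + 2 * C) * Real.exp (-(s * τ / (1 + s)) * n) := by
  have h1s : (0:ℝ) < 1 + s := by linarith
  set ε := Real.exp (-(τ / (1 + s)) * n) with hεdef
  have hε0 : 0 < ε := Real.exp_pos _
  have hε1 : ε ≤ 1 := by
    rw [hεdef, Real.exp_le_one_iff]
    have : 0 ≤ τ / (1 + s) * n := by positivity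
    linarith
  set X := Real.exp (-(s * τ / (1 + s)) * n) with hXdef
  have hX0 : 0 < X := Real.exp_pos _
  have hterm1 : lq * (2 * dd * ε) ^ s ≤ 2 * dd * lq * X := by
    have e1 : (2 * dd * ε) ^ s = (2 * dd) ^ s * ε ^ s :=
      Real.mul_rpow (by positivity) hε0.le
    have e2 : (2 * dd) ^ s ≤ 2 * dd := by
      calc (2 * dd) ^ s ≤ (2 * dd) ^ (1:ℝ) :=
            Real.rpow_le_rpow_of_exponent_le (by linarith) hs1
        _ = 2 * dd := Real.rpow_one _
    have e3 : ε ^ s = X := by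
      have heq : -(τ / (1 + s)) * (n:ℝ) * s = -(s * τ / (1 + s)) * n := by ring
      rw [hεdef, ← Real.exp_mul, hXdef, heq]
    rw [e1, e3]
    have : (2 * dd) ^ s * X ≤ (2 * dd) * X := by
      exact mul_le_mul_of_nonneg_right e2 hX0.le
    calc lq * ((2 * dd) ^ s * X) ≤ lq * (2 * dd * X) :=
          mul_le_mul_of_nonneg_left this hlq
      _ = 2 * dd * lq * X := by ring
  have hterm2 : C * Real.exp (-τ * n) * (1 + ε ^ (-θ)) ≤ 2 * C * X := by
    have e4 : ε ^ (-θ) ≤ ε ^ (-1:ℝ) :=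
      Real.rpow_le_rpow_of_exponent_ge hε0 hε1 (by linarith)
    have e5 : (1:ℝ) ≤ ε ^ (-θ) := by
      calc (1:ℝ) = ε ^ (0:ℝ) := (Real.rpow_zero ε).symm
        _ ≤ ε ^ (-θ) := Real.rpow_le_rpow_of_exponent_ge hε0 hε1 (by linarith)
    have e6 : ε ^ (-1:ℝ) = Real.exp (τ / (1 + s) * n) := by
      rw [Real.rpow_neg_one, hεdef, ← Real.exp_neg]
      ring_nf
    have e7 : 1 + ε ^ (-θ) ≤ 2 * Real.exp (τ / (1 + s) * n) := by
      have := e4.trans_eq e6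
      nlinarith [e5, e4.trans_eq e6]
    have e8 : Real.exp (-τ * n) * Real.exp (τ / (1 + s) * n) = X := by
      have heq : -τ * (n:ℝ) + τ / (1 + s) * n = -(s * τ / (1 + s)) * n := by
        field_simp
        ring
      rw [← Real.exp_add, hXdef, heq]
    calc C * Real.exp (-τ * n) * (1 + ε ^ (-θ))
        ≤ C * Real.exp (-τ * n) * (2 * Real.exp (τ / (1 + s) * n)) := by
          refine mul_le_mul_of_nonneg_left e7 (by positivity)
      _ = 2 * C * (Real.exp (-τ * n) * Real.exp (τ / (1 + s) * n)) := by ring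
      _ = 2 * C * X := by rw [e8]
  have hfin : 2 * dd * lq * X + 2 * C * X ≤ (4 * dd * lq + 2 * C) * X := by
    nlinarith [mul_nonneg (mul_nonneg (by linarith : (0:ℝ) ≤ 2 * dd) hlq) hX0.le]
  linarith

lemma aux_abs_max_zero (aa bb : ℝ) : |max 0 aa - max 0 bb| ≤ |aa - bb| := by
  rw [max_comm 0 aa, max_comm 0 bb]; exact abs_max_sub_max_le_abs _ _ _

lemma aux_abs_min_one (aa bb : ℝ) : |min 1 aa - min 1 bb| ≤ |aa - bb| := by
  calc |min 1 aa - min 1 bb| ≤ max |1 - 1| |aa - bb| := abs_min_sub_min_le_max _ _ _ _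
    _ = |aa - bb| := by simp

set_option maxHeartbeats 1000000 in
/-- **Exponential decay of correlations for hyperrectangles (Lemma 2.3).**
Under Conditions I and II, for any hyperrectangle `R = Icc a b ⊆ [0,1]^d`, any measurable
`F ⊆ [0,1]^d` and any `n ≥ 0`,
`|μ(R ∩ T^{-n}F) − μ(R)μ(F)| ≤ c₁ μ(F) e^{-τ₁ n}`, where `c₁ = 4d|h|_q + 2C` and
`τ₁ = sτ/(1+s)`, `s = 1 − 1/q`. -/
theorem stmt4 (d : ℕ) (hd : 1 ≤ d)
    (T : (Fin d → ℝ) → (Fin d → ℝ)) (μ : Measure (Fin d → ℝ)) [IsProbabilityMeasure μ]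
    (hT : MeasurePreserving T μ μ) (hTmaps : MapsTo T (unitCube d) (unitCube d))
    (hμcube : μ (unitCube d) = 1)
    (θ τ C : ℝ) (hI : CondI T μ θ τ C)
    (q : ℝ) (h : (Fin d → ℝ) → ℝ) (hII : CondII μ h q)
    (a b : Fin d → ℝ) (hab : Set.Icc a b ⊆ unitCube d)
    (F : Set (Fin d → ℝ)) (hF : MeasurableSet F) (hFc : F ⊆ unitCube d) (n : ℕ) :
    |(μ (Set.Icc a b ∩ T^[n] ⁻¹' F)).toReal - (μ (Set.Icc a b)).toReal * (μ F).toReal| ≤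
      (4 * d * lqNorm h q + 2 * C) * (μ F).toReal *
        Real.exp (-((1 - 1 / q) * τ / (1 + (1 - 1 / q))) * n) := by
  classical
  obtain ⟨hθ0, hθ1, hτ0, hC0, hcorr⟩ := hI
  obtain ⟨hq1, hh0, hμeq, hhmem⟩ := hII
  have hq0 : (0:ℝ) < q := lt_trans one_pos hq1
  have hmF0 : 0 ≤ (μ F).toReal := ENNReal.toReal_nonneg
  have hlq0 : 0 ≤ lqNorm h q :=
    Real.rpow_nonneg (integral_nonneg fun x => Real.rpow_nonneg (abs_nonneg _) _) _
  set s : ℝ := 1 - 1/q with hsdef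
  have hs0 : 0 < s := by
    have : 1/q < 1 := by rw [div_lt_one hq0]; exact hq1
    rw [hsdef]; linarith
  have hs1 : s ≤ 1 := by
    have : 0 ≤ 1/q := by positivity
    rw [hsdef]; linarith
  have h1s : (0:ℝ) < 1 + s := by linarith
  set X : ℝ := Real.exp (-(s * τ / (1 + s)) * n) with hXdef
  have hX0 : 0 < X := Real.exp_pos _
  have hRHS0 : 0 ≤ (4 * d * lqNorm h q + 2 * C) * (μ F).toReal * X := by
    have h1 : (0:ℝ) ≤ 4 * d * lqNorm h q :=
      mul_nonneg (by positivity) hlq0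
    have h2 : (0:ℝ) ≤ 4 * d * lqNorm h q + 2 * C := by linarith
    exact mul_nonneg (mul_nonneg h2 hmF0) hX0.le
  by_cases hab' : a ≤ b
  swap
  · rw [Set.Icc_eq_empty hab']
    simpa using hRHS0
  -- nondegenerate case
  set ε : ℝ := Real.exp (-(τ / (1 + s)) * n) with hεdef
  have hε0 : 0 < ε := Real.exp_pos _
  have hcubem : MeasurableSet (unitCube d) :=
    (measurableSet_Icc : MeasurableSet (Set.Icc (0 : Fin d → ℝ) 1))
  have hμcubec : μ (unitCube d)ᶜ = 0 := by
    rw [measure_compl hcubem (measure_ne_top μ _), measure_univ, hμcube, tsub_self]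
  have hamem : a ∈ unitCube d := hab ⟨le_refl a, hab'⟩
  have hbmem : b ∈ unitCube d := hab ⟨hab', le_refl b⟩
  have ha0 : ∀ i, 0 ≤ a i := fun i => by simpa using hamem.1 i
  have hb1 : ∀ i, b i ≤ 1 := fun i => by simpa using hbmem.2 i
  have habi : ∀ i, a i ≤ b i := fun i => hab' i
  set R : Set (Fin d → ℝ) := Set.Icc a b with hRdef
  have hRm : MeasurableSet R := measurableSet_Icc
  have hRne : R.Nonempty := Set.nonempty_Icc.mpr hab'
  set Ao : Fin d → ℝ := fun i => max (a i - ε) 0 with hAodef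
  set Bo : Fin d → ℝ := fun i => min (b i + ε) 1 with hBodef
  set Rout : Set (Fin d → ℝ) := Set.Icc (fun i => a i - ε) (fun i => b i + ε) with hRoutdef
  set RoutC : Set (Fin d → ℝ) := Set.Icc Ao Bo with hRoutCdef
  set Rin : Set (Fin d → ℝ) := Set.Icc (fun i => a i + ε) (fun i => b i - ε) with hRindef
  have hRoutCm : MeasurableSet RoutC := measurableSet_Icc
  have hRinm : MeasurableSet Rin := measurableSet_Icc
  have hAoBo : Ao ≤ Bo := fun i => by
    have h1 := habi i; have h2 := ha0 i; have h3 := hb1 i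
    rw [hAodef, hBodef]
    refine max_le (le_min (by linarith) (by linarith)) (le_min (by linarith) (by linarith))
  have hsubout : R ⊆ RoutC := by
    refine Set.Icc_subset_Icc (fun i => ?_) (fun i => ?_)
    · rw [hAodef]; exact max_le (by linarith [hε0]) (ha0 i)
    · rw [hBodef]; exact le_min (by linarith [hε0]) (hb1 i)
  have hsubin : Rin ⊆ R := by
    refine Set.Icc_subset_Icc (fun i => by simp; linarith [hε0]) (fun i => by simp; linarith [hε0])
  -- volume bounds
  have hvoutfin : volume RoutC < ⊤ := isCompact_Icc.measure_lt_top
  have hvRfin : volume R < ⊤ := isCompact_Icc.measure_lt_top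
  have hvolout : (volume (RoutC \ R)).toReal ≤ 2 * d * ε := by
    have hsplit := measure_inter_add_diff (μ := volume) RoutC hRm
    rw [Set.inter_eq_right.mpr hsubout] at hsplit
    have hdf : volume (RoutC \ R) ≠ ⊤ :=
      ((measure_mono Set.diff_subset).trans_lt hvoutfin).ne
    have heq : (volume R).toReal + (volume (RoutC \ R)).toReal = (volume RoutC).toReal := by
      rw [← ENNReal.toReal_add hvRfin.ne hdf, hsplit]
    have hvout : (volume RoutC).toReal = ∏ i, (Bo i - Ao i) :=
      Real.volume_Icc_pi_toReal hAoBo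
    have hvR : (volume R).toReal = ∏ i, (b i - a i) :=
      Real.volume_Icc_pi_toReal hab'
    have hprod := aux_prod_sub Finset.univ (fun i => Bo i - Ao i) (fun i => b i - a i)
      (fun i => sub_nonneg.mpr (habi i))
      (fun i => by
        have h1 : Ao i ≤ a i := max_le (by linarith [hε0]) (ha0 i)
        have h2 : b i ≤ Bo i := le_min (by linarith [hε0]) (hb1 i)
        linarith)
      (fun i => by
        have h1 : (0:ℝ) ≤ Ao i := le_max_right _ _
        have h2 : Bo i ≤ 1 := min_le_right _ _
        linarith)
    have hsum : ∑ i : Fin d, ((Bo i - Ao i) - (b i - a i)) ≤ ∑ _i : Fin d, 2 * ε := by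
      refine Finset.sum_le_sum fun i _ => ?_
      have h1 : Bo i ≤ b i + ε := min_le_left _ _
      have h2 : a i - ε ≤ Ao i := le_max_left _ _
      linarith
    rw [Finset.sum_const, Finset.card_univ, Fintype.card_fin, nsmul_eq_mul] at hsum
    have : (volume (RoutC \ R)).toReal = ∏ i, (Bo i - Ao i) - ∏ i, (b i - a i) := by
      rw [← hvout, ← hvR]; linarith
    rw [this]
    calc (∏ i, (Bo i - Ao i)) - ∏ i, (b i - a i)
        ≤ ∑ i : Fin d, ((Bo i - Ao i) - (b i - a i)) := hprod
      _ ≤ (d:ℝ) * (2 * ε) := hsum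
      _ = 2 * d * ε := by ring
  have hvolin : (volume (R \ Rin)).toReal ≤ 2 * d * ε := by
    have hsplit := measure_inter_add_diff (μ := volume) R hRinm
    rw [Set.inter_eq_right.mpr hsubin] at hsplit
    have hdf : volume (R \ Rin) ≠ ⊤ :=
      ((measure_mono Set.diff_subset).trans_lt hvRfin).ne
    have hvinfin : volume Rin ≠ ⊤ := ((measure_mono hsubin).trans_lt hvRfin).ne
    have heq : (volume Rin).toReal + (volume (R \ Rin)).toReal = (volume R).toReal := by
      rw [← ENNReal.toReal_add hvinfin hdf, hsplit]
    have hvR : (volume R).toReal = ∏ i, (b i - a i) :=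
      Real.volume_Icc_pi_toReal hab'
    have hvin : (volume Rin).toReal = ∏ i, max (b i - a i - 2*ε) 0 := by
      rw [hRindef, Real.volume_Icc_pi, ENNReal.toReal_prod]
      refine Finset.prod_congr rfl fun i _ => ?_
      rw [ENNReal.toReal_ofReal']
      congr 1
      ring
    have hprod := aux_prod_sub Finset.univ (fun i => b i - a i) (fun i => max (b i - a i - 2*ε) 0)
      (fun i => le_max_right _ _)
      (fun i => by
        show max (b i - a i - 2*ε) 0 ≤ b i - a i
        exact max_le (by linarith [hε0]) (sub_nonneg.mpr (habi i)))
      (fun i => by have := hb1 i; have := ha0 i; linarith)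
    have hsum : ∑ i : Fin d, ((b i - a i) - max (b i - a i - 2*ε) 0) ≤ ∑ _i : Fin d, 2 * ε := by
      refine Finset.sum_le_sum fun i _ => ?_
      have h1 : b i - a i - 2*ε ≤ max (b i - a i - 2*ε) 0 := le_max_left _ _
      linarith
    rw [Finset.sum_const, Finset.card_univ, Fintype.card_fin, nsmul_eq_mul] at hsum
    have : (volume (R \ Rin)).toReal = ∏ i, (b i - a i) - ∏ i, max (b i - a i - 2*ε) 0 := by
      rw [← hvR, ← hvin]; linarith
    rw [this]
    calc (∏ i, (b i - a i)) - ∏ i, max (b i - a i - 2*ε) 0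
        ≤ ∑ i : Fin d, ((b i - a i) - max (b i - a i - 2*ε) 0) := hprod
      _ ≤ (d:ℝ) * (2 * ε) := hsum
      _ = 2 * d * ε := by ring
  -- measure error bounds
  have hEnn : (0:ℝ) ≤ 2 * d * ε := by positivity
  have hrpow : ∀ S : Set (Fin d → ℝ), MeasurableSet S → volume S ≠ ⊤ →
      (volume S).toReal ≤ 2 * d * ε → (μ S).toReal ≤ lqNorm h q * (2*d*ε)^s := by
    intro S hSm hSf hSv
    have h1 := aux_holder h hq1 hh0 hhmem hSm hSf
    rw [← hμeq, ← hsdef] at h1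
    refine h1.trans ?_
    refine mul_le_mul_of_nonneg_left ?_ hlq0
    exact Real.rpow_le_rpow ENNReal.toReal_nonneg hSv hs0.le
  have hμout : (μ RoutC).toReal ≤ (μ R).toReal + lqNorm h q * (2*d*ε)^s := by
    have hsplit := measure_inter_add_diff (μ := μ) RoutC hRm
    rw [Set.inter_eq_right.mpr hsubout] at hsplit
    have heq : (μ R).toReal + (μ (RoutC \ R)).toReal = (μ RoutC).toReal := by
      rw [← ENNReal.toReal_add (measure_ne_top μ _) (measure_ne_top μ _), hsplit]
    have h1 := hrpow (RoutC \ R) (hRoutCm.diff hRm)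
      ((measure_mono Set.diff_subset).trans_lt hvoutfin).ne hvolout
    linarith
  have hμin : (μ R).toReal ≤ (μ Rin).toReal + lqNorm h q * (2*d*ε)^s := by
    have hsplit := measure_inter_add_diff (μ := μ) R hRinm
    rw [Set.inter_eq_right.mpr hsubin] at hsplit
    have heq : (μ Rin).toReal + (μ (R \ Rin)).toReal = (μ R).toReal := by
      rw [← ENNReal.toReal_add (measure_ne_top μ _) (measure_ne_top μ _), hsplit]
    have h1 := hrpow (R \ Rin) (hRm.diff hRinm)
      ((measure_mono Set.diff_subset).trans_lt hvRfin).ne hvolin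
    linarith
  -- the observable g
  set g : (Fin d → ℝ) → ℝ := F.indicator (fun _ => 1) with hgdef
  have hg0 : ∀ x, 0 ≤ g x := fun x => Set.indicator_nonneg (fun _ _ => zero_le_one) x
  have hg1 : ∀ x, g x ≤ 1 := fun x => by
    by_cases hx : x ∈ F <;> simp [hgdef, hx]
  have hgmeas : Measurable g := measurable_const.indicator hF
  have hgint : Integrable g μ := (integrable_const 1).indicator hF
  have hgI : ∫ x, g x ∂μ = (μ F).toReal := by
    rw [hgdef, integral_indicator_const _ hF, smul_eq_mul, mul_one, measureReal_def]
  have hgabs : ∫ x, |g x| ∂μ = (μ F).toReal := by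
    rw [← hgI]
    refine integral_congr_ae (Eventually.of_forall fun x => abs_of_nonneg (hg0 x))
  have hTn : Measurable (T^[n]) := hT.measurable.iterate n
  have hpre : MeasurableSet (T^[n] ⁻¹' F) := hTn hF
  -- outer cutoff function fp
  set fp : (Fin d → ℝ) → ℝ := fun x => max 0 (1 - infDist x R / ε) with hfpdef
  have hfp0 : ∀ x, 0 ≤ fp x := fun x => le_max_left _ _
  have hfp1 : ∀ x, fp x ≤ 1 := fun x => by
    have h1 : 0 ≤ infDist x R / ε := div_nonneg Metric.infDist_nonneg hε0.le
    exact max_le zero_le_one (by linarith)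
  have hfpR : ∀ x ∈ R, fp x = 1 := fun x hx => by
    rw [hfpdef]
    simp [Metric.infDist_zero_of_mem hx]
  have hfplip : ∀ x y, |fp x - fp y| ≤ dist x y / ε := by
    intro x y
    refine (aux_abs_max_zero _ _).trans ?_
    have e1 : (1 - infDist x R / ε) - (1 - infDist y R / ε)
        = (infDist y R - infDist x R) / ε := by ring
    rw [e1, abs_div, abs_of_pos hε0, abs_sub_comm]
    have h3 : |infDist x R - infDist y R| ≤ dist x y := by
      rw [abs_sub_le_iff]
      constructor
      · linarith [Metric.infDist_le_infDist_add_dist (x := x) (y := y) (s := R)]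
      · have := Metric.infDist_le_infDist_add_dist (x := y) (y := x) (s := R)
        rw [dist_comm y x] at this
        linarith
    exact (div_le_div_iff_of_pos_right hε0).mpr h3
  have hfpsupp : ∀ x, fp x ≤ Rout.indicator (fun _ => 1) x := by
    intro x
    by_cases hx : x ∈ Rout
    · rw [Set.indicator_of_mem hx]; exact hfp1 x
    · rw [Set.indicator_of_notMem hx]
      have hout : ε ≤ infDist x R := by
        by_contra hlt
        push_neg at hlt
        obtain ⟨y, hyR, hyd⟩ := (Metric.infDist_lt_iff hRne).mp hlt
        refine hx ⟨fun i => ?_, fun i => ?_⟩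
        · show a i - ε ≤ x i
          have h4 : |x i - y i| ≤ dist x y := by
            rw [← Real.dist_eq]; exact dist_le_pi_dist x y i
          have h5 := abs_le.mp (h4.trans hyd.le)
          have h6 := hyR.1 i
          linarith
        · show x i ≤ b i + ε
          have h4 : |x i - y i| ≤ dist x y := by
            rw [← Real.dist_eq]; exact dist_le_pi_dist x y i
          have h5 := abs_le.mp (h4.trans hyd.le)
          have h6 := hyR.2 i
          linarith
      have h7 : 1 ≤ infDist x R / ε := (one_le_div hε0).mpr hout
      exact max_le le_rfl (by linarith)
  have hfpcont : Continuous fp :=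
    continuous_const.max (continuous_const.sub ((Metric.continuous_infDist_pt R).div_const ε))
  have hfpmeas : Measurable fp := hfpcont.measurable
  have hfpint : Integrable fp μ := by
    refine Integrable.mono' (integrable_const 1) hfpmeas.aestronglyMeasurable
      (Eventually.of_forall fun x => ?_)
    rw [Real.norm_eq_abs, abs_of_nonneg (hfp0 x)]
    exact hfp1 x
  have hfpgint : Integrable (fun x => fp x * g (T^[n] x)) μ := by
    refine Integrable.mono' (integrable_const 1)
      ((hfpmeas.mul (hgmeas.comp hTn)).aestronglyMeasurable)
      (Eventually.of_forall fun x => ?_)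
    rw [Real.norm_eq_abs, abs_of_nonneg (mul_nonneg (hfp0 x) (hg0 _))]
    calc fp x * g (T^[n] x) ≤ 1 * 1 :=
      mul_le_mul (hfp1 x) (hg1 _) (hg0 _) zero_le_one
    _ = 1 := by norm_num
  -- inner cutoff function fm
  set fm : (Fin d → ℝ) → ℝ := fun x => min 1 (infDist x Rᶜ / ε) with hfmdef
  have hRcne : Rᶜ.Nonempty := by
    refine ⟨fun _ => 2, fun hmem => ?_⟩
    have h1 := hmem.2 ⟨0, hd⟩
    have h2 := hb1 ⟨0, hd⟩
    have : (2:ℝ) ≤ b ⟨0, hd⟩ := h1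
    linarith
  have hfm0 : ∀ x, 0 ≤ fm x := fun x =>
    le_min zero_le_one (div_nonneg Metric.infDist_nonneg hε0.le)
  have hfm1 : ∀ x, fm x ≤ 1 := fun x => min_le_left _ _
  have hfmlip : ∀ x y, |fm x - fm y| ≤ dist x y / ε := by
    intro x y
    refine (aux_abs_min_one _ _).trans ?_
    have e1 : infDist x Rᶜ / ε - infDist y Rᶜ / ε = (infDist x Rᶜ - infDist y Rᶜ) / ε := by
      ring
    rw [e1, abs_div, abs_of_pos hε0]
    have h3 : |infDist x Rᶜ - infDist y Rᶜ| ≤ dist x y := by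
      rw [abs_sub_le_iff]
      constructor
      · linarith [Metric.infDist_le_infDist_add_dist (x := x) (y := y) (s := Rᶜ)]
      · have := Metric.infDist_le_infDist_add_dist (x := y) (y := x) (s := Rᶜ)
        rw [dist_comm y x] at this
        linarith
    exact (div_le_div_iff_of_pos_right hε0).mpr h3
  have hfmle : ∀ x, fm x ≤ R.indicator (fun _ => 1) x := by
    intro x
    by_cases hx : x ∈ R
    · rw [Set.indicator_of_mem hx]; exact hfm1 x
    · rw [Set.indicator_of_notMem hx]
      have : infDist x Rᶜ = 0 := Metric.infDist_zero_of_mem hx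
      rw [hfmdef]
      simp [this]
  have hfmge : ∀ x, Rin.indicator (fun _ => 1) x ≤ fm x := by
    intro x
    by_cases hx : x ∈ Rin
    · rw [Set.indicator_of_mem hx]
      have hout : ε ≤ infDist x Rᶜ := by
        by_contra hlt
        push_neg at hlt
        obtain ⟨y, hyRc, hyd⟩ := (Metric.infDist_lt_iff hRcne).mp hlt
        refine hyRc ⟨fun i => ?_, fun i => ?_⟩
        · show a i ≤ y i
          have h4 : |x i - y i| ≤ dist x y := by
            rw [← Real.dist_eq]; exact dist_le_pi_dist x y i
          have h5 := abs_le.mp (h4.trans hyd.le)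
          have h6 : a i + ε ≤ x i := hx.1 i
          linarith
        · show y i ≤ b i
          have h4 : |x i - y i| ≤ dist x y := by
            rw [← Real.dist_eq]; exact dist_le_pi_dist x y i
          have h5 := abs_le.mp (h4.trans hyd.le)
          have h6 : x i ≤ b i - ε := hx.2 i
          linarith
      exact le_min le_rfl ((one_le_div hε0).mpr hout)
    · rw [Set.indicator_of_notMem hx]
      exact hfm0 x
  have hfmcont : Continuous fm :=
    continuous_const.min ((Metric.continuous_infDist_pt Rᶜ).div_const ε)
  have hfmmeas : Measurable fm := hfmcont.measurable
  have hfmint : Integrable fm μ := by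
    refine Integrable.mono' (integrable_const 1) hfmmeas.aestronglyMeasurable
      (Eventually.of_forall fun x => ?_)
    rw [Real.norm_eq_abs, abs_of_nonneg (hfm0 x)]
    exact hfm1 x
  have hfmgint : Integrable (fun x => fm x * g (T^[n] x)) μ := by
    refine Integrable.mono' (integrable_const 1)
      ((hfmmeas.mul (hgmeas.comp hTn)).aestronglyMeasurable)
      (Eventually.of_forall fun x => ?_)
    rw [Real.norm_eq_abs, abs_of_nonneg (mul_nonneg (hfm0 x) (hg0 _))]
    calc fm x * g (T^[n] x) ≤ 1 * 1 :=
      mul_le_mul (hfm1 x) (hg1 _) (hg0 _) zero_le_one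
    _ = 1 := by norm_num
  -- integral comparisons
  have hindint : Integrable ((R ∩ T^[n] ⁻¹' F).indicator (fun _ => (1:ℝ))) μ :=
    (integrable_const 1).indicator (hRm.inter hpre)
  have hindI : ∫ x, (R ∩ T^[n] ⁻¹' F).indicator (fun _ => (1:ℝ)) x ∂μ
      = (μ (R ∩ T^[n] ⁻¹' F)).toReal := by
    rw [integral_indicator_const _ (hRm.inter hpre), smul_eq_mul, mul_one, measureReal_def]
  have hup1 : (μ (R ∩ T^[n] ⁻¹' F)).toReal ≤ ∫ x, fp x * g (T^[n] x) ∂μ := by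
    rw [← hindI]
    refine integral_mono hindint hfpgint fun x => ?_
    by_cases hx : x ∈ R ∩ T^[n] ⁻¹' F
    · rw [Set.indicator_of_mem hx]
      have h1 : fp x = 1 := hfpR x hx.1
      have h2 : g (T^[n] x) = 1 := by
        rw [hgdef, Set.indicator_of_mem (Set.mem_preimage.mp hx.2)]
      show (1:ℝ) ≤ fp x * g (T^[n] x)
      rw [h1, h2]; norm_num
    · rw [Set.indicator_of_notMem hx]
      exact mul_nonneg (hfp0 x) (hg0 _)
  have hlow1 : ∫ x, fm x * g (T^[n] x) ∂μ ≤ (μ (R ∩ T^[n] ⁻¹' F)).toReal := by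
    rw [← hindI]
    refine integral_mono hfmgint hindint fun x => ?_
    by_cases hx : x ∈ R ∩ T^[n] ⁻¹' F
    · rw [Set.indicator_of_mem hx]
      show fm x * g (T^[n] x) ≤ 1
      calc fm x * g (T^[n] x) ≤ 1 * 1 :=
        mul_le_mul (hfm1 x) (hg1 _) (hg0 _) zero_le_one
      _ = 1 := by norm_num
    · rw [Set.indicator_of_notMem hx]
      show fm x * g (T^[n] x) ≤ 0
      rcases Classical.em (x ∈ R) with hxR | hxR
      · have hxF : T^[n] x ∉ F := fun hc => hx ⟨hxR, hc⟩
        have : g (T^[n] x) = 0 := by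
          rw [hgdef, Set.indicator_of_notMem (fun hc => hxF (Set.mem_preimage.mpr hc))]
        rw [this, mul_zero]
      · have : fm x = 0 := by
          have h0 := hfmle x
          rw [Set.indicator_of_notMem hxR] at h0
          exact le_antisymm h0 (hfm0 x)
        rw [this, zero_mul]
  have hup2 : ∫ x, fp x ∂μ ≤ (μ RoutC).toReal := by
    have e2 : μ Rout = μ RoutC := by
      have h1 := measure_inter_add_diff (μ := μ) Rout hcubem
      have h2 : μ (Rout \ unitCube d) = 0 :=
        measure_mono_null (fun x hx => hx.2) hμcubec
      have hA : ((fun i => a i - ε) ⊔ (0 : Fin d → ℝ)) = Ao := by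
        funext i
        simp only [Pi.sup_apply, Pi.zero_apply, hAodef]
      have hB : ((fun i => b i + ε) ⊓ (1 : Fin d → ℝ)) = Bo := by
        funext i
        simp only [Pi.inf_apply, Pi.one_apply, hBodef]
      have h3 : Rout ∩ unitCube d = RoutC := by
        rw [hRoutdef, hRoutCdef,
          show unitCube d = Set.Icc (0 : Fin d → ℝ) 1 from rfl, Set.Icc_inter_Icc, hA, hB]
      rw [h3, h2, add_zero] at h1
      exact h1.symm
    have e1 : ∫ x, Rout.indicator (fun _ => (1:ℝ)) x ∂μ = (μ RoutC).toReal := by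
      rw [integral_indicator_const _ (measurableSet_Icc : MeasurableSet Rout),
        smul_eq_mul, mul_one, measureReal_def, e2]
    rw [← e1]
    exact integral_mono hfpint
      ((integrable_const 1).indicator (measurableSet_Icc : MeasurableSet Rout)) hfpsupp
  have hlow2 : (μ Rin).toReal ≤ ∫ x, fm x ∂μ := by
    have e1 : ∫ x, Rin.indicator (fun _ => (1:ℝ)) x ∂μ = (μ Rin).toReal := by
      rw [integral_indicator_const _ hRinm, smul_eq_mul, mul_one, measureReal_def]
    rw [← e1]
    exact integral_mono ((integrable_const 1).indicator hRinm) hfmint hfmge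
  -- correlation bounds
  have hfphol : ∀ x y, |fp x - fp y| ≤ ε ^ (-θ) * ‖x - y‖ ^ θ :=
    aux_lip_holder hθ0 hθ1 hε0 fp hfp0 hfp1 hfplip
  have hfmhol : ∀ x y, |fm x - fm y| ≤ ε ^ (-θ) * ‖x - y‖ ^ θ :=
    aux_lip_holder hθ0 hθ1 hε0 fm hfm0 hfm1 hfmlip
  have hHNp : holderNorm d θ fp ≤ 1 + ε ^ (-θ) :=
    aux_holderNorm_le hθ0 hθ1 hε0 fp hfp0 hfp1 hfphol
  have hHNm : holderNorm d θ fm ≤ 1 + ε ^ (-θ) :=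
    aux_holderNorm_le hθ0 hθ1 hε0 fm hfm0 hfm1 hfmhol
  have hcp := hcorr fp g hfpmeas ⟨ε ^ (-θ), fun x _ y _ => hfphol x y⟩ hgint n
  have hcm := hcorr fm g hfmmeas ⟨ε ^ (-θ), fun x _ y _ => hfmhol x y⟩ hgint n
  rw [hgI, hgabs] at hcp hcm
  have hCE : 0 ≤ C * Real.exp (-τ * n) := by positivity
  have hKp : C * Real.exp (-τ * n) * holderNorm d θ fp * (μ F).toReal
      ≤ C * Real.exp (-τ * n) * (1 + ε ^ (-θ)) * (μ F).toReal :=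
    mul_le_mul_of_nonneg_right (mul_le_mul_of_nonneg_left hHNp hCE) hmF0
  have hKm : C * Real.exp (-τ * n) * holderNorm d θ fm * (μ F).toReal
      ≤ C * Real.exp (-τ * n) * (1 + ε ^ (-θ)) * (μ F).toReal :=
    mul_le_mul_of_nonneg_right (mul_le_mul_of_nonneg_left hHNm hCE) hmF0
  -- combine
  have hup3 : (∫ x, fp x ∂μ) * (μ F).toReal
      ≤ (μ R).toReal * (μ F).toReal + (lqNorm h q * (2*d*ε)^s) * (μ F).toReal := by
    have h2 : ∫ x, fp x ∂μ ≤ (μ R).toReal + lqNorm h q * (2*d*ε)^s := hup2.trans hμout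
    nlinarith [hmF0]
  have hlow3 : (μ R).toReal * (μ F).toReal - (lqNorm h q * (2*d*ε)^s) * (μ F).toReal
      ≤ (∫ x, fm x ∂μ) * (μ F).toReal := by
    have h2 : (μ R).toReal - lqNorm h q * (2*d*ε)^s ≤ ∫ x, fm x ∂μ := by
      linarith [hlow2, hμin]
    nlinarith [hmF0]
  have hcp2 := (abs_le.mp hcp).2
  have hcm2 := (abs_le.mp hcm).1
  set B : ℝ := lqNorm h q * (2*d*ε)^s + C * Real.exp (-τ*n) * (1 + ε^(-θ)) with hBdef
  have habs : |(μ (R ∩ T^[n] ⁻¹' F)).toReal - (μ R).toReal * (μ F).toReal|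
      ≤ B * (μ F).toReal := by
    rw [abs_le]
    constructor
    · have hc1 : (∫ x, fm x ∂μ) * (μ F).toReal
          - C * Real.exp (-τ * n) * holderNorm d θ fm * (μ F).toReal
          ≤ ∫ x, fm x * g (T^[n] x) ∂μ := by linarith
      rw [hBdef]
      nlinarith [hlow1, hlow3, hKm, hc1]
    · have hc1 : ∫ x, fp x * g (T^[n] x) ∂μ ≤ (∫ x, fp x ∂μ) * (μ F).toReal
          + C * Real.exp (-τ * n) * holderNorm d θ fp * (μ F).toReal := by linarith
      rw [hBdef]
      nlinarith [hup1, hup3, hKp, hc1]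
  have hfinal := aux_final d (by exact_mod_cast hd) (lqNorm h q) C τ θ s n
    hlq0 hC0 hτ0 hθ0 hθ1 hs0 hs1
  rw [← hεdef, ← hXdef] at hfinal
  calc |(μ (R ∩ T^[n] ⁻¹' F)).toReal - (μ R).toReal * (μ F).toReal|
      ≤ B * (μ F).toReal := habs
    _ ≤ ((4 * d * lqNorm h q + 2 * C) * X) * (μ F).toReal := by
        refine mul_le_mul_of_nonneg_right ?_ hmF0
        rw [hBdef]
        exact hfinal
    _ = (4 * d * lqNorm h q + 2 * C) * (μ F).toReal * X := by ring
end

section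
/- Suppose ([0,1]^d, T, μ) satisfies Conditions II and V, with density h ∈ L^q(λ^d), s = 1 − 1/q, and set 𝒜 and constants β₂, K₂ from Condition V. Then there exists a constant c₃ > 0 such that for all integers 0 < m < n: μ(D(m,n)) ≤ c₃ n^{−6}, where D(m,n) = ∪_{i=0}^{m−1} T^{−i}(∪_{x∈𝒜} B(x, n^{−7/(sβ₂)})). -/
open MeasureTheory Filter Metric Set
open scoped ENNReal NNReal Topology Classical

/-- **Lemma 2.5(1).**
Under Conditions II and V, there exists `c₃ > 0` such that for all `0 < m < n`,
`μ(D(m,n)) ≤ c₃ n^{-6}`, where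
`D(m,n) = ⋃_{i=0}^{m-1} T^{-i}(⋃_{x∈𝒜} B(x, n^{-7/(sβ₂)}))` and `s = 1 − 1/q`. -/
theorem stmt7 (d : ℕ) (hd : 1 ≤ d) {ι : Type} [Countable ι]
    (T : (Fin d → ℝ) → (Fin d → ℝ)) (μ : Measure (Fin d → ℝ)) [IsProbabilityMeasure μ]
    (hT : MeasurePreserving T μ μ) (hTmaps : MapsTo T (unitCube d) (unitCube d))
    (hμcube : μ (unitCube d) = 1)
    (q : ℝ) (h : (Fin d → ℝ) → ℝ) (hII : CondII μ h q)
    (U : ι → Set (Fin d → ℝ))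
    (A : Set (Fin d → ℝ)) (β₁ β₂ K₂ : ℝ) (hV : CondV U A β₁ β₂ K₂) :
    ∃ c₃ : ℝ, 0 < c₃ ∧ ∀ m n : ℕ, 0 < m → m < n →
      (μ (⋃ i ∈ Finset.range m,
          T^[i] ⁻¹' (⋃ x ∈ A,
            Metric.ball x ((n : ℝ) ^ (-(7 / ((1 - 1 / q) * β₂))))))).toReal ≤
        c₃ / (n : ℝ) ^ 6 := by
  
  obtain ⟨hq, hh0, hμeq, hmem⟩ := hII
  obtain ⟨hAsub, hβ₁, hβ₂, hK₂, hVmain⟩ := hV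
  have hq0 : (0:ℝ) < q := lt_trans one_pos hq
  set s : ℝ := 1 - 1/q with hs
  have hs0 : 0 < s := by
    have h1 : 1/q < 1 := by
      rw [div_lt_one hq0]; exact hq
    rw [hs]; linarith
  set Mq : ℝ≥0∞ := (∫⁻ x, ENNReal.ofReal (h x) ^ q) ^ (1/q) with hMqdef
  have hMqlt : Mq < ⊤ := by
    have h1 : ENNReal.ofReal q ≠ 0 := by
      simp [ENNReal.ofReal_eq_zero, not_le, hq0]
    have h2 : ENNReal.ofReal q ≠ ⊤ := ENNReal.ofReal_ne_top
    have := hmem.2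
    rw [eLpNorm_eq_lintegral_rpow_enorm_toReal h1 h2] at this
    rw [ENNReal.toReal_ofReal hq0.le] at this
    have heq : (∫⁻ x, ‖h x‖ₑ ^ q) = ∫⁻ x, ENNReal.ofReal (h x) ^ q := by
      refine lintegral_congr fun x => ?_
      rw [Real.enorm_eq_ofReal (hh0 x)]
    rw [heq] at this
    exact this
  refine ⟨K₂ ^ s * Mq.toReal + 1, by positivity, ?_⟩
  intro m n hm hmn
  have hn2 : (2:ℕ) ≤ n := by omega
  have hn1 : (1:ℝ) < (n:ℝ) := by exact_mod_cast lt_of_lt_of_le one_lt_two (by exact_mod_cast hn2)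
  have hn0 : (0:ℝ) < (n:ℝ) := by linarith
  set r : ℝ := (n:ℝ) ^ (-(7 / (s * β₂))) with hrdef
  have hr0 : 0 < r := Real.rpow_pos_of_pos hn0 _
  have hr1 : r < 1 := by
    apply Real.rpow_lt_one_of_one_lt_of_neg hn1
    have : 0 < 7 / (s * β₂) := by positivity
    linarith
  set B : Set (Fin d → ℝ) := ⋃ x ∈ A, Metric.ball x r with hBdef
  have hBopen : IsOpen B := isOpen_biUnion fun x _ => Metric.isOpen_ball
  have hBmeas : MeasurableSet B := hBopen.measurableSet
  have hvolB : volume B ≤ ENNReal.ofReal (K₂ * r ^ β₂) := (hVmain r hr0 hr1).2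
  -- Hölder
  have hpq : (q / (q - 1)).HolderConjugate q := (Real.HolderConjugate.conjExponent hq).symm
  have hsinv : 1 / (q / (q - 1)) = s := by
    rw [hs]; field_simp
  have hμB : μ B ≤ (volume B) ^ s * Mq := by
    rw [hμeq, withDensity_apply _ hBmeas]
    have key := ENNReal.lintegral_mul_le_Lp_mul_Lq volume hpq
      (f := B.indicator (fun _ => (1:ℝ≥0∞))) (g := fun x => ENNReal.ofReal (h x))
      ((measurable_one.indicator hBmeas).aemeasurable)
      (ENNReal.measurable_ofReal.comp_aemeasurable hmem.1.aemeasurable)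
    have hleft : (∫⁻ a, (B.indicator (fun _ => (1:ℝ≥0∞)) * fun x => ENNReal.ofReal (h x)) a) =
        ∫⁻ a in B, ENNReal.ofReal (h a) := by
      rw [← lintegral_indicator hBmeas]
      refine lintegral_congr fun a => ?_
      by_cases ha : a ∈ B <;> simp [ha]
    have hpow : (∫⁻ a, B.indicator (fun _ => (1:ℝ≥0∞)) a ^ (q / (q - 1))) = volume B := by
      rw [← lintegral_indicator_one hBmeas]
      refine lintegral_congr fun a => ?_
      by_cases ha : a ∈ B <;>
        simp [ha, ENNReal.one_rpow, ENNReal.zero_rpow_of_pos hpq.pos]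
    rw [hleft, hpow, hsinv] at key
    exact key
  have hμBbound : μ B ≤ ENNReal.ofReal (K₂ ^ s * ((n:ℝ) ^ (7:ℕ))⁻¹) * Mq := by
    refine le_trans hμB (mul_le_mul_left ?_ Mq)
    calc (volume B) ^ s ≤ (ENNReal.ofReal (K₂ * r ^ β₂)) ^ s :=
          ENNReal.rpow_le_rpow hvolB hs0.le
      _ = ENNReal.ofReal ((K₂ * r ^ β₂) ^ s) :=
          ENNReal.ofReal_rpow_of_nonneg (by positivity) hs0.le
      _ = ENNReal.ofReal (K₂ ^ s * ((n:ℝ) ^ (7:ℕ))⁻¹) := by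
          congr 1
          rw [Real.mul_rpow hK₂.le (by positivity), hrdef,
            ← Real.rpow_natCast ((n:ℝ)) 7, ← Real.rpow_neg hn0.le,
            ← Real.rpow_mul hn0.le, ← Real.rpow_mul hn0.le]
          congr 2
          have hsne : s ≠ 0 := ne_of_gt hs0
          have hbne : β₂ ≠ 0 := ne_of_gt hβ₂
          field_simp
          ring
  -- sum over iterates
  have hD : μ (⋃ i ∈ Finset.range m, T^[i] ⁻¹' B) ≤ (m : ℝ≥0∞) * μ B := by
    refine le_trans (measure_biUnion_finset_le _ _) ?_
    have : ∀ i ∈ Finset.range m, μ (T^[i] ⁻¹' B) = μ B := fun i _ =>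
      (hT.iterate i).measure_preimage hBmeas.nullMeasurableSet
    rw [Finset.sum_congr rfl this, Finset.sum_const, Finset.card_range, nsmul_eq_mul]
  have hfin : (m : ℝ≥0∞) * μ B ≠ ⊤ := by
    exact ENNReal.mul_ne_top (by simp) (measure_ne_top μ B)
  have htoReal : (μ (⋃ i ∈ Finset.range m, T^[i] ⁻¹' B)).toReal ≤ m * (μ B).toReal := by
    have := ENNReal.toReal_mono hfin hD
    rwa [ENNReal.toReal_mul, ENNReal.toReal_natCast] at this
  have hμBreal : (μ B).toReal ≤ K₂ ^ s * ((n:ℝ) ^ (7:ℕ))⁻¹ * Mq.toReal := by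
    have hfin2 : ENNReal.ofReal (K₂ ^ s * ((n:ℝ) ^ (7:ℕ))⁻¹) * Mq ≠ ⊤ :=
      ENNReal.mul_ne_top ENNReal.ofReal_ne_top hMqlt.ne
    have := ENNReal.toReal_mono hfin2 hμBbound
    rwa [ENNReal.toReal_mul, ENNReal.toReal_ofReal (by positivity)] at this
  refine le_trans htoReal ?_
  have hstep : (m:ℝ) * (μ B).toReal ≤ (n:ℝ) * (K₂ ^ s * ((n:ℝ) ^ (7:ℕ))⁻¹ * Mq.toReal) := by
    have hmn' : (m:ℝ) ≤ (n:ℝ) := by exact_mod_cast hmn.le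
    have h0 : (0:ℝ) ≤ (μ B).toReal := ENNReal.toReal_nonneg
    calc (m:ℝ) * (μ B).toReal ≤ (n:ℝ) * (μ B).toReal := by
          apply mul_le_mul_of_nonneg_right hmn' h0
      _ ≤ (n:ℝ) * (K₂ ^ s * ((n:ℝ) ^ (7:ℕ))⁻¹ * Mq.toReal) := by
          apply mul_le_mul_of_nonneg_left hμBreal hn0.le
  refine le_trans hstep ?_
  have hpow7 : ((n:ℝ) ^ (7:ℕ)) = (n:ℝ) * (n:ℝ) ^ (6:ℕ) := by ring
  rw [hpow7, div_eq_mul_inv, mul_inv]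
  have hn6 : (0:ℝ) < (n:ℝ) ^ (6:ℕ) := by positivity
  have heq : (n:ℝ) * (K₂ ^ s * (((n:ℝ))⁻¹ * ((n:ℝ) ^ (6:ℕ))⁻¹) * Mq.toReal)
      = K₂ ^ s * Mq.toReal * ((n:ℝ) ^ (6:ℕ))⁻¹ := by
    field_simp
  rw [heq]
  apply mul_le_mul_of_nonneg_right _ (by positivity)
  nlinarith [ENNReal.toReal_nonneg (a := Mq), Real.rpow_nonneg hK₂.le s]
end

section
/- Suppose ([0,1]^d, T, μ) satisfies Conditions I and II. Let {r_n} ⊂ [0,∞)^d with γ_n = r_{n,1}⋯r_{n,d}, and for x ∈ [0,1]^d let l_n(x) ≥ 0 satisfy μ(R(x, l_n(x) r_n)) = γ_n, ξ_n(x) = l_n(x) r_n, and Ê_n = {x ∈ [0,1]^d : Tⁿx ∈ R(x, ξ_n(x))}. Then there exists a constant c₄ > 0 such that for every n with γ_n ≥ n^{−2}: μ(Ê_n) ≥ (1 − c₄ n^{−2}) γ_n. -/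
open MeasureTheory Filter Metric Set
open scoped ENNReal NNReal Topology Classical

set_option maxHeartbeats 2000000

noncomputable section St12Aux

variable {d N : ℕ} {k k' : Fin d → Fin N}

lemma st12_holder {d : ℕ} (q : ℝ) (hq : 1 < q) (h : (Fin d → ℝ) → ℝ) (hh : ∀ x, 0 ≤ h x)
    (hm : AEMeasurable h volume)
    (A : Set (Fin d → ℝ)) (hA : MeasurableSet A) :
    (volume.withDensity fun x => ENNReal.ofReal (h x)) A ≤
      eLpNorm h (ENNReal.ofReal q) volume * volume A ^ (1 - 1/q) := by
  have hq0 : 0 < q := lt_trans one_pos hq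
  have hpq : q.HolderConjugate (q/(q-1)) := Real.HolderConjugate.conjExponent hq
  have hq' : 0 < q/(q-1) := hpq.symm.pos
  have key := ENNReal.lintegral_mul_le_Lp_mul_Lq volume hpq
    (f := fun x => ENNReal.ofReal (h x)) (g := fun x => A.indicator (fun _ => (1:ℝ≥0∞)) x)
    hm.ennreal_ofReal (aemeasurable_const.indicator hA)
  have h1 : (volume.withDensity fun x => ENNReal.ofReal (h x)) A
      = ∫⁻ x, ((fun x => ENNReal.ofReal (h x)) * fun x => A.indicator (fun _ => (1:ℝ≥0∞)) x) x := by
    rw [withDensity_apply _ hA, ← lintegral_indicator hA]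
    congr 1
    ext x
    by_cases hx : x ∈ A <;> simp [hx]
  have h2 : (∫⁻ x, (fun x => A.indicator (fun _ => (1:ℝ≥0∞)) x) x ^ (q/(q-1))) ^ (1/(q/(q-1)))
      = volume A ^ (1 - 1/q) := by
    have hthis : ∀ x : Fin d → ℝ, (A.indicator (fun _ => (1:ℝ≥0∞)) x) ^ (q/(q-1)) = A.indicator (fun _ => (1:ℝ≥0∞)) x := by
      intro x
      by_cases hx : x ∈ A <;> simp [hx, ENNReal.zero_rpow_of_pos hq']
    simp_rw [hthis]
    rw [lintegral_indicator hA, setLIntegral_one]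
    congr 1
    rw [one_div_div, sub_div, div_self hq0.ne', one_div]
  have h3 : (∫⁻ x, ((fun x => ENNReal.ofReal (h x)) x) ^ q) ^ (1/q)
      = eLpNorm h (ENNReal.ofReal q) volume := by
    rw [eLpNorm_eq_lintegral_rpow_enorm_toReal (ENNReal.ofReal_pos.mpr hq0).ne' ENNReal.ofReal_ne_top]
    rw [ENNReal.toReal_ofReal hq0.le]
    congr 1
    refine lintegral_congr fun x => ?_
    simp only [Real.enorm_eq_ofReal (hh x)]
  calc (volume.withDensity fun x => ENNReal.ofReal (h x)) A
      = _ := h1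
    _ ≤ _ := key
    _ = eLpNorm h (ENNReal.ofReal q) volume * volume A ^ (1 - 1/q) := by rw [h2, h3]


def stGrid (d N : ℕ) (k : Fin d → Fin N) : Set (Fin d → ℝ) :=
  univ.pi fun i => Ioo ((k i : ℝ)/N) (((k i : ℝ)+1)/N)

def stInner (d N : ℕ) (k : Fin d → Fin N) : Set (Fin d → ℝ) :=
  Icc (fun i => (k i : ℝ)/N + 1/N^2) (fun i => ((k i : ℝ)+1)/N - 1/N^2)

def stBump (d N : ℕ) (k : Fin d → Fin N) : (Fin d → ℝ) → ℝ :=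
  fun x => min 1 ((N:ℝ)^2 * infDist x (stGrid d N k)ᶜ)

variable {d N : ℕ} {k k' : Fin d → Fin N}

lemma stGrid_measurable : MeasurableSet (stGrid d N k) :=
  MeasurableSet.univ_pi fun i => measurableSet_Ioo

lemma stInner_measurable : MeasurableSet (stInner d N k) := measurableSet_Icc

lemma stGrid_subset_cube (hN : 0 < N) : stGrid d N k ⊆ unitCube d := by
  intro x hx
  have hx' : ∀ i, x i ∈ Ioo ((k i : ℝ)/N) (((k i : ℝ)+1)/N) := fun i => hx i (mem_univ i)
  constructor
  · intro i
    have h1 : (0:ℝ) ≤ (k i : ℝ)/N := by positivity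
    exact le_of_lt (lt_of_le_of_lt h1 (hx' i).1)
  · intro i
    have h2 : ((k i : ℝ)+1)/N ≤ 1 := by
      rw [div_le_one (by exact_mod_cast hN)]
      have : (k i : ℕ) + 1 ≤ N := (k i).2
      exact_mod_cast this
    exact le_of_lt (lt_of_lt_of_le (hx' i).2 h2)

lemma stGrid_disjoint (hkk : k ≠ k') : Disjoint (stGrid d N k) (stGrid d N k') := by
  rw [Set.disjoint_left]
  intro x hx hx'
  obtain ⟨i, hi⟩ := Function.ne_iff.mp hkk
  have h1 := hx i (mem_univ i)
  have h2 := hx' i (mem_univ i)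
  have hN0 : (0:ℝ) < N := by exact_mod_cast (k i).pos
  have key : ∀ (a b : Fin N), a < b → ∀ u : ℝ, u ∈ Ioo ((a:ℝ)/N) (((a:ℝ)+1)/N) →
      u ∈ Ioo ((b:ℝ)/N) (((b:ℝ)+1)/N) → False := by
    intro a b hab u hu1 hu2
    have hle : ((a:ℝ)+1) ≤ (b:ℝ) := by exact_mod_cast hab
    have : ((a:ℝ)+1)/N ≤ (b:ℝ)/N := (div_le_div_iff_of_pos_right hN0).mpr hle
    exact absurd (lt_trans hu2.1 hu1.2) (not_lt.mpr this)
  rcases lt_or_gt_of_ne hi with hlt | hlt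
  · exact key _ _ hlt _ h1 h2
  · exact key _ _ hlt _ h2 h1

lemma stGrid_coord_dist (hx : x ∈ stGrid d N k) (hy : y ∈ stGrid d N k) (i : Fin d) :
    |x i - y i| ≤ 1/N := by
  have h1 := hx i (mem_univ i)
  have h2 := hy i (mem_univ i)
  have : ((k i : ℝ)+1)/N - (k i : ℝ)/N = 1/N := by ring
  rw [abs_sub_le_iff]
  constructor <;> nlinarith [h1.1, h1.2, h2.1, h2.2]

lemma stGrid_nonempty (hN : 0 < N) : (stGrid d N k).Nonempty := by
  refine ⟨fun i => ((k i : ℝ) + 1/2)/N, fun i _ => ?_⟩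
  have hN' : (0:ℝ) < N := by exact_mod_cast hN
  constructor
  · rw [div_lt_div_iff_of_pos_right hN']
    norm_num
  · rw [div_lt_div_iff_of_pos_right hN']
    norm_num

lemma stBump_nonneg (x : Fin d → ℝ) : 0 ≤ stBump d N k x :=
  le_min zero_le_one (mul_nonneg (by positivity) infDist_nonneg)

lemma stBump_le_one (x : Fin d → ℝ) : stBump d N k x ≤ 1 := min_le_left _ _

lemma stBump_continuous : Continuous (stBump d N k) := by
  apply Continuous.min continuous_const
  exact continuous_const.mul (continuous_infDist_pt _)

lemma stBump_zero (hx : x ∉ stGrid d N k) : stBump d N k x = 0 := by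
  have : infDist x (stGrid d N k)ᶜ = 0 := infDist_zero_of_mem hx
  simp [stBump, this]

lemma stBump_lip (x y : Fin d → ℝ) :
    |stBump d N k x - stBump d N k y| ≤ (N:ℝ)^2 * dist x y := by
  have h1 : |infDist x (stGrid d N k)ᶜ - infDist y (stGrid d N k)ᶜ| ≤ dist x y := by
    rw [abs_sub_le_iff]
    constructor
    · linarith [infDist_le_infDist_add_dist (x := x) (y := y) (s := (stGrid d N k)ᶜ)]
    · linarith [infDist_le_infDist_add_dist (x := y) (y := x) (s := (stGrid d N k)ᶜ),
        dist_comm x y]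
  have h2 : |min 1 ((N:ℝ)^2 * infDist x (stGrid d N k)ᶜ) - min 1 ((N:ℝ)^2 * infDist y (stGrid d N k)ᶜ)|
      ≤ |(N:ℝ)^2 * infDist x (stGrid d N k)ᶜ - (N:ℝ)^2 * infDist y (stGrid d N k)ᶜ| := by
    have := abs_min_sub_min_le_max (1:ℝ) ((N:ℝ)^2 * infDist x (stGrid d N k)ᶜ)
      1 ((N:ℝ)^2 * infDist y (stGrid d N k)ᶜ)
    simpa using this
  calc |stBump d N k x - stBump d N k y| ≤ _ := h2
    _ = (N:ℝ)^2 * |infDist x (stGrid d N k)ᶜ - infDist y (stGrid d N k)ᶜ| := by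
        rw [← mul_sub, abs_mul, abs_of_nonneg (by positivity : (0:ℝ) ≤ (N:ℝ)^2)]
    _ ≤ (N:ℝ)^2 * dist x y := by
        apply mul_le_mul_of_nonneg_left h1 (by positivity)

lemma stInner_subset_grid (hN : 0 < N) : stInner d N k ⊆ stGrid d N k := by
  intro x hx i _
  have hN' : (0:ℝ) < N := by exact_mod_cast hN
  have h1 := hx.1 i
  have h2 := hx.2 i
  simp only at h1 h2
  have : (0:ℝ) < 1/N^2 := by positivity
  constructor <;> linarith

lemma stBump_one (hd : 1 ≤ d) (hN : 0 < N) (hx : x ∈ stInner d N k) :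
    stBump d N k x = 1 := by
  have hN' : (0:ℝ) < N := by exact_mod_cast hN
  have hne : ((stGrid d N k)ᶜ : Set (Fin d → ℝ)).Nonempty := by
    refine ⟨0, fun hmem => ?_⟩
    have := hmem ⟨0, hd⟩ (mem_univ _)
    have h0 : (0:ℝ) ≤ (k ⟨0, hd⟩ : ℝ)/N := by positivity
    simp only [Pi.zero_apply] at this
    exact absurd this.1 (not_lt.mpr h0)
  have hinf : 1/(N:ℝ)^2 ≤ infDist x (stGrid d N k)ᶜ := by
    by_contra hcon
    push_neg at hcon
    obtain ⟨y, hy, hdy⟩ := (infDist_lt_iff hne).mp hcon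
    -- y ∉ grid: some coordinate outside Ioo
    rw [Set.mem_compl_iff, stGrid] at hy
    simp only [Set.mem_pi, mem_univ, forall_true_left, not_forall] at hy
    obtain ⟨i, hi⟩ := hy
    have hxi1 := hx.1 i
    have hxi2 := hx.2 i
    simp only at hxi1 hxi2
    have hco : 1/(N:ℝ)^2 ≤ |x i - y i| := by
      rw [Set.mem_Ioo, not_and_or, not_lt, not_lt] at hi
      rcases hi with hi | hi
      · rw [le_abs]; left; linarith
      · rw [le_abs]; right; linarith
    have : |x i - y i| ≤ dist x y := by
      rw [← Real.dist_eq]; exact dist_le_pi_dist x y i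
    linarith
  have : (1:ℝ) ≤ (N:ℝ)^2 * infDist x (stGrid d N k)ᶜ := by
    calc (1:ℝ) = (N:ℝ)^2 * (1/(N:ℝ)^2) := by field_simp
    _ ≤ _ := by apply mul_le_mul_of_nonneg_left hinf (by positivity)
  simp [stBump, this]

lemma stInner_volume : volume (stInner d N k) = (ENNReal.ofReal (1/N - 2/(N:ℝ)^2))^d := by
  rw [stInner, Real.volume_Icc_pi]
  have : ∀ i : Fin d, ENNReal.ofReal (((k i : ℝ)+1)/N - 1/N^2 - ((k i : ℝ)/N + 1/N^2))
      = ENNReal.ofReal (1/N - 2/(N:ℝ)^2) := by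
    intro i
    congr 1
    ring
  calc ∏ i : Fin d, ENNReal.ofReal (((k i : ℝ)+1)/N - 1/N^2 - ((k i : ℝ)/N + 1/N^2))
      = ∏ _i : Fin d, ENNReal.ofReal (1/N - 2/(N:ℝ)^2) := Finset.prod_congr rfl fun i _ => this i
    _ = _ := by simp

lemma cube_norm_sub_le_one {x y : Fin d → ℝ} (hx : x ∈ unitCube d) (hy : y ∈ unitCube d) :
    ‖x - y‖ ≤ 1 := by
  rw [← dist_eq_norm]
  rw [dist_pi_le_iff zero_le_one]
  intro i
  rw [Real.dist_eq, abs_sub_le_iff]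
  have h1 : (0:ℝ) ≤ x i := hx.1 i
  have h2 : x i ≤ 1 := hx.2 i
  have h3 : (0:ℝ) ≤ y i := hy.1 i
  have h4 : y i ≤ 1 := hy.2 i
  constructor <;> linarith

lemma stBump_holder_cube (θ : ℝ) (hθ : 0 < θ) (hθ1 : θ ≤ 1) {x y : Fin d → ℝ}
    (hx : x ∈ unitCube d) (hy : y ∈ unitCube d) :
    |stBump d N k x - stBump d N k y| ≤ (N:ℝ)^2 * ‖x - y‖ ^ θ := by
  have h1 := stBump_lip (k := k) x y
  rw [dist_eq_norm] at h1
  have h2 : ‖x - y‖ ≤ ‖x - y‖ ^ θ := by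
    rcases eq_or_lt_of_le (norm_nonneg (x - y)) with h0 | h0
    · rw [← h0, Real.zero_rpow hθ.ne']
    · calc ‖x - y‖ = ‖x - y‖ ^ (1:ℝ) := (Real.rpow_one _).symm
        _ ≤ ‖x - y‖ ^ θ :=
          Real.rpow_le_rpow_of_exponent_ge h0 (cube_norm_sub_le_one hx hy) hθ1
  calc |stBump d N k x - stBump d N k y| ≤ (N:ℝ)^2 * ‖x - y‖ := h1
    _ ≤ (N:ℝ)^2 * ‖x - y‖ ^ θ := mul_le_mul_of_nonneg_left h2 (by positivity)

lemma stBump_isHolder (θ : ℝ) (hθ : 0 < θ) (hθ1 : θ ≤ 1) :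
    IsHolderOnCube d θ (stBump d N k) :=
  ⟨(N:ℝ)^2, fun x hx y hy => stBump_holder_cube θ hθ hθ1 hx hy⟩

lemma stBump_holderNorm (θ : ℝ) (hθ : 0 < θ) (hθ1 : θ ≤ 1) :
    holderNorm d θ (stBump d N k) ≤ 1 + (N:ℝ)^2 := by
  apply add_le_add
  · apply ciSup_le
    intro x
    rw [abs_of_nonneg (stBump_nonneg _)]
    exact stBump_le_one _
  · apply ciSup_le
    rintro ⟨x, y⟩
    by_cases hxy : x.1 = y.1
    · rw [if_pos hxy]
      positivity
    · rw [if_neg hxy]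
      have hpos : (0:ℝ) < ‖x.1 - y.1‖ ^ θ := by
        apply Real.rpow_pos_of_pos
        rw [norm_pos_iff, sub_ne_zero]
        exact hxy
      rw [div_le_iff₀ hpos]
      exact stBump_holder_cube θ hθ hθ1 x.2 y.2

lemma st12_slab (i : Fin d) (A : Set ℝ) :
    volume (unitCube d ∩ (fun y => y i) ⁻¹' A) ≤ volume A := by
  have hsub : unitCube d ∩ (fun y => y i) ⁻¹' A
      ⊆ univ.pi (fun j => if j = i then A ∩ Icc 0 1 else Icc (0:ℝ) 1) := by
    rintro y ⟨hy, hyA⟩ j _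
    by_cases hj : j = i
    · subst hj
      simp only [if_pos rfl]
      exact ⟨hyA, hy.1 j, hy.2 j⟩
    · simp only [if_neg hj]
      exact ⟨hy.1 j, hy.2 j⟩
  calc volume (unitCube d ∩ (fun y => y i) ⁻¹' A) ≤ _ := measure_mono hsub
    _ = ∏ j, volume (if j = i then A ∩ Icc 0 1 else Icc (0:ℝ) 1) := volume_pi_pi _
    _ = volume (A ∩ Icc 0 1) := by
        rw [Finset.prod_eq_single i]
        · rw [if_pos rfl]
        · intro j _ hj
          rw [if_neg hj, Real.volume_Icc]
          norm_num
        · intro hi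
          exact absurd (Finset.mem_univ i) hi
    _ ≤ volume A := measure_mono inter_subset_left


lemma st12_rectQ {d N : ℕ} (hN : 0 < N)
    (μ : Measure (Fin d → ℝ)) [IsProbabilityMeasure μ]
    (hμc : μ (unitCube d)ᶜ = 0)
    (q : ℝ) (hq : 1 < q) (h : (Fin d → ℝ) → ℝ) (hh : ∀ x, 0 ≤ h x)
    (hm : AEMeasurable h volume)
    (hμeq : μ = volume.withDensity fun x => ENNReal.ofReal (h x))
    (r : Fin d → ℝ) (hr : ∀ i, 0 ≤ r i)
    (l : (Fin d → ℝ) → ℝ) (hl : ∀ x, 0 ≤ l x)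
    (hlμ : ∀ x ∈ unitCube d, μ (rect x (l x • r)) = ENNReal.ofReal (∏ i, r i))
    (k : Fin d → Fin N) :
    ∃ R : Set (Fin d → ℝ), MeasurableSet R ∧
      (∀ x ∈ stGrid d N k, R ⊆ rect x (l x • r)) ∧
      ENNReal.ofReal (∏ i, r i) ≤
        μ R + eLpNorm h (ENNReal.ofReal q) volume * ENNReal.ofReal (4*d/N) ^ (1-1/q) := by
  have hNR : (0:ℝ) < N := by exact_mod_cast hN
  set S : Set ℝ := l '' (stGrid d N k) with hS
  have hSne : S.Nonempty := (stGrid_nonempty hN).image l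
  have hSbdd : BddBelow S := ⟨0, by rintro t ⟨x, _, rfl⟩; exact hl x⟩
  set lst : ℝ := sInf S with hlst
  have hlst0 : 0 ≤ lst := le_csInf hSne (by rintro t ⟨x, _, rfl⟩; exact hl x)
  set ε : ℝ := 1/(N*((∑ i, r i) + 1)) with hε
  have hsum0 : (0:ℝ) ≤ ∑ i, r i := Finset.sum_nonneg fun i _ => hr i
  have hε0 : 0 < ε := by positivity
  obtain ⟨t, ⟨xs, hxsg, rfl⟩, hxslt⟩ := (csInf_lt_iff hSbdd hSne).mp
    (show sInf S < lst + ε by linarith [hε0])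
  set v : Fin d → ℝ := fun i => lst * r i - 1/N with hv
  refine ⟨Set.Icc (xs - v) (xs + v), measurableSet_Icc, ?_, ?_⟩
  · -- containment
    intro x hx y hy
    have hld : lst ≤ l x := csInf_le hSbdd ⟨x, hx, rfl⟩
    constructor <;> intro i
    · have h1 : xs i - v i ≤ y i := hy.1 i
      have h2 : |xs i - x i| ≤ 1/N := stGrid_coord_dist hxsg hx i
      have h3 : lst * r i ≤ l x * r i := mul_le_mul_of_nonneg_right hld (hr i)
      have : (x - l x • r) i = x i - l x * r i := by simp
      rw [this]
      have := abs_le.mp h2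
      simp only [hv] at h1
      linarith [this.1, this.2]
    · have h1 : y i ≤ xs i + v i := hy.2 i
      have h2 : |xs i - x i| ≤ 1/N := stGrid_coord_dist hxsg hx i
      have h3 : lst * r i ≤ l x * r i := mul_le_mul_of_nonneg_right hld (hr i)
      have : (x + l x • r) i = x i + l x * r i := by simp
      rw [this]
      have := abs_le.mp h2
      simp only [hv] at h1
      linarith [this.1, this.2]
  · -- measure bound
    have hxscube : xs ∈ unitCube d := stGrid_subset_cube hN hxsg
    have hA : μ (rect xs (l xs • r)) = ENNReal.ofReal (∏ i, r i) := hlμ xs hxscube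
    set R : Set (Fin d → ℝ) := Set.Icc (xs - v) (xs + v) with hR
    set W : Set (Fin d → ℝ) := (rect xs (l xs • r) \ R) ∩ unitCube d with hW
    have hWmeas : MeasurableSet W :=
      ((measurableSet_Icc.diff measurableSet_Icc).inter measurableSet_Icc)
    have hsplit : ENNReal.ofReal (∏ i, r i) ≤ μ R + μ W := by
      rw [← hA]
      calc μ (rect xs (l xs • r)) ≤ μ (R ∪ (W ∪ (unitCube d)ᶜ)) := by
            apply measure_mono
            intro y hy
            by_cases hyR : y ∈ R
            · exact Or.inl hyR
            · by_cases hyc : y ∈ unitCube d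
              · exact Or.inr (Or.inl ⟨⟨hy, hyR⟩, hyc⟩)
              · exact Or.inr (Or.inr hyc)
        _ ≤ μ R + (μ W + μ (unitCube d)ᶜ) :=
            le_trans (measure_union_le _ _) (by gcongr; exact measure_union_le _ _)
        _ = μ R + μ W := by rw [hμc, add_zero]
    -- now bound μ W
    have hvol : volume W ≤ ENNReal.ofReal (4*d/N) := by
      have hsub : W ⊆ ⋃ i : Fin d, (unitCube d ∩ (fun y => y i) ⁻¹'
          (Icc (xs i - l xs * r i) (xs i + l xs * r i) \ Icc (xs i - v i) (xs i + v i))) := by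
        rintro y ⟨⟨hyA, hyR⟩, hyc⟩
        have : ¬ (∀ i, xs i - v i ≤ y i ∧ y i ≤ xs i + v i) := by
          intro hcon
          exact hyR ⟨fun i => (hcon i).1, fun i => (hcon i).2⟩
        push_neg at this
        obtain ⟨i, hi⟩ := this
        refine mem_iUnion.mpr ⟨i, hyc, ?_, ?_⟩
        · have h1 : (xs - l xs • r) i ≤ y i := hyA.1 i
          have h2 : y i ≤ (xs + l xs • r) i := hyA.2 i
          simp only [Pi.sub_apply, Pi.add_apply, Pi.smul_apply, smul_eq_mul] at h1 h2
          exact ⟨h1, h2⟩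
        · rw [mem_Icc]
          rintro ⟨hc1, hc2⟩
          rcases le_or_gt (xs i - v i) (y i) with hd1 | hd1
          · exact absurd hc2 (not_le.mpr (hi hd1))
          · exact absurd hc1 (not_le.mpr hd1)
      have hslab : ∀ i : Fin d, volume (unitCube d ∩ (fun y => y i) ⁻¹'
          (Icc (xs i - l xs * r i) (xs i + l xs * r i) \ Icc (xs i - v i) (xs i + v i)))
          ≤ ENNReal.ofReal (4/N) := by
        intro i
        refine le_trans (st12_slab i _) ?_
        have hLv : v i ≤ l xs * r i := by
          have : lst * r i ≤ l xs * r i :=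
            mul_le_mul_of_nonneg_right (csInf_le hSbdd ⟨xs, hxsg, rfl⟩) (hr i)
          simp only [hv]
          linarith [hNR, one_div_pos.mpr hNR]
        have hgap : l xs * r i - v i ≤ 2/N := by
          have h1 : l xs * r i - lst * r i ≤ ε * r i := by
            have := mul_le_mul_of_nonneg_right hxslt.le (hr i)
            nlinarith [hr i]
          have h2 : ε * r i ≤ 1/N := by
            rw [hε]
            rw [div_mul_eq_mul_div, one_mul, div_le_div_iff₀ (by positivity) hNR]
            have : r i ≤ (∑ j, r j) := Finset.single_le_sum (fun j _ => hr j) (Finset.mem_univ i)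
            nlinarith
          have hr2 : (2:ℝ)/N = 1/N + 1/N := by ring
          simp only [hv]
          linarith
        have hr4 : (4:ℝ)/N = 2/N + 2/N := by ring
        rcases le_or_gt 0 (v i) with hv0 | hv0
        · -- annulus: two intervals
          have hsub2 : Icc (xs i - l xs * r i) (xs i + l xs * r i) \ Icc (xs i - v i) (xs i + v i)
              ⊆ Icc (xs i - l xs * r i) (xs i - v i) ∪ Icc (xs i + v i) (xs i + l xs * r i) := by
            rintro u ⟨hu1, hu2⟩
            rw [mem_Icc, not_and_or, not_le, not_le] at hu2
            rcases hu2 with hu2 | hu2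
            · exact Or.inl ⟨hu1.1, hu2.le⟩
            · exact Or.inr ⟨hu2.le, hu1.2⟩
          refine le_trans (measure_mono hsub2) (le_trans (measure_union_le _ _) ?_)
          rw [Real.volume_Icc, Real.volume_Icc]
          rw [← ENNReal.ofReal_add (by linarith) (by linarith)]
          apply ENNReal.ofReal_le_ofReal
          linarith
        · -- inner empty: whole interval
          have hsub2 : Icc (xs i - l xs * r i) (xs i + l xs * r i) \ Icc (xs i - v i) (xs i + v i)
              ⊆ Icc (xs i - l xs * r i) (xs i + l xs * r i) := diff_subset
          refine le_trans (measure_mono hsub2) ?_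
          rw [Real.volume_Icc]
          apply ENNReal.ofReal_le_ofReal
          have h0 : 0 ≤ l xs * r i := mul_nonneg (hl xs) (hr i)
          have hv0' : lst * r i - 1/(N:ℝ) < 0 := hv0
          linarith
      calc volume W ≤ ∑ i : Fin d, volume (unitCube d ∩ (fun y => y i) ⁻¹'
            (Icc (xs i - l xs * r i) (xs i + l xs * r i) \ Icc (xs i - v i) (xs i + v i))) :=
            le_trans (measure_mono hsub) (measure_iUnion_fintype_le _ _)
        _ ≤ ∑ _i : Fin d, ENNReal.ofReal (4/N) := Finset.sum_le_sum fun i _ => hslab i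
        _ = (d : ℝ≥0∞) * ENNReal.ofReal (4/N) := by
            rw [Finset.sum_const, Finset.card_univ, Fintype.card_fin, nsmul_eq_mul]
        _ = ENNReal.ofReal (4*d/N) := by
            rw [← ENNReal.ofReal_natCast d, ← ENNReal.ofReal_mul (by positivity)]
            congr 1
            ring
    have hμW : μ W ≤ eLpNorm h (ENNReal.ofReal q) volume * ENNReal.ofReal (4*d/N) ^ (1-1/q) := by
      rw [hμeq]
      refine le_trans (st12_holder q hq h hh hm W hWmeas) ?_
      have hc0 : (0:ℝ) ≤ 1 - 1/q := by
        rw [sub_nonneg, div_le_one (lt_trans one_pos hq)]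
        linarith
      exact mul_le_mul_right (ENNReal.rpow_le_rpow hvol hc0) _
    exact le_trans hsplit (by gcongr)


lemma st12_core {d : ℕ} (hd : 1 ≤ d)
    (T : (Fin d → ℝ) → (Fin d → ℝ)) (μ : Measure (Fin d → ℝ)) [IsProbabilityMeasure μ]
    (hT : MeasurePreserving T μ μ)
    (hμcube : μ (unitCube d) = 1)
    (θ τ C : ℝ) (hI : CondI T μ θ τ C)
    (q : ℝ) (h : (Fin d → ℝ) → ℝ) (hII : CondII μ h q)
    (r : Fin d → ℝ) (hr : ∀ i, 0 ≤ r i)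
    (l : (Fin d → ℝ) → ℝ) (hl : ∀ x, 0 ≤ l x)
    (hlμ : ∀ x ∈ unitCube d, μ (rect x (l x • r)) = ENNReal.ofReal (∏ i, r i))
    (n N : ℕ) (hN : 2 ≤ N) :
    (∏ i, r i)
      - ((eLpNorm h (ENNReal.ofReal q) volume * ENNReal.ofReal (4*d/N) ^ (1-1/q)).toReal
        + (eLpNorm h (ENNReal.ofReal q) volume * ENNReal.ofReal (2*d/N) ^ (1-1/q)).toReal
        + C * Real.exp (-τ * n) * (1 + (N:ℝ)^2) * (N:ℝ)^d)
      ≤ (μ {x | x ∈ unitCube d ∧ T^[n] x ∈ rect x (l x • r)}).toReal := by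
  obtain ⟨hθ, hθ1, hτ, hC, hcorr⟩ := hI
  obtain ⟨hq, hh, hμeq, hmem⟩ := hII
  have hN0 : 0 < N := lt_of_lt_of_le two_pos hN
  have hNR : (0:ℝ) < N := by exact_mod_cast hN0
  have hm : AEMeasurable h volume := hmem.aestronglyMeasurable.aemeasurable
  have hHq : eLpNorm h (ENNReal.ofReal q) volume ≠ ⊤ := hmem.eLpNorm_ne_top
  set Hq := eLpNorm h (ENNReal.ofReal q) volume with hHqdef
  set γ : ℝ := ∏ i, r i with hγdef
  have hγ0 : 0 ≤ γ := Finset.prod_nonneg fun i _ => hr i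
  have hμc : μ (unitCube d)ᶜ = 0 := by
    have : μ (unitCube d)ᶜ = μ univ - μ (unitCube d) :=
      measure_compl (measurableSet_Icc) (measure_ne_top μ _)
    rw [this, hμcube, measure_univ, tsub_self]
  have hγ1 : γ ≤ 1 := by
    have h0c : (0 : Fin d → ℝ) ∈ unitCube d := Set.mem_Icc.mpr ⟨le_refl _, fun _ => zero_le_one⟩
    have := hlμ 0 h0c
    have hle : ENNReal.ofReal γ ≤ 1 := this ▸ prob_le_one
    exact_mod_cast ENNReal.ofReal_le_one.mp hle
  set c : ℝ := 1 - 1/q with hcdef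
  set δ : ℝ := (Hq * ENNReal.ofReal (4*d/N) ^ c).toReal with hδdef
  set coll : ℝ := (Hq * ENNReal.ofReal (2*d/N) ^ c).toReal with hcolldef
  set D : ℝ := C * Real.exp (-τ * n) * (1 + (N:ℝ)^2) with hDdef
  have hD0 : 0 ≤ D := by positivity
  have hδ0 : 0 ≤ δ := ENNReal.toReal_nonneg
  have hcoll0 : 0 ≤ coll := ENNReal.toReal_nonneg
  -- choose rectangles
  choose R hRmeas hRsub hRlb using st12_rectQ hN0 μ hμc q hq h hh hm hμeq r hr l hl hlμ
  set E : Set (Fin d → ℝ) := {x | x ∈ unitCube d ∧ T^[n] x ∈ rect x (l x • r)} with hEdef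
  set E' : Set (Fin d → ℝ) := toMeasurable μ E with hE'def
  set g : (Fin d → Fin N) → (Fin d → ℝ) → ℝ :=
    fun k => (R k).indicator (fun _ => (1:ℝ)) with hgdef
  set m : (Fin d → Fin N) → ℝ := fun k => (μ (R k)).toReal with hmdef
  have hm0 : ∀ k, 0 ≤ m k := fun k => ENNReal.toReal_nonneg
  have hm1 : ∀ k, m k ≤ 1 := by
    intro k
    rw [hmdef]
    exact ENNReal.toReal_le_of_le_ofReal one_pos.le (by simpa using prob_le_one)
  have hgint : ∀ k, Integrable (g k) μ := fun k => (integrable_const 1).indicator (hRmeas k)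
  have hgint2 : ∀ k, ∫ x, g k x ∂μ = m k := by
    intro k
    rw [hgdef]
    simp only []
    rw [integral_indicator_const (1:ℝ) (hRmeas k), smul_eq_mul, mul_one]
    rfl
  have hgabs : ∀ k, ∫ x, |g k x| ∂μ = m k := by
    intro k
    have : ∀ x, |g k x| = g k x := by
      intro x
      apply abs_of_nonneg
      exact Set.indicator_nonneg (fun _ _ => zero_le_one) x
    simp_rw [this]
    exact hgint2 k
  -- correlation bound per cube
  have hcork : ∀ k : Fin d → Fin N,
      (∫ x, stBump d N k x ∂μ) * m k - D * m k ≤ ∫ x, stBump d N k x * g k (T^[n] x) ∂μ := by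
    intro k
    have hcor := hcorr (stBump d N k) (g k) stBump_continuous.measurable
      (stBump_isHolder θ hθ hθ1) (hgint k) n
    have h1 : (∫ x, stBump d N k x ∂μ) * ∫ x, g k x ∂μ - ∫ x, stBump d N k x * g k (T^[n] x) ∂μ
        ≤ C * Real.exp (-τ * n) * holderNorm d θ (stBump d N k) * ∫ x, |g k x| ∂μ :=
      le_trans (le_abs_self _) (by rw [abs_sub_comm]; exact hcor)
    have h2 : C * Real.exp (-τ * n) * holderNorm d θ (stBump d N k) * ∫ x, |g k x| ∂μ
        ≤ D * m k := by
      rw [hgabs k, hDdef]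
      apply mul_le_mul_of_nonneg_right _ (hm0 k)
      apply mul_le_mul_of_nonneg_left (stBump_holderNorm θ hθ hθ1) (by positivity)
    rw [hgint2 k] at h1
    linarith
  -- integrability of the products
  have htermint : ∀ k : Fin d → Fin N, Integrable (fun x => stBump d N k x * g k (T^[n] x)) μ := by
    intro k
    have hmeas : Measurable (fun x => stBump d N k x * g k (T^[n] x)) := by
      apply Measurable.mul stBump_continuous.measurable
      exact (measurable_const.indicator (hRmeas k)).comp (hT.iterate n).measurable
    refine Integrable.mono' (integrable_const (1:ℝ)) hmeas.aestronglyMeasurable ?_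
    filter_upwards with x
    rw [Real.norm_eq_abs, abs_mul]
    have hb1 : |stBump d N k x| ≤ 1 := by
      rw [abs_of_nonneg (stBump_nonneg x)]; exact stBump_le_one x
    have hb2 : |g k (T^[n] x)| ≤ 1 := by
      rw [hgdef]
      by_cases hx : T^[n] x ∈ R k <;> simp [Set.indicator_apply, hx]
    nlinarith [abs_nonneg (stBump d N k x), abs_nonneg (g k (T^[n] x))]
  -- sum is below the measure of E
  have hsum_le : ∑ k : Fin d → Fin N, ∫ x, stBump d N k x * g k (T^[n] x) ∂μ
      ≤ (μ E).toReal := by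
    rw [← integral_finset_sum _ (fun k _ => htermint k)]
    have hle : ∀ x, ∑ k : Fin d → Fin N, stBump d N k x * g k (T^[n] x)
        ≤ E'.indicator (fun _ => (1:ℝ)) x := by
      intro x
      by_cases hex : ∃ k0 : Fin d → Fin N, stBump d N k0 x * g k0 (T^[n] x) ≠ 0
      · obtain ⟨k0, hk0⟩ := hex
        have hb0 : stBump d N k0 x ≠ 0 := fun hz => hk0 (by rw [hz, zero_mul])
        have hg0 : g k0 (T^[n] x) ≠ 0 := fun hz => hk0 (by rw [hz, mul_zero])
        have hxg : x ∈ stGrid d N k0 := by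
          by_contra hxg
          exact hb0 (stBump_zero hxg)
        have hTx : T^[n] x ∈ R k0 := by
          by_contra hTx
          exact hg0 (by rw [hgdef]; simp [Set.indicator_apply, hTx])
        have hxE : x ∈ E := by
          refine ⟨stGrid_subset_cube hN0 hxg, ?_⟩
          exact hRsub k0 x hxg hTx
        have hxE' : x ∈ E' := subset_toMeasurable μ E hxE
        rw [Set.indicator_of_mem hxE']
        rw [Finset.sum_eq_single k0]
        · have := stBump_le_one (k := k0) x
          have h2 : g k0 (T^[n] x) ≤ 1 := by
            rw [hgdef]
            by_cases hx2 : T^[n] x ∈ R k0 <;> simp [Set.indicator_apply, hx2]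
          nlinarith [stBump_nonneg (k := k0) x,
            Set.indicator_nonneg (fun (_ : Fin d → ℝ) _ => (zero_le_one (α := ℝ))) (T^[n] x) (s := R k0)]
        · intro k _ hkk
          have : x ∉ stGrid d N k := by
            intro hxk
            exact (stGrid_disjoint hkk).ne_of_mem hxk hxg rfl
          rw [stBump_zero this, zero_mul]
        · intro hcon
          exact absurd (Finset.mem_univ k0) hcon
      · push_neg at hex
        have : ∑ k : Fin d → Fin N, stBump d N k x * g k (T^[n] x) = 0 :=
          Finset.sum_eq_zero fun k _ => hex k
        rw [this]
        exact Set.indicator_nonneg (fun _ _ => zero_le_one) x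
    calc ∫ x, ∑ k : Fin d → Fin N, stBump d N k x * g k (T^[n] x) ∂μ
        ≤ ∫ x, E'.indicator (fun _ => (1:ℝ)) x ∂μ := by
          apply integral_mono (integrable_finset_sum _ (fun k _ => htermint k))
            ((integrable_const 1).indicator (measurableSet_toMeasurable μ E)) hle
      _ = (μ E').toReal := by
          rw [integral_indicator_const (1:ℝ) (measurableSet_toMeasurable μ E), smul_eq_mul, mul_one]
          rfl
      _ = (μ E).toReal := by rw [hE'def, measure_toMeasurable]
  -- lower bound for each m k
  have hmk_lb : ∀ k, γ - δ ≤ m k := by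
    intro k
    have := hRlb k
    have hfin : μ (R k) + Hq * ENNReal.ofReal (4*d/N) ^ c ≠ ⊤ := by
      apply ENNReal.add_ne_top.mpr
      constructor
      · exact measure_ne_top μ _
      · exact ENNReal.mul_ne_top hHq (ENNReal.rpow_ne_top_of_nonneg
          (by rw [hcdef]; rw [sub_nonneg, div_le_one (lt_trans one_pos hq)]; linarith)
          ENNReal.ofReal_ne_top)
    have htr := ENNReal.toReal_mono hfin this
    rw [ENNReal.toReal_ofReal hγ0, ENNReal.toReal_add (measure_ne_top μ _)
      (ENNReal.mul_ne_top hHq (ENNReal.rpow_ne_top_of_nonneg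
        (by rw [hcdef]; rw [sub_nonneg, div_le_one (lt_trans one_pos hq)]; linarith)
        ENNReal.ofReal_ne_top))] at htr
    rw [hmdef, hδdef]
    linarith
  -- bump integrals: lower bound via inner cubes
  have hbumpint : ∀ k : Fin d → Fin N, Integrable (stBump d N k) μ := by
    intro k
    refine Integrable.mono' (integrable_const (1:ℝ)) stBump_continuous.measurable.aestronglyMeasurable ?_
    filter_upwards with x
    rw [Real.norm_eq_abs, abs_of_nonneg (stBump_nonneg x)]
    exact stBump_le_one x
  have hFk : ∀ k : Fin d → Fin N, (μ (stInner d N k)).toReal ≤ ∫ x, stBump d N k x ∂μ := by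
    intro k
    have hle : ∀ x, (stInner d N k).indicator (fun _ => (1:ℝ)) x ≤ stBump d N k x := by
      intro x
      by_cases hx : x ∈ stInner d N k
      · rw [Set.indicator_of_mem hx, stBump_one hd hN0 hx]
      · rw [Set.indicator_of_notMem hx]
        exact stBump_nonneg x
    calc (μ (stInner d N k)).toReal
        = ∫ x, (stInner d N k).indicator (fun _ => (1:ℝ)) x ∂μ := by
          rw [integral_indicator_const (1:ℝ) stInner_measurable, smul_eq_mul, mul_one]
          rfl
      _ ≤ _ := integral_mono ((integrable_const 1).indicator stInner_measurable)
          (hbumpint k) hle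
  have hFk0 : ∀ k : Fin d → Fin N, 0 ≤ ∫ x, stBump d N k x ∂μ := by
    intro k
    exact integral_nonneg fun x => stBump_nonneg x
  -- collar bound : ∑ μ(inner) ≥ 1 - coll
  have hcollar : 1 - coll ≤ ∑ k : Fin d → Fin N, (μ (stInner d N k)).toReal := by
    set U : Set (Fin d → ℝ) := ⋃ k : Fin d → Fin N, stInner d N k with hUdef
    have hUmeas : MeasurableSet U := MeasurableSet.iUnion fun k => stInner_measurable
    have hdisj : Pairwise fun k k' : Fin d → Fin N =>
        Disjoint (stInner d N k) (stInner d N k') := fun k k' hkk =>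
      (stGrid_disjoint hkk).mono (stInner_subset_grid hN0) (stInner_subset_grid hN0)
    have hUsum : μ U = ∑ k : Fin d → Fin N, μ (stInner d N k) := by
      rw [hUdef, measure_iUnion hdisj fun k => stInner_measurable, tsum_fintype]
    have hUsub : U ⊆ unitCube d := by
      rw [hUdef]
      exact iUnion_subset fun k => (stInner_subset_grid hN0).trans (stGrid_subset_cube hN0)
    have hccoll : (0:ℝ) ≤ 1 - 1/q := by
      rw [sub_nonneg, div_le_one (lt_trans one_pos hq)]
      linarith
    have hcollfin : Hq * ENNReal.ofReal (2*d/N) ^ c ≠ ⊤ :=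
      ENNReal.mul_ne_top hHq (ENNReal.rpow_ne_top_of_nonneg (hcdef ▸ hccoll) ENNReal.ofReal_ne_top)
    -- volume computation
    have hw0 : (0:ℝ) ≤ 1/N - 2/(N:ℝ)^2 := by
      rw [sub_nonneg, div_le_div_iff₀ (by positivity) (by positivity)]
      have h2N : (2:ℝ) ≤ N := by exact_mod_cast hN
      nlinarith
    have hvolU : volume U = ENNReal.ofReal ((1 - 2/(N:ℝ))^d) := by
      rw [hUdef, measure_iUnion hdisj fun k => stInner_measurable, tsum_fintype]
      have : ∀ k : Fin d → Fin N, volume (stInner d N k)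
          = (ENNReal.ofReal (1/N - 2/(N:ℝ)^2))^d := fun k => stInner_volume
      rw [Finset.sum_congr rfl fun k _ => this k, Finset.sum_const, Finset.card_univ,
        Fintype.card_fun, Fintype.card_fin, Fintype.card_fin, nsmul_eq_mul]
      rw [← ENNReal.ofReal_pow hw0]
      rw [show ((N:ℕ)^d : ℕ) = N^d from rfl]
      push_cast
      rw [show ((N:ℝ≥0∞))^d = ENNReal.ofReal ((N:ℝ))^d by
        rw [ENNReal.ofReal_natCast]]
      rw [← ENNReal.ofReal_pow (by positivity), ← ENNReal.ofReal_mul (by positivity)]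
      congr 1
      rw [← mul_pow]
      congr 1
      field_simp
    have hvolcube : volume (unitCube d) = 1 := by
      rw [unitCube, Real.volume_Icc_pi]
      simp
    have hvoldiff : volume (unitCube d \ U) ≤ ENNReal.ofReal (2*d/N) := by
      rw [measure_diff hUsub hUmeas.nullMeasurableSet
        (ne_of_lt (lt_of_le_of_lt (measure_mono hUsub) (by rw [hvolcube]; exact ENNReal.one_lt_top)))]
      rw [hvolcube, hvolU]
      have h2N : (2:ℝ) ≤ N := by exact_mod_cast hN
      have h1m : (0:ℝ) ≤ 1 - 2/N := by
        rw [sub_nonneg, div_le_one hNR]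
        linarith
      have hpow0 : (0:ℝ) ≤ (1 - 2/(N:ℝ))^d := pow_nonneg h1m d
      rw [tsub_le_iff_left, ← ENNReal.ofReal_add hpow0 (by positivity)]
      rw [show (1:ℝ≥0∞) = ENNReal.ofReal 1 by simp]
      apply ENNReal.ofReal_le_ofReal
      have hber := one_add_mul_le_pow (show (-2:ℝ) ≤ -2/N by
        rw [neg_div, neg_le_neg_iff, div_le_iff₀ hNR]
        nlinarith) d
      have heq : 1 + (d:ℝ) * (-2/N) = 1 - 2*d/N := by ring
      have heq2 : (1 + (-2/(N:ℝ)))^d = (1 - 2/(N:ℝ))^d := by ring_nf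
      rw [heq, heq2] at hber
      linarith
    -- measure bound on the collar
    have hμdiff : μ (unitCube d \ U) ≤ Hq * ENNReal.ofReal (2*d/N) ^ c := by
      rw [hμeq]
      refine le_trans (st12_holder q hq h hh hm _ (measurableSet_Icc.diff hUmeas)) ?_
      rw [← hHqdef, ← hcdef]
      exact mul_le_mul_right (ENNReal.rpow_le_rpow hvoldiff (hcdef ▸ hccoll)) _
    have hchain : (1:ℝ≥0∞) ≤ μ U + Hq * ENNReal.ofReal (2*d/N) ^ c := by
      calc (1:ℝ≥0∞) = μ (unitCube d) := hμcube.symm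
        _ = μ (unitCube d ∩ U) + μ (unitCube d \ U) := (measure_inter_add_diff _ hUmeas).symm
        _ ≤ μ U + Hq * ENNReal.ofReal (2*d/N) ^ c :=
            add_le_add (measure_mono inter_subset_right) hμdiff
    have hfin2 : μ U + Hq * ENNReal.ofReal (2*d/N) ^ c ≠ ⊤ :=
      ENNReal.add_ne_top.mpr ⟨measure_ne_top μ _, hcollfin⟩
    have := ENNReal.toReal_mono hfin2 hchain
    rw [ENNReal.toReal_one, ENNReal.toReal_add (measure_ne_top μ _) hcollfin] at this
    have hsumeq : (μ U).toReal = ∑ k : Fin d → Fin N, (μ (stInner d N k)).toReal := by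
      rw [hUsum, ENNReal.toReal_sum fun k _ => measure_ne_top μ _]
    rw [hcolldef]
    linarith [hsumeq ▸ this]
  -- final chain
  by_cases hcase : γ - δ ≤ 0
  · have : γ - (δ + coll + D * (N:ℝ)^d) ≤ 0 := by nlinarith [mul_nonneg hD0 (pow_nonneg hNR.le d)]
    exact le_trans this ENNReal.toReal_nonneg
  · push_neg at hcase
    have hstep1 : ∑ k : Fin d → Fin N, ((∫ x, stBump d N k x ∂μ) * m k - D * m k)
        ≤ (μ E).toReal :=
      le_trans (Finset.sum_le_sum fun k _ => hcork k) hsum_le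
    have hstep2 : (γ - δ) * (∑ k : Fin d → Fin N, ∫ x, stBump d N k x ∂μ)
        ≤ ∑ k : Fin d → Fin N, (∫ x, stBump d N k x ∂μ) * m k := by
      rw [Finset.mul_sum]
      apply Finset.sum_le_sum
      intro k _
      rw [mul_comm]
      exact mul_le_mul_of_nonneg_left (hmk_lb k) (hFk0 k)
    have hstep3 : (γ - δ) * (1 - coll) ≤ (γ - δ) * (∑ k : Fin d → Fin N, ∫ x, stBump d N k x ∂μ) := by
      apply mul_le_mul_of_nonneg_left _ hcase.le
      exact le_trans hcollar (Finset.sum_le_sum fun k _ => hFk k)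
    have hstep4 : ∑ k : Fin d → Fin N, D * m k ≤ D * (N:ℝ)^d := by
      rw [← Finset.mul_sum]
      apply mul_le_mul_of_nonneg_left _ hD0
      calc ∑ k : Fin d → Fin N, m k ≤ ∑ _k : Fin d → Fin N, (1:ℝ) :=
            Finset.sum_le_sum fun k _ => hm1 k
        _ = ((N:ℝ)^d : ℝ) := by
            rw [Finset.sum_const, Finset.card_univ, Fintype.card_fun, Fintype.card_fin,
              Fintype.card_fin, nsmul_eq_mul, mul_one]
            push_cast
            ring
    have hexp : (γ - δ) * (1 - coll) ≥ γ - δ - coll := by nlinarith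
    have hsplit : ∑ k : Fin d → Fin N, ((∫ x, stBump d N k x ∂μ) * m k - D * m k)
        = (∑ k : Fin d → Fin N, (∫ x, stBump d N k x ∂μ) * m k)
          - ∑ k : Fin d → Fin N, D * m k := by
      rw [Finset.sum_sub_distrib]
    linarith


end St12Aux

/-- **Lemma 3.6 (lower bound on μ(Êₙ)).**
Under Conditions I and II, with `ξₙ(x) = lₙ(x) rₙ` chosen so that `μ(R(x, ξₙ(x))) = γₙ`
and `Êₙ = {x ∈ [0,1]^d : Tⁿx ∈ R(x, ξₙ(x))}`, there exists `c₄ > 0` such that for every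
`n` with `γₙ ≥ n^{-2}`, `μ(Êₙ) ≥ (1 − c₄ n^{-2}) γₙ`. -/
theorem stmt12 (d : ℕ) (hd : 1 ≤ d)
    (T : (Fin d → ℝ) → (Fin d → ℝ)) (μ : Measure (Fin d → ℝ)) [IsProbabilityMeasure μ]
    (hT : MeasurePreserving T μ μ) (hTmaps : MapsTo T (unitCube d) (unitCube d))
    (hμcube : μ (unitCube d) = 1)
    (θ τ C : ℝ) (hI : CondI T μ θ τ C)
    (q : ℝ) (h : (Fin d → ℝ) → ℝ) (hII : CondII μ h q)
    (r : ℕ → Fin d → ℝ) (hr : ∀ n i, 0 ≤ r n i)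
    (l : ℕ → (Fin d → ℝ) → ℝ) (hl : ∀ n x, 0 ≤ l n x)
    (hlμ : ∀ n : ℕ, ∀ x ∈ unitCube d,
      μ (rect x (l n x • r n)) = ENNReal.ofReal (∏ i, r n i)) :
    ∃ c₄ : ℝ, 0 < c₄ ∧ ∀ n : ℕ, 0 < n → ((n : ℝ) ^ 2)⁻¹ ≤ (∏ i, r n i) →
      (1 - c₄ / (n : ℝ) ^ 2) * (∏ i, r n i) ≤
        (μ {x | x ∈ unitCube d ∧ T^[n] x ∈ rect x (l n x • r n)}).toReal := by
  have hθ := hI.1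
  have hθ1 := hI.2.1
  have hτ := hI.2.2.1
  have hC := hI.2.2.2.1
  have hq := hII.1
  have hq0 : (0:ℝ) < q := lt_trans one_pos hq
  set Hq := eLpNorm h (ENNReal.ofReal q) volume with hHqdef
  set HqR : ℝ := Hq.toReal with hHqRdef
  have hHqR0 : 0 ≤ HqR := ENNReal.toReal_nonneg
  set c : ℝ := 1 - 1/q with hcdef
  have hc0 : 0 < c := by
    rw [hcdef, sub_pos, div_lt_one hq0]
    exact hq
  -- choose m
  obtain ⟨m0, hm0⟩ := exists_nat_gt (5/c)
  set m : ℕ := m0 + 1 with hmdef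
  have hm1 : 1 ≤ m := Nat.le_add_left 1 m0
  have hmc5 : (5:ℝ) ≤ m * c := by
    have hm0' : 5/c < m := by
      rw [hmdef]
      push_cast
      linarith
    calc (5:ℝ) = (5/c) * c := by field_simp
      _ ≤ m * c := mul_le_mul_of_nonneg_right hm0'.le hc0.le
  set NN : ℕ → ℕ := fun n => (n+1)^m with hNNdef
  have hNN2 : ∀ n : ℕ, 1 ≤ n → 2 ≤ NN n := by
    intro n hn
    calc 2 = 2^1 := rfl
      _ ≤ 2^m := Nat.pow_le_pow_right (by norm_num) hm1
      _ ≤ (n+1)^m := Nat.pow_le_pow_left (by omega) m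
  have hNNR : ∀ n : ℕ, ((NN n : ℕ) : ℝ) = ((n:ℝ)+1)^m := by
    intro n
    rw [hNNdef]
    push_cast
    ring
  set E : ℕ → ℝ := fun n =>
      (Hq * ENNReal.ofReal (4*d/(NN n)) ^ c).toReal
      + (Hq * ENNReal.ofReal (2*d/(NN n)) ^ c).toReal
      + C * Real.exp (-τ * n) * (1 + ((NN n : ℕ):ℝ)^2) * ((NN n : ℕ):ℝ)^d
    with hEdef
  -- core bound for every n ≥ 1
  have hcore : ∀ n : ℕ, 1 ≤ n → (∏ i, r n i) - E n ≤
      (μ {x | x ∈ unitCube d ∧ T^[n] x ∈ rect x (l n x • r n)}).toReal := by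
    intro n hn
    exact st12_core hd T μ hT hμcube θ τ C hI q h hII (r n) (hr n) (l n) (hl n)
      (hlμ n) n (NN n) (hNN2 n hn)
  -- asymptotic bound : eventually E n ≤ n⁻⁴
  have hev : ∀ᶠ n : ℕ in atTop, E n ≤ (((n:ℝ))^4)⁻¹ := by
    set M : ℕ := 4 + 2*m + m*d with hMdef
    set K1 : ℝ := HqR * (4*d)^c with hK1def
    set K2 : ℝ := HqR * (2*d)^c with hK2def
    set K3 : ℝ := 2*C*2^M / τ^M with hK3def
    set B : ℕ → ℝ := fun n => K1/n + K2/n + K3 * ((τ*n)^M * Real.exp (-(τ*n))) with hBdef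
    have hBtend : Tendsto B atTop (𝓝 0) := by
      have t1 := tendsto_const_div_atTop_nhds_zero_nat K1
      have t2 := tendsto_const_div_atTop_nhds_zero_nat K2
      have t3inner : Tendsto (fun n : ℕ => τ * (n:ℝ)) atTop atTop :=
        Tendsto.const_mul_atTop hτ tendsto_natCast_atTop_atTop
      have t3' : Tendsto (fun n : ℕ => (τ*(n:ℝ))^M * Real.exp (-(τ*(n:ℝ)))) atTop (𝓝 0) :=
        (Real.tendsto_pow_mul_exp_neg_atTop_nhds_zero M).comp t3inner
      have t3 := t3'.const_mul K3
      rw [mul_zero] at t3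
      have := (t1.add t2).add t3
      simpa using this
    have hBsmall : ∀ᶠ n : ℕ in atTop, B n < 1 := hBtend.eventually_lt_const one_pos
    have hmain : ∀ᶠ n : ℕ in atTop, (n:ℝ)^4 * E n ≤ B n := by
      filter_upwards [eventually_ge_atTop 1] with n hn
      have hnR : (1:ℝ) ≤ (n:ℝ) := by exact_mod_cast hn
      set A : ℝ := (n:ℝ) with hAdef
      have hA0 : (0:ℝ) < A := by linarith
      have hA1 : (1:ℝ) ≤ A + 1 := by linarith
      have hNNr : ((NN n : ℕ):ℝ) = (A+1)^m := hNNR n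
      have hNNpos : (0:ℝ) < ((NN n:ℕ):ℝ) := by rw [hNNr]; positivity
      have hpow5 : A^5 ≤ ((NN n:ℕ):ℝ)^c := by
        rw [hNNr, ← Real.rpow_natCast (A+1) m, ← Real.rpow_mul (by linarith)]
        calc A^5 ≤ (A+1)^5 := pow_le_pow_left₀ hA0.le (by linarith) 5
          _ = (A+1)^((5:ℕ):ℝ) := (Real.rpow_natCast _ 5).symm
          _ ≤ (A+1)^((m:ℝ)*c) := by
              apply Real.rpow_le_rpow_of_exponent_le hA1
              push_cast at hmc5 ⊢
              linarith
      have hA5pos : (0:ℝ) < A^5 := by positivity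
      have hKey : ∀ b : ℝ, 0 ≤ b →
          (Hq * ENNReal.ofReal (b/(NN n)) ^ c).toReal ≤ (HqR * b^c) / A^5 := by
        intro b hb
        rw [ENNReal.toReal_mul, ← ENNReal.toReal_rpow,
          ENNReal.toReal_ofReal (by positivity), ← hHqRdef]
        rw [Real.div_rpow hb hNNpos.le, ← mul_div_assoc]
        apply div_le_div_of_nonneg_left _ hA5pos hpow5
        positivity
      have hT1 := hKey (4*d) (by positivity)
      have hT2 := hKey (2*d) (by positivity)
      -- third term
      have hNN1 : (1:ℝ) ≤ ((NN n:ℕ):ℝ) := by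
        rw [hNNr]
        calc (1:ℝ) = 1^m := (one_pow m).symm
          _ ≤ (A+1)^m := pow_le_pow_left₀ zero_le_one hA1 m
      have hexp0 : (0:ℝ) < Real.exp (-(τ*A)) := Real.exp_pos _
      have hT3 : A^4 * (C * Real.exp (-τ * n) * (1 + ((NN n:ℕ):ℝ)^2) * ((NN n:ℕ):ℝ)^d)
          ≤ K3 * ((τ*A)^M * Real.exp (-(τ*A))) := by
        rw [show (-τ * (n:ℝ)) = -(τ*A) by rw [hAdef]; ring]
        have hfinal : K3 * ((τ*A)^M * Real.exp (-(τ*A)))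
            = 2*C*2^M*A^M*Real.exp (-(τ*A)) := by
          rw [hK3def, mul_pow]
          field_simp
        rw [hfinal]
        calc A^4 * (C * Real.exp (-(τ*A)) * (1 + ((NN n:ℕ):ℝ)^2) * ((NN n:ℕ):ℝ)^d)
            ≤ (A+1)^4 * (C * Real.exp (-(τ*A)) * (2 * ((NN n:ℕ):ℝ)^2) * ((NN n:ℕ):ℝ)^d) := by
              apply mul_le_mul (pow_le_pow_left₀ hA0.le (by linarith) 4) _ (by positivity) (by positivity)
              apply mul_le_mul_of_nonneg_right _ (by positivity)
              apply mul_le_mul_of_nonneg_left _ (by positivity)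
              nlinarith [hNN1]
          _ = 2*C*((A+1)^M)*Real.exp (-(τ*A)) := by
              rw [hNNr, hMdef, ← pow_mul, ← pow_mul, pow_add, pow_add]
              ring
          _ ≤ 2*C*((2*A)^M)*Real.exp (-(τ*A)) := by
              apply mul_le_mul_of_nonneg_right _ hexp0.le
              apply mul_le_mul_of_nonneg_left _ (by positivity)
              exact pow_le_pow_left₀ (by linarith) (by linarith) M
          _ = 2*C*2^M*A^M*Real.exp (-(τ*A)) := by
              rw [mul_pow]
              ring
      -- combine
      have hE : E n = (Hq * ENNReal.ofReal (4*d/(NN n)) ^ c).toReal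
          + (Hq * ENNReal.ofReal (2*d/(NN n)) ^ c).toReal
          + C * Real.exp (-τ * n) * (1 + ((NN n:ℕ):ℝ)^2) * ((NN n:ℕ):ℝ)^d := rfl
      rw [hE, hBdef]
      have e1 : A^4 * ((Hq * ENNReal.ofReal (4*d/(NN n)) ^ c).toReal)
          ≤ K1/A := by
        calc A^4 * ((Hq * ENNReal.ofReal (4*d/(NN n)) ^ c).toReal)
            ≤ A^4 * ((HqR * (4*d)^c) / A^5) := by
              apply mul_le_mul_of_nonneg_left hT1 (by positivity)
          _ = K1/A := by
              rw [hK1def]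
              field_simp
      have e2 : A^4 * ((Hq * ENNReal.ofReal (2*d/(NN n)) ^ c).toReal)
          ≤ K2/A := by
        calc A^4 * ((Hq * ENNReal.ofReal (2*d/(NN n)) ^ c).toReal)
            ≤ A^4 * ((HqR * (2*d)^c) / A^5) := by
              apply mul_le_mul_of_nonneg_left hT2 (by positivity)
          _ = K2/A := by
              rw [hK2def]
              field_simp
      simp only []
      rw [mul_add, mul_add]
      exact add_le_add (add_le_add e1 e2) hT3
    filter_upwards [hmain, hBsmall, eventually_ge_atTop 1] with n h1 h2 hn
    have hnR : (1:ℝ) ≤ (n:ℝ) := by exact_mod_cast hn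
    have hn4 : (0:ℝ) < (n:ℝ)^4 := by positivity
    rw [← one_div ((n:ℝ)^4), le_div_iff₀ hn4]
    calc E n * (n:ℝ)^4 = (n:ℝ)^4 * E n := by ring
      _ ≤ B n := h1
      _ ≤ 1 := h2.le
  obtain ⟨n₀, hn₀⟩ := eventually_atTop.mp hev
  refine ⟨((n₀:ℝ)+1)^2, by positivity, ?_⟩
  intro n hn hγn
  set γ : ℝ := ∏ i, r n i with hγdef
  have hγ0 : 0 ≤ γ := Finset.prod_nonneg fun i _ => hr n i
  have hnR : (0:ℝ) < n := by exact_mod_cast hn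
  by_cases hcase : n < n₀
  · -- trivial case
    have h1 : (n:ℝ)^2 < ((n₀:ℝ)+1)^2 := by
      have : (n:ℝ) < (n₀:ℝ)+1 := by
        have : (n:ℝ) ≤ (n₀:ℝ) := by exact_mod_cast hcase.le
        linarith
      nlinarith
    have h2 : (1:ℝ) < ((n₀:ℝ)+1)^2 / (n:ℝ)^2 := by
      rw [lt_div_iff₀ (by positivity)]
      linarith
    have h3 : (1 - ((n₀:ℝ)+1)^2 / (n:ℝ)^2) * γ ≤ 0 :=
      mul_nonpos_of_nonpos_of_nonneg (by linarith) hγ0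
    exact le_trans h3 ENNReal.toReal_nonneg
  · push_neg at hcase
    have hEn := hn₀ n hcase
    have hchain : (1 - ((n₀:ℝ)+1)^2 / (n:ℝ)^2) * γ ≤ γ - E n := by
      have hc41 : (1:ℝ) ≤ ((n₀:ℝ)+1)^2 := by nlinarith [(Nat.cast_nonneg n₀ : (0:ℝ) ≤ (n₀:ℝ))]
      have step1 : (1 - ((n₀:ℝ)+1)^2 / (n:ℝ)^2) * γ ≤ (1 - 1 / (n:ℝ)^2) * γ := by
        apply mul_le_mul_of_nonneg_right _ hγ0
        have h1 : 1 / (n:ℝ)^2 ≤ ((n₀:ℝ)+1)^2 / (n:ℝ)^2 := by gcongr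
        linarith
      have step2 : (1 - 1 / (n:ℝ)^2) * γ ≤ γ - (((n:ℝ))^4)⁻¹ := by
        have hγn' : ((n:ℝ)^2)⁻¹ ≤ γ := hγn
        have hn2 : (0:ℝ) < (n:ℝ)^2 := by positivity
        have key : (((n:ℝ))^4)⁻¹ ≤ γ * ((n:ℝ)^2)⁻¹ := by
          have : (((n:ℝ))^4)⁻¹ = ((n:ℝ)^2)⁻¹ * ((n:ℝ)^2)⁻¹ := by
            rw [← mul_inv]
            congr 1
            ring
          rw [this]
          exact mul_le_mul_of_nonneg_right hγn' (by positivity)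
        have : (1 - 1 / (n:ℝ)^2) * γ = γ - γ * ((n:ℝ)^2)⁻¹ := by
          field_simp
        rw [this]
        linarith
      have step3 : γ - (((n:ℝ))^4)⁻¹ ≤ γ - E n := by linarith
      linarith
    exact le_trans hchain (hcore n (by omega))
end
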